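/- arXiv:2303.09512 — 3 statements merged into one kernel-verified Lean document; each statement's English description precedes it below -/
import Mathlib

section
/- Let n ≥ k ≥ 1 and let β_1 < β_2 < … < β_{k-1} be pairwise distinct even integers with β_i ≥ 4 for all i. For every x ∈ ℝ^n, the Jacobian matrix at x of the map ℝ^n → ℝ^k, x ↦ (p_2(x), p_{β_1}(x), …, p_{β_{k-1}}(x)), has rank k if and only if the multiplicity length of x is at least k. -/
open Finset Matrix


/-- The number of distinct values among the absolute values of the nonzero coordinates of
a vector is obtained by applying this to `fun j => |x j|`; here `multLen x` counts the
distinct nonzero coordinate values of `x` (the *multiplicity length*). -/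
noncomputable def multLen {n : ℕ} (x : Fin n → ℝ) : ℕ :=
  ((Finset.image x Finset.univ).erase 0).card

/-- A nonzero "sparse polynomial" with `s` terms cannot vanish at `s` distinct
positive points. -/
lemma descartes : ∀ (s : ℕ) (E : Finset ℕ), E.card = s → ∀ (c : ℕ → ℝ) (S : Finset ℝ),
    S.card = s → (∀ t ∈ S, 0 < t) → (∀ t ∈ S, ∑ e ∈ E, c e * t ^ e = 0) →
    ∀ e ∈ E, c e = 0 := by
  intro s
  induction s with
  | zero =>
    intro E hE c S _ _ _ e he
    rw [Finset.card_eq_zero] at hE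
    simp [hE] at he
  | succ s ih =>
    intro E hE c S hS hpos hroot
    have hEne : E.Nonempty := Finset.card_pos.mp (by omega)
    set e0 := E.min' hEne with he0
    have he0E : e0 ∈ E := E.min'_mem hEne
    set g : ℝ → ℝ := fun t => ∑ e ∈ E, c e * t ^ (e - e0) with hg
    set D : ℝ → ℝ := fun t => ∑ e ∈ E, c e * (((e - e0 : ℕ) : ℝ) * t ^ (e - e0 - 1)) with hD
    have hgderiv : ∀ t : ℝ, HasDerivAt g (D t) t := by
      intro t
      exact HasDerivAt.fun_sum fun e _ => ((hasDerivAt_pow (e - e0) t).const_mul (c e))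
    have hgroot : ∀ t ∈ S, g t = 0 := by
      intro t ht
      have h1 : t ^ e0 * g t = 0 := by
        rw [hg, Finset.mul_sum]
        have heq : ∀ e ∈ E, t ^ e0 * (c e * t ^ (e - e0)) = c e * t ^ e := by
          intro e heE
          have hle : e0 ≤ e := E.min'_le e heE
          rw [mul_comm (t ^ e0), mul_assoc, ← pow_add]
          congr 2
          omega
        rw [Finset.sum_congr rfl heq]
        exact hroot t ht
      have h2 : t ^ e0 ≠ 0 := pow_ne_zero e0 (ne_of_gt (hpos t ht))
      exact (mul_eq_zero.mp h1).resolve_left h2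
    -- order the roots
    have hScard : S.card = s + 1 := hS
    set ω := S.orderIsoOfFin hScard with hω
    -- Rolle between consecutive roots
    have hR : ∀ j : Fin s, ∃ r, r ∈ Set.Ioo ((ω j.castSucc : ℝ)) ((ω j.succ : ℝ)) ∧ D r = 0 := by
      intro j
      have hab : ((ω j.castSucc : ℝ)) < ((ω j.succ : ℝ)) := by
        have : j.castSucc < j.succ := Fin.castSucc_lt_succ
        exact ω.strictMono this
      have hfc : ContinuousOn g (Set.Icc (ω j.castSucc : ℝ) (ω j.succ : ℝ)) :=
        fun y _ => ((hgderiv y).continuousAt).continuousWithinAt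
      have hI : g (ω j.castSucc : ℝ) = g (ω j.succ : ℝ) := by
        rw [hgroot _ (ω j.castSucc).2, hgroot _ (ω j.succ).2]
      exact exists_hasDerivAt_eq_zero hab hfc hI (fun y _ => hgderiv y)
    choose r hrmem hrD using hR
    have hrpos : ∀ j, 0 < r j := fun j =>
      lt_trans (hpos _ (ω j.castSucc).2) (hrmem j).1
    have hrmono : StrictMono r := by
      intro j j' hjj'
      calc r j < (ω j.succ : ℝ) := (hrmem j).2
        _ ≤ (ω j'.castSucc : ℝ) := by
            have : j.succ ≤ j'.castSucc := by
              simp only [Fin.le_def, Fin.val_succ, Fin.coe_castSucc]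
              omega
            exact_mod_cast ω.monotone this
        _ < r j' := (hrmem j').1
    set S' : Finset ℝ := Finset.image r Finset.univ with hS'
    have hS'card : S'.card = s := by
      rw [hS', Finset.card_image_of_injective _ hrmono.injective, card_univ, Fintype.card_fin]
    -- new exponents and coefficients
    have hEgt : ∀ e ∈ E.erase e0, e0 + 1 ≤ e := by
      intro e he
      have h1 := E.min'_le e (Finset.mem_of_mem_erase he)
      have h2 : e ≠ e0 := Finset.ne_of_mem_erase he
      omega
    set E' : Finset ℕ := (E.erase e0).image (fun e => e - (e0 + 1)) with hE'
    set c' : ℕ → ℝ := fun m => c (m + (e0 + 1)) * ((m + 1 : ℕ) : ℝ) with hc'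
    have hinjOn : Set.InjOn (fun e => e - (e0 + 1)) (E.erase e0) := by
      intro a ha b hb hab
      have := hEgt a ha; have := hEgt b hb
      simp only at hab; omega
    have hE'card : E'.card = s := by
      rw [hE', Finset.card_image_of_injOn hinjOn, Finset.card_erase_of_mem he0E, hE]
      omega
    have hDsum : ∀ t : ℝ, ∑ m ∈ E', c' m * t ^ m = D t := by
      intro t
      rw [hE', Finset.sum_image (fun a ha b hb h => hinjOn ha hb h), hD]
      beta_reduce
      rw [← Finset.add_sum_erase E _ he0E]
      have hz : c e0 * (((e0 - e0 : ℕ) : ℝ) * t ^ (e0 - e0 - 1)) = 0 := by simp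
      rw [hz, zero_add]
      apply Finset.sum_congr rfl
      intro e he
      have h1 := hEgt e he
      have h2 : e - (e0 + 1) + (e0 + 1) = e := by omega
      have h3 : (e - (e0 + 1) + 1) = e - e0 := by omega
      have h4 : e - (e0 + 1) = e - e0 - 1 := by omega
      rw [hc']
      simp only
      rw [h2, h3, h4, mul_assoc]
    have hD0 : ∀ t ∈ S', ∑ m ∈ E', c' m * t ^ m = 0 := by
      intro t ht
      rw [hS', Finset.mem_image] at ht
      obtain ⟨j, _, rfl⟩ := ht
      rw [hDsum]
      exact hrD j
    have hS'pos : ∀ t ∈ S', 0 < t := by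
      intro t ht
      rw [hS', Finset.mem_image] at ht
      obtain ⟨j, _, rfl⟩ := ht
      exact hrpos j
    have hc'0 := ih E' hE'card c' S' hS'card hS'pos hD0
    -- coefficients other than e0 vanish
    have hcErase : ∀ e ∈ E.erase e0, c e = 0 := by
      intro e he
      have h1 := hEgt e he
      have hm : e - (e0 + 1) ∈ E' := by
        rw [hE']; exact Finset.mem_image_of_mem _ he
      have := hc'0 _ hm
      rw [hc'] at this
      simp only at this
      have h2 : e - (e0 + 1) + (e0 + 1) = e := by omega
      rw [h2] at this
      rcases mul_eq_zero.mp this with h | h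
      · exact h
      · exfalso
        have : ((e - (e0 + 1) + 1 : ℕ) : ℝ) ≠ 0 := by positivity
        exact this h
    -- the coefficient at e0 vanishes
    have hc0 : c e0 = 0 := by
      obtain ⟨t, ht⟩ : S.Nonempty := Finset.card_pos.mp (by omega)
      have h1 := hroot t ht
      rw [← Finset.add_sum_erase E _ he0E] at h1
      have h2 : ∑ e ∈ E.erase e0, c e * t ^ e = 0 :=
        Finset.sum_eq_zero fun e he => by rw [hcErase e he, zero_mul]
      rw [h2, add_zero] at h1
      have h3 : t ^ e0 ≠ 0 := pow_ne_zero e0 (ne_of_gt (hpos t ht))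
      exact (mul_eq_zero.mp h1).resolve_right h3
    intro e he
    by_cases h : e = e0
    · rw [h]; exact hc0
    · exact hcErase e (Finset.mem_erase.mpr ⟨h, he⟩)

lemma descartes' {k : ℕ} (e : Fin k → ℕ) (he : Function.Injective e) (c : Fin k → ℝ)
    (S : Finset ℝ) (hS : S.card = k) (hpos : ∀ t ∈ S, 0 < t)
    (hroot : ∀ t ∈ S, ∑ i, c i * t ^ e i = 0) : ∀ i, c i = 0 := by
  classical
  set c' : ℕ → ℝ := fun m => if h : ∃ i, e i = m then c h.choose else 0 with hc'
  have hc'e : ∀ i, c' (e i) = c i := by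
    intro i
    have h : ∃ i', e i' = e i := ⟨i, rfl⟩
    simp only [hc', dif_pos h]
    exact congrArg c (he h.choose_spec)
  have hcard : (Finset.image e Finset.univ).card = k := by
    rw [Finset.card_image_of_injective _ he, card_univ, Fintype.card_fin]
  have key := descartes k (Finset.image e Finset.univ) hcard c' S hS hpos ?_
  · intro i
    rw [← hc'e i]
    exact key (e i) (Finset.mem_image_of_mem e (Finset.mem_univ i))
  · intro t ht
    rw [Finset.sum_image (fun a _ b _ h => he h)]
    simp only [hc'e]
    exact hroot t ht

lemma fderiv_powsum (n m : ℕ) (x : Fin n → ℝ) (j : Fin n) :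
    fderiv ℝ (fun y : Fin n → ℝ => ∑ l, y l ^ m) x (Pi.single j 1)
      = (m : ℝ) * x j ^ (m - 1) := by
  have H : HasFDerivAt (fun y : Fin n → ℝ => ∑ l, y l ^ m)
      (∑ l : Fin n, ((m : ℝ) * x l ^ (m - 1)) • (ContinuousLinearMap.proj l : (Fin n → ℝ) →L[ℝ] ℝ)) x := by
    apply HasFDerivAt.fun_sum
    intro l _
    have h1 : HasDerivAt (fun t : ℝ => t ^ m) ((m : ℝ) * x l ^ (m - 1)) (x l) :=
      hasDerivAt_pow m (x l)
    have h2 : HasFDerivAt (fun y : Fin n → ℝ => y l)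
        (ContinuousLinearMap.proj l : (Fin n → ℝ) →L[ℝ] ℝ) x := hasFDerivAt_apply l x
    exact h1.comp_hasFDerivAt x h2
  rw [H.fderiv]
  simp only [ContinuousLinearMap.coe_sum', Finset.sum_apply,
    ContinuousLinearMap.coe_smul', Pi.smul_apply, ContinuousLinearMap.proj_apply,
    Pi.single_apply, smul_eq_mul, mul_ite, mul_one, mul_zero]
  rw [Finset.sum_ite_eq' Finset.univ j]
  simp

lemma odd_pow_eq (a : ℝ) {m : ℕ} (hm : Odd m) :
    a ^ m = (if 0 ≤ a then (1:ℝ) else -1) * |a| ^ m := by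
  rcases le_or_gt 0 a with h | h
  · rw [if_pos h, abs_of_nonneg h, one_mul]
  · rw [if_neg (not_le.mpr h), abs_of_neg h, hm.neg_pow, neg_one_mul, neg_neg]

/-- **Lemma 2.5.** For `n ≥ k ≥ 1` and even exponents `2 = β₀ < β₁ < … < β_{k-1}` with
`βᵢ ≥ 4` for `i ≥ 1`, the Jacobian matrix at `x` of the map
`x ↦ (p_2(x), p_{β₁}(x), …, p_{β_{k-1}}(x))` has rank `k` iff the multiplicity length of
`x` (number of distinct values among `|x₁|, …, |xₙ|` that are nonzero) is at least `k`. -/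
theorem jacobian_rank_iff_multiplicity_length (n k : ℕ) (hk : 1 ≤ k) (hn : k ≤ n)
    (β : Fin k → ℕ) (hβ0 : β ⟨0, by omega⟩ = 2)
    (heven : ∀ i, Even (β i)) (h4 : ∀ i : Fin k, (i : ℕ) ≠ 0 → 4 ≤ β i)
    (hmono : StrictMono β) (x : Fin n → ℝ) :
    (Matrix.of fun (i : Fin k) (j : Fin n) =>
        fderiv ℝ (fun y : Fin n → ℝ => ∑ l, y l ^ β i) x (Pi.single j 1)).rank = k
      ↔ k ≤ multLen (fun j => |x j|) := by
  classical
  set A : Matrix (Fin k) (Fin n) ℝ :=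
    Matrix.of (fun i j => (β i : ℝ) * x j ^ (β i - 1)) with hA
  have hβ2 : ∀ i : Fin k, 2 ≤ β i := by
    intro i
    rcases Nat.eq_zero_or_pos i.1 with h | h
    · have hi : i = ⟨0, by omega⟩ := Fin.ext h
      rw [hi, hβ0]
    · have := h4 i (by omega); omega
  have hM : (Matrix.of fun (i : Fin k) (j : Fin n) =>
      fderiv ℝ (fun y : Fin n → ℝ => ∑ l, y l ^ β i) x (Pi.single j 1)) = A := by
    ext i j
    simp only [Matrix.of_apply, hA]
    exact fderiv_powsum n (β i) x j
  rw [hM]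
  have hodd : ∀ i : Fin k, Odd (β i - 1) := fun i =>
    Nat.Even.sub_odd (by have := hβ2 i; omega) (heven i) odd_one
  set e : Fin k → ℕ := fun i => β i - 1 with he
  have hemono : StrictMono e := by
    intro i j hij
    have h1 := hmono hij
    have h2 := hβ2 i
    simp only [he]
    omega
  have heinj := hemono.injective
  set V : Finset ℝ := (Finset.image (fun j => |x j|) Finset.univ).erase 0 with hV
  have hmult : multLen (fun j => |x j|) = V.card := rfl
  rw [hmult]
  constructor
  · -- rank = k → k ≤ V.card : contrapositive
    intro hrank
    by_contra hlt
    push_neg at hlt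
    have hrank_le : A.rank ≤ V.card := by
      set u : ℝ → (Fin k → ℝ) := fun t i => (β i : ℝ) * t ^ (β i - 1) with hu
      set T : Finset (Fin k → ℝ) := V.image u with hT
      have hsub : Set.range Aᵀ ⊆
          (Submodule.span ℝ (T : Set (Fin k → ℝ)) : Set (Fin k → ℝ)) := by
        rintro _ ⟨j, rfl⟩
        by_cases hx : x j = 0
        · have hz : Aᵀ j = 0 := by
            funext i
            simp only [Matrix.transpose_apply, hA, Matrix.of_apply, hx, Pi.zero_apply]
            rw [zero_pow (by have := hβ2 i; omega), mul_zero]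
          rw [hz]
          exact Submodule.zero_mem _
        · have hmem : |x j| ∈ V := Finset.mem_erase.mpr
            ⟨abs_ne_zero.mpr hx, Finset.mem_image_of_mem _ (Finset.mem_univ j)⟩
          have hcol : Aᵀ j = (if 0 ≤ x j then (1:ℝ) else -1) • u |x j| := by
            funext i
            simp only [Matrix.transpose_apply, hA, Matrix.of_apply, Pi.smul_apply,
              smul_eq_mul, hu]
            rw [odd_pow_eq (x j) (hodd i)]
            ring
          rw [hcol]
          exact Submodule.smul_mem _ _ (Submodule.subset_span
            (Finset.mem_coe.mpr (Finset.mem_image_of_mem _ hmem)))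
      calc A.rank = Module.finrank ℝ (Submodule.span ℝ (Set.range Aᵀ)) :=
            A.rank_eq_finrank_span_cols
        _ ≤ Module.finrank ℝ (Submodule.span ℝ (T : Set (Fin k → ℝ))) :=
            Submodule.finrank_mono (Submodule.span_le.mpr hsub)
        _ ≤ T.card := finrank_span_finset_le_card T
        _ ≤ V.card := Finset.card_image_le
    omega
  · intro hml
    obtain ⟨W, hWV, hWcard⟩ := Finset.exists_subset_card_eq hml
    set ω := W.orderIsoOfFin hWcard with hω
    set ψ : Fin k → ℝ := fun m => (ω m : ℝ) with hψ
    have hψW : ∀ m, ψ m ∈ W := fun m => (ω m).2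
    have hψV : ∀ m, ψ m ∈ V := fun m => hWV (hψW m)
    have hVpos : ∀ t ∈ V, 0 < t := by
      intro t ht
      rw [hV, Finset.mem_erase, Finset.mem_image] at ht
      obtain ⟨hne, j, -, hj⟩ := ht
      have h0 : (0:ℝ) ≤ t := hj ▸ abs_nonneg _
      exact lt_of_le_of_ne h0 (Ne.symm hne)
    have hψpos : ∀ m, 0 < ψ m := fun m => hVpos _ (hψV m)
    have hex : ∀ m : Fin k, ∃ j : Fin n, |x j| = ψ m := by
      intro m
      have h1 := hψV m
      rw [hV, Finset.mem_erase, Finset.mem_image] at h1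
      obtain ⟨-, j, -, hj⟩ := h1
      exact ⟨j, hj⟩
    choose gsel hg using hex
    set B : Matrix (Fin k) (Fin k) ℝ :=
      Matrix.of (fun i m => (β i : ℝ) * x (gsel m) ^ (β i - 1)) with hB
    set P : Matrix (Fin n) (Fin k) ℝ :=
      Matrix.of (fun j m => if j = gsel m then (1:ℝ) else 0) with hP
    have hBP : A * P = B := by
      ext i m
      simp only [Matrix.mul_apply, hA, hP, hB, Matrix.of_apply, mul_ite, mul_one, mul_zero]
      rw [Finset.sum_ite_eq' Finset.univ (gsel m)]
      simp
    have hdet : B.det ≠ 0 := by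
      intro hdet0
      obtain ⟨v, hv0, hvB⟩ := Matrix.exists_vecMul_eq_zero_iff.mpr hdet0
      have hroot : ∀ t ∈ W, ∑ i, (v i * (β i : ℝ)) * t ^ e i = 0 := by
        intro t ht
        obtain ⟨m, hm⟩ : ∃ m, ψ m = t := ⟨ω.symm ⟨t, ht⟩, by
          show ((ω (ω.symm ⟨t, ht⟩)) : ℝ) = t
          rw [OrderIso.apply_symm_apply]⟩
        have h1 : Matrix.vecMul v B m = 0 := by rw [hvB]; rfl
        have h2 : ∑ i, v i * ((β i : ℝ) * x (gsel m) ^ (β i - 1)) = 0 := by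
          rw [← h1]
          simp [Matrix.vecMul, dotProduct, hB]
        set s : ℝ := if 0 ≤ x (gsel m) then (1:ℝ) else -1 with hs
        have hs0 : s ≠ 0 := by
          rw [hs]; split <;> norm_num
        have h3 : ∀ i : Fin k, v i * ((β i : ℝ) * x (gsel m) ^ (β i - 1))
            = s * ((v i * (β i : ℝ)) * t ^ e i) := by
          intro i
          rw [odd_pow_eq (x (gsel m)) (hodd i), hg m, hm]
          simp only [he, hs]
          ring
        rw [Finset.sum_congr rfl (fun i _ => h3 i), ← Finset.mul_sum] at h2
        exact (mul_eq_zero.mp h2).resolve_left hs0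
      have hWpos : ∀ t ∈ W, 0 < t := fun t ht => hVpos t (hWV ht)
      have hzero := descartes' e heinj (fun i => v i * (β i : ℝ)) W hWcard hWpos hroot
      apply hv0
      funext i
      have h5 := hzero i
      have h6 : (β i : ℝ) ≠ 0 := by
        have := hβ2 i
        positivity
      simpa [h6] using h5
    have hBunit : IsUnit B := (Matrix.isUnit_iff_isUnit_det B).mpr
      (isUnit_iff_ne_zero.mpr hdet)
    have hBrank : B.rank = k := by
      rw [Matrix.rank_of_isUnit B hBunit, Fintype.card_fin]
    have h1 : k ≤ A.rank := by
      have hle : (A * P).rank ≤ A.rank := Matrix.rank_mul_le_left A P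
      rw [hBP, hBrank] at hle
      exact hle
    have h2 : A.rank ≤ k := le_trans (Matrix.rank_le_card_height A) (by simp)
    omega
end

section
/- For every n ≥ 3, the topological boundary of Π_{n,3} ⊂ ℝ² is the union of the following n arcs: the arc U_{n-1} := {((n−1)t² + (1−(n−1)t)², (n−1)t³ + (1−(n−1)t)³) : 0 ≤ t ≤ 1/n}, and the arcs L_k := {(kt² + (1−kt)², kt³ + (1−kt)³) : 1/(k+1) ≤ t ≤ 1/k} for k = 1,…,n−1. The endpoints of U_{n-1} are (1/n, 1/n²) and (1,1), and the endpoints of L_k are (1/(k+1), 1/(k+1)²) and (1/k, 1/k²). -/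
set_option maxHeartbeats 2000000


noncomputable section

namespace PiN3

/-! ### Two-valued representations -/

/-- `IsRep c p u v` : the configuration with `p` coordinates equal to `u`, one equal to `v`
(and the rest zero) lies on the fiber `p₂ = c` of the simplex. -/
def IsRep (c : ℝ) (p : ℕ) (u v : ℝ) : Prop :=
  1 ≤ p ∧ 0 ≤ v ∧ v ≤ u ∧ (p : ℝ) * u + v = 1 ∧ (p : ℝ) * u ^ 2 + v ^ 2 = c

/-- the `p₃`-value of a two-valued representation. -/
def rval (p : ℕ) (u v : ℝ) : ℝ := (p : ℝ) * u ^ 3 + v ^ 3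

lemma isRep_p_cast {c : ℝ} {p : ℕ} {u v : ℝ} (h : IsRep c p u v) : (1:ℝ) ≤ (p:ℝ) :=
  Nat.one_le_cast.2 h.1

lemma isRep_c_lower {c : ℝ} {p : ℕ} {u v : ℝ} (h : IsRep c p u v) :
    1 ≤ ((p : ℝ) + 1) * c := by
  have hp1 := isRep_p_cast h
  obtain ⟨hp, hv, hvu, h1, h2⟩ := h
  nlinarith [sq_nonneg (u - v)]

lemma isRep_c_lower_strict {c : ℝ} {p : ℕ} {u v : ℝ} (h : IsRep c p u v) (huv : v < u) :
    1 < ((p : ℝ) + 1) * c := by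
  have hp1 := isRep_p_cast h
  obtain ⟨hp, hv, hvu, h1, h2⟩ := h
  nlinarith [pow_pos (show (0:ℝ) < u - v by linarith) 2]

lemma isRep_c_upper {c : ℝ} {p : ℕ} {u v : ℝ} (h : IsRep c p u v) :
    (p : ℝ) * c ≤ 1 := by
  have hp1 := isRep_p_cast h
  obtain ⟨hp, hv, hvu, h1, h2⟩ := h
  nlinarith [mul_nonneg hv (sub_nonneg.2 hvu), mul_nonneg (mul_nonneg hv hv) (sub_nonneg.2 hvu),
    mul_nonneg (mul_nonneg (by linarith : (0:ℝ) ≤ (p:ℝ) - 1) hv) (sub_nonneg.2 hvu)]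

lemma isRep_c_upper_strict {c : ℝ} {p : ℕ} {u v : ℝ} (h : IsRep c p u v) (hv : 0 < v) :
    (p : ℝ) * c < 1 := by
  have hp1 := isRep_p_cast h
  obtain ⟨hp, hv0, hvu, h1, h2⟩ := h
  nlinarith [mul_nonneg (mul_nonneg (by linarith : (0:ℝ) ≤ (p:ℝ) - 1) hv.le) (sub_nonneg.2 hvu),
    mul_pos hv (show (0:ℝ) < 1 + (p:ℝ)*(u - v) by nlinarith [mul_nonneg (by linarith : (0:ℝ) ≤ (p:ℝ) - 1) (sub_nonneg.2 hvu)])]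

lemma isRep_u_pos {c : ℝ} {p : ℕ} {u v : ℝ} (h : IsRep c p u v) : 0 < u := by
  have hp1 := isRep_p_cast h
  obtain ⟨hp, hv, hvu, h1, h2⟩ := h
  by_contra hu
  push_neg at hu
  nlinarith

lemma isRep_c_pos {c : ℝ} {p : ℕ} {u v : ℝ} (h : IsRep c p u v) : 0 < c := by
  have hp1 := isRep_p_cast h
  have hu := isRep_u_pos h
  obtain ⟨hp, hv, hvu, h1, h2⟩ := h
  nlinarith [sq_nonneg v, mul_pos hu hu]

/-- closed form for the value of a representation. -/
lemma rval_eq {c : ℝ} {p : ℕ} {u v : ℝ} (h : IsRep c p u v) :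
    rval p u v = c * u - v ^ 2 * (u - v) := by
  obtain ⟨hp, hv, hvu, h1, h2⟩ := h
  have hpu : (p : ℝ) * u = 1 - v := by linarith
  unfold rval
  nlinarith [hpu, h2]

/-- degenerate representations have value `c ^ 2`. -/
lemma rval_degenerate {c : ℝ} {p : ℕ} {u v : ℝ} (h : IsRep c p u v)
    (hd : v = 0 ∨ u = v) : rval p u v = c ^ 2 := by
  have hu := isRep_u_pos h
  have hr := rval_eq h
  have hp1 := isRep_p_cast h
  obtain ⟨hp, hv, hvu, h1, h2⟩ := h
  rcases hd with rfl | rfl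
  · have hpu : (p : ℝ) * u = 1 := by linarith
    have hc : u = c := by nlinarith
    rw [hr, ← hc]; ring
  · have hpu : ((p : ℝ) + 1) * u = 1 := by linarith
    have hc : u = c := by nlinarith
    rw [hr, ← hc]; ring

/-- a degenerate and a strict representation of the same `c` cannot coexist. -/
lemma not_deg_and_strict {c : ℝ} {p q : ℕ} {u v u' v' : ℝ}
    (h : IsRep c p u v) (hd : v = 0 ∨ u = v)
    (h' : IsRep c q u' v') (hv' : 0 < v') (huv' : v' < u') : False := by
  have hlo := isRep_c_lower_strict h' huv'
  have hhi := isRep_c_upper_strict h' hv'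
  have hu := isRep_u_pos h
  have hcpos := isRep_c_pos h
  have hq1 := isRep_p_cast h'
  have hp1 := isRep_p_cast h
  obtain ⟨hp, hv, hvu, h1, h2⟩ := h
  rcases hd with rfl | rfl
  · -- c = 1/p
    have hpu : (p : ℝ) * u = 1 := by linarith
    have hc : (p : ℝ) * c = 1 := by nlinarith
    have h1' : (q:ℝ) < (p:ℝ) := by nlinarith
    have h2' : (p:ℝ) < (q:ℝ) + 1 := by nlinarith
    have b1 : q < p := by exact_mod_cast h1'
    have b2 : p < q + 1 := by exact_mod_cast h2'
    omega
  · -- c = 1/(p+1)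
    have hpu : ((p : ℝ) + 1) * u = 1 := by linarith
    have hc : ((p : ℝ) + 1) * c = 1 := by nlinarith
    have h1' : (q:ℝ) < (p:ℝ) + 1 := by nlinarith
    have h2' : (p:ℝ) < (q:ℝ) := by nlinarith
    have b1 : q < p + 1 := by exact_mod_cast h1'
    have b2 : p < q := by exact_mod_cast h2'
    omega

/-- Well-definedness: any two representations of the same `c` have the same value. -/
lemma rval_welldefined {c : ℝ} {p q : ℕ} {u v u' v' : ℝ}
    (h : IsRep c p u v) (h' : IsRep c q u' v') : rval p u v = rval q u' v' := by
  by_cases hd : v = 0 ∨ u = v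
  · by_cases hd' : v' = 0 ∨ u' = v'
    · rw [rval_degenerate h hd, rval_degenerate h' hd']
    · push_neg at hd'
      exact absurd (not_deg_and_strict h hd h'
        (lt_of_le_of_ne h'.2.1 (Ne.symm hd'.1))
        (lt_of_le_of_ne h'.2.2.1 (Ne.symm hd'.2))) (by simp)
  · by_cases hd' : v' = 0 ∨ u' = v'
    · push_neg at hd
      exact absurd (not_deg_and_strict h' hd' h
        (lt_of_le_of_ne h.2.1 (Ne.symm hd.1))
        (lt_of_le_of_ne h.2.2.1 (Ne.symm hd.2))) (by simp)
    · -- both strict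
      push_neg at hd; push_neg at hd'
      have hv : 0 < v := lt_of_le_of_ne h.2.1 (Ne.symm hd.1)
      have huv : v < u := lt_of_le_of_ne h.2.2.1 (Ne.symm hd.2)
      have hv' : 0 < v' := lt_of_le_of_ne h'.2.1 (Ne.symm hd'.1)
      have huv' : v' < u' := lt_of_le_of_ne h'.2.2.1 (Ne.symm hd'.2)
      have e1 := isRep_c_lower_strict h huv
      have e2 := isRep_c_upper_strict h hv
      have e3 := isRep_c_lower_strict h' huv'
      have e4 := isRep_c_upper_strict h' hv'
      have hcpos := isRep_c_pos h
      have hpq : p = q := by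
        have hq1 := isRep_p_cast h'
        have hp1 := isRep_p_cast h
        have a1 : (p:ℝ) < (q:ℝ) + 1 := by nlinarith
        have a2 : (q:ℝ) < (p:ℝ) + 1 := by nlinarith
        have b1 : p < q + 1 := by exact_mod_cast a1
        have b2 : q < p + 1 := by exact_mod_cast a2
        omega
      subst hpq
      have hp1 := isRep_p_cast h
      obtain ⟨hp, hv0, hvu, s1, s2⟩ := h
      obtain ⟨-, hv0', hvu', s1', s2'⟩ := h'
      have key : (p:ℝ) * (u - u') * (u + u' - v - v') = 0 := by nlinarith [s1, s1', s2, s2']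
      have hsum : 0 < u + u' - v - v' := by linarith
      have huu : u = u' := by
        rcases mul_eq_zero.1 key with h0 | h0
        · rcases mul_eq_zero.1 h0 with h0 | h0
          · exfalso; nlinarith
          · linarith
        · linarith
      have hvv : v = v' := by rw [huu] at s1; linarith
      rw [huu, hvv]

end PiN3

end


noncomputable section

namespace PiN3

open Real

/-! ### Explicit parameters for the lower arcs -/

/-- the parameter `t` of the lower arc `L_k` as a function of `c`. -/
def tk (k : ℕ) (c : ℝ) : ℝ := ((k : ℝ) + sqrt ((k:ℝ) * (((k:ℝ) + 1) * c - 1))) / ((k:ℝ) * ((k:ℝ) + 1))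

/-- the index `k` of the lower arc through the fiber over `c`. -/
def kc (c : ℝ) : ℕ := max 1 (⌈1 / c⌉₊ - 1)

/-- the lower boundary function. -/
def G (c : ℝ) : ℝ := rval (kc c) (tk (kc c) c) (1 - (kc c : ℝ) * tk (kc c) c)

/-- the k-th piece of the lower boundary function (continuous for each `k`). -/
def Gk (k : ℕ) (c : ℝ) : ℝ := rval k (tk k c) (1 - (k : ℝ) * tk k c)

lemma G_eq_Gk (c : ℝ) : G c = Gk (kc c) c := rfl

lemma continuous_tk (k : ℕ) (hk : 1 ≤ k) : Continuous (tk k) := by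
  have : ((k:ℝ) * ((k:ℝ) + 1)) ≠ 0 := by positivity
  exact (continuous_const.add ((continuous_sqrt.comp (by continuity)))).div_const _

lemma continuous_Gk (k : ℕ) (hk : 1 ≤ k) : Continuous (Gk k) := by
  have h := continuous_tk k hk
  unfold Gk rval
  fun_prop

/-- For `1/(k+1) ≤ c ≤ 1/k`, the explicit parameter gives a representation. -/
lemma isRep_tk {k : ℕ} {c : ℝ} (hk : 1 ≤ k) (h1 : 1 ≤ ((k:ℝ) + 1) * c) (h2 : (k : ℝ) * c ≤ 1) :
    IsRep c k (tk k c) (1 - (k : ℝ) * tk k c) ∧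
      1 ≤ ((k:ℝ) + 1) * tk k c ∧ (k : ℝ) * tk k c ≤ 1 := by
  have hk1 : (1:ℝ) ≤ (k:ℝ) := Nat.one_le_cast.2 hk
  have hD0 : 0 ≤ (k:ℝ) * (((k:ℝ) + 1) * c - 1) := by nlinarith
  set s := sqrt ((k:ℝ) * (((k:ℝ) + 1) * c - 1)) with hs
  have hs0 : 0 ≤ s := sqrt_nonneg _
  have hs2 : s ^ 2 = (k:ℝ) * (((k:ℝ) + 1) * c - 1) := sq_sqrt hD0
  have hs1 : s ≤ 1 := by
    rw [show (1:ℝ) = sqrt 1 by simp [sqrt_one]]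
    exact sqrt_le_sqrt (by nlinarith)
  have hkk : (0:ℝ) < (k:ℝ) * ((k:ℝ) + 1) := by positivity
  have ht : tk k c = ((k:ℝ) + s) / ((k:ℝ) * ((k:ℝ) + 1)) := rfl
  have htv : (k:ℝ) * ((k:ℝ) + 1) * tk k c = (k:ℝ) + s := by
    rw [ht]; field_simp
  constructor
  · refine ⟨hk, ?_, ?_, by ring, ?_⟩
    · -- 0 ≤ 1 - k * tk
      nlinarith [htv]
    · -- 1 - k*tk ≤ tk
      nlinarith [htv]
    · -- equation
      nlinarith [htv, hs2]
  · constructor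
    · nlinarith [htv]
    · nlinarith [htv]

lemma kc_one_le (c : ℝ) : 1 ≤ kc c := le_max_left _ _

lemma kc_spec {c : ℝ} (hc : 0 < c) (hc1 : c ≤ 1) :
    1 ≤ ((kc c : ℝ) + 1) * c ∧ (kc c : ℝ) * c ≤ 1 := by
  have hinv : (1:ℝ) ≤ 1 / c := by rw [le_div_iff₀ hc]; linarith
  set K := ⌈1 / c⌉₊ with hK
  have hK1 : 0 < K := Nat.ceil_pos.2 (by positivity)
  rcases Nat.lt_or_ge K 2 with h2 | h2
  · -- K = 1, so c = 1
    have hKeq : K = 1 := by omega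
    have h1c : 1 / c ≤ 1 := by
      have := Nat.ceil_le.1 (le_of_eq hKeq : ⌈1/c⌉₊ ≤ 1)
      exact_mod_cast this
    have hc1' : c = 1 := le_antisymm hc1 (by rw [div_le_iff₀ hc] at h1c; linarith)
    have hkcv : kc c = 1 := by unfold kc; rw [← hK, hKeq]; norm_num
    rw [hkcv, hc1']
    norm_num
  · -- K ≥ 2
    have hkcv : kc c = K - 1 := by
      unfold kc; rw [← hK]; omega
    have hKK : 1 ≤ K := by omega
    have hcast : ((K - 1 : ℕ) : ℝ) = (K : ℝ) - 1 := by
      rw [Nat.cast_sub hKK]; norm_num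
    constructor
    · rw [hkcv, hcast]
      have hle : 1 / c ≤ (K : ℝ) := Nat.le_ceil _
      rw [div_le_iff₀ hc] at hle
      linarith
    · rw [hkcv, hcast]
      have hlt : ((K - 1 : ℕ) : ℝ) < 1 / c := Nat.lt_ceil.1 (by omega)
      rw [hcast, lt_div_iff₀ hc] at hlt
      linarith

lemma kc_le {c : ℝ} {m : ℕ} (hm : 2 ≤ m) (hc : 1 ≤ (m:ℝ) * c) (hcpos : 0 < c) :
    kc c ≤ m - 1 := by
  have : (1:ℝ)/c ≤ (m:ℝ) := by
    rw [div_le_iff₀ hcpos]; nlinarith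
  have hK : ⌈1 / c⌉₊ ≤ m := Nat.ceil_le.2 this
  unfold kc
  omega

lemma isRep_kc {c : ℝ} (hc : 0 < c) (hc1 : c ≤ 1) :
    IsRep c (kc c) (tk (kc c) c) (1 - (kc c : ℝ) * tk (kc c) c) := by
  obtain ⟨h1, h2⟩ := kc_spec hc hc1
  exact (isRep_tk (kc_one_le c) h1 h2).1

lemma tk_kc_bounds {c : ℝ} (hc : 0 < c) (hc1 : c ≤ 1) :
    1 ≤ ((kc c : ℝ) + 1) * tk (kc c) c ∧ (kc c : ℝ) * tk (kc c) c ≤ 1 := by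
  obtain ⟨h1, h2⟩ := kc_spec hc hc1
  exact (isRep_tk (kc_one_le c) h1 h2).2

/-- `G` is the value of ANY representation. -/
lemma G_eq_of_rep {c : ℝ} {p : ℕ} {u v : ℝ} (h : IsRep c p u v) : G c = rval p u v := by
  have hc := isRep_c_pos h
  have hc1 : c ≤ 1 := by
    have := isRep_c_upper h
    have := isRep_p_cast h
    nlinarith
  exact rval_welldefined (isRep_kc hc hc1) h

lemma G_recip {j : ℕ} (hj : 1 ≤ j) : G (1 / (j:ℝ)) = (1 / (j:ℝ)) ^ 2 := by
  have hj1 : (1:ℝ) ≤ (j:ℝ) := Nat.one_le_cast.2 hj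
  have hrep : IsRep (1/(j:ℝ)) j (1/(j:ℝ)) 0 := by
    refine ⟨hj, le_rfl, by positivity, ?_, ?_⟩
    · field_simp; norm_num
    · field_simp; ring
  rw [G_eq_of_rep hrep, rval_degenerate hrep (Or.inl rfl)]

/-! ### Upper boundary -/

/-- the upper arc p₂-parametrization for a simplex of dimension `m`. -/
def phi (m : ℕ) (t : ℝ) : ℝ := ((m:ℝ) - 1) * t ^ 2 + (1 - ((m:ℝ) - 1) * t) ^ 2

/-- the upper-arc parameter as a function of `c`. -/
def um (m : ℕ) (c : ℝ) : ℝ :=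
  (((m:ℝ) - 1) - sqrt (((m:ℝ) - 1) * ((m:ℝ) * c - 1))) / (((m:ℝ) - 1) * (m:ℝ))

/-- the upper boundary function for dimension `m`. -/
def F (m : ℕ) (c : ℝ) : ℝ :=
  ((m:ℝ) - 1) * (um m c) ^ 3 + (1 - ((m:ℝ) - 1) * um m c) ^ 3

lemma continuous_um (m : ℕ) : Continuous (um m) := by
  unfold um
  exact ((continuous_const.sub (continuous_sqrt.comp (by continuity)))).div_const _

lemma continuous_F (m : ℕ) : Continuous (F m) := by
  have := continuous_um m
  unfold F
  fun_prop

lemma um_spec {m : ℕ} {c : ℝ} (hm : 2 ≤ m) (hc : 1 ≤ (m:ℝ) * c) (hc1 : c ≤ 1) :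
    0 ≤ um m c ∧ (m:ℝ) * um m c ≤ 1 ∧ phi m (um m c) = c := by
  have hm1 : (2:ℝ) ≤ (m:ℝ) := by exact_mod_cast hm
  have ha : (1:ℝ) ≤ (m:ℝ) - 1 := by linarith
  have hD0 : 0 ≤ ((m:ℝ) - 1) * ((m:ℝ) * c - 1) := by nlinarith
  set s := sqrt (((m:ℝ) - 1) * ((m:ℝ) * c - 1)) with hs
  have hs0 : 0 ≤ s := sqrt_nonneg _
  have hs2 : s ^ 2 = ((m:ℝ) - 1) * ((m:ℝ) * c - 1) := sq_sqrt hD0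
  have hsa : s ≤ (m:ℝ) - 1 := by
    have h' : s ≤ sqrt (((m:ℝ)-1)^2) := sqrt_le_sqrt (by nlinarith)
    rwa [sqrt_sq (by linarith : (0:ℝ) ≤ (m:ℝ) - 1)] at h'
  have hmm : (0:ℝ) < ((m:ℝ) - 1) * (m:ℝ) := by positivity
  have huv : ((m:ℝ) - 1) * (m:ℝ) * um m c = ((m:ℝ) - 1) - s := by
    unfold um; rw [← hs]; exact mul_div_cancel₀ _ (ne_of_gt hmm)
  refine ⟨?_, ?_, ?_⟩
  · have : 0 ≤ ((m:ℝ) - 1) - s := by linarith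
    nlinarith [huv]
  · nlinarith [huv]
  · unfold phi
    nlinarith [huv, hs2]

end PiN3

end


noncomputable section

namespace PiN3

open Real

/-- **Improvement lemma**: a triple with `0 < γ ≤ β < α` is never `p₃`-minimal among
nonnegative triples with the same `e₁` and `e₂`. -/
lemma exists_better {α β γ : ℝ} (hγ : 0 < γ) (hγβ : γ ≤ β) (hβα : β < α) :
    ∃ a b g : ℝ, 0 ≤ a ∧ 0 ≤ b ∧ 0 ≤ g ∧ a + b + g = α + β + γ ∧
      a ^ 2 + b ^ 2 + g ^ 2 = α ^ 2 + β ^ 2 + γ ^ 2 ∧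
      a ^ 3 + b ^ 3 + g ^ 3 < α ^ 3 + β ^ 3 + γ ^ 3 := by
  set s := α + β + γ with hsdef
  set q := α ^ 2 + β ^ 2 + γ ^ 2 with hqdef
  have hβ : 0 < β := lt_of_lt_of_le hγ hγβ
  have hα : 0 < α := lt_trans hβ hβα
  have hspos : 0 < s := by unfold s; linarith
  have hqs2 : q ≤ s ^ 2 := by
    unfold s q
    nlinarith [mul_pos hα hβ, mul_pos hβ hγ, mul_pos hα hγ]
  have hprodpos : 0 < α * β * γ := by positivity
  by_cases hB : s ^ 2 ≤ 2 * q
  · -- use the pair (λ, s - λ, 0) with a zero coordinate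
    have hD : 0 ≤ 2 * q - s ^ 2 := by linarith
    set r := sqrt (2 * q - s ^ 2) with hrdef
    have hr0 : 0 ≤ r := sqrt_nonneg _
    have hr2 : r ^ 2 = 2 * q - s ^ 2 := sq_sqrt hD
    have hrs : r ≤ s := by
      have h' : r ≤ sqrt (s ^ 2) := sqrt_le_sqrt (by linarith)
      rwa [sqrt_sq hspos.le] at h'
    refine ⟨(s + r) / 2, (s - r) / 2, 0, by positivity, by linarith, le_rfl, by ring, ?_, ?_⟩
    · linear_combination (1/2) * hr2
    · have hold : α ^ 3 + β ^ 3 + γ ^ 3 = (3 * s * q - s ^ 3) / 2 + 3 * (α * β * γ) := by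
        unfold s q; ring
      have hnew : ((s + r)/2) ^ 3 + ((s - r)/2) ^ 3 + (0:ℝ) ^ 3 = (3 * s * q - s ^ 3) / 2 := by
        linear_combination (3 * s / 4) * hr2
      rw [hnew, hold]
      linarith
  · -- use the pair (μ, μ, ν)
    push_neg at hB
    have hD : 0 ≤ 6 * q - 2 * s ^ 2 := by
      unfold s q
      nlinarith [sq_nonneg (α - β), sq_nonneg (β - γ), sq_nonneg (γ - α)]
    set r := sqrt (6 * q - 2 * s ^ 2) with hrdef
    have hr0 : 0 ≤ r := sqrt_nonneg _
    have hr2 : r ^ 2 = 6 * q - 2 * s ^ 2 := sq_sqrt hD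
    have hrs : r ≤ s := by
      have h' : r ≤ sqrt (s ^ 2) := sqrt_le_sqrt (by linarith)
      rwa [sqrt_sq hspos.le] at h'
    set μ := (2 * s + r) / 6 with hμdef
    set ν := (s - r) / 3 with hνdef
    have hμ0 : 0 ≤ μ := by positivity
    have hν0 : 0 ≤ ν := by unfold ν; linarith
    refine ⟨μ, μ, ν, hμ0, hμ0, hν0, by unfold μ ν; ring, ?_, ?_⟩
    · unfold μ ν
      linear_combination (1/6) * hr2
    · -- reduces to μ²ν < αβγ via the u-trick
      set u1 := μ - α with hu1
      set u2 := μ - β with hu2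
      set u3 := μ - γ with hu3
      have he2 : u1 * u2 + u1 * u3 + u2 * u3 = 0 := by
        unfold u1 u2 u3 μ s q at *
        linear_combination (1/12) * hr2
      have hσ : u1 + u2 + u3 = r / 2 := by
        unfold u1 u2 u3 μ s; ring
      have hprod : α * β * γ - μ * μ * ν = μ * (u1 * u2 + u1 * u3 + u2 * u3) - u1 * u2 * u3 := by
        unfold u1 u2 u3 ν μ s; ring
      have hkey : u1 * u2 * u3 < 0 := by
        have h12 : u1 < u2 := by unfold u1 u2; linarith
        have h23 : u2 ≤ u3 := by unfold u2 u3; linarith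
        have hu1neg : u1 < 0 := by
          by_contra h
          push_neg at h
          nlinarith
        have hu3pos : 0 < u3 := by
          by_contra h
          push_neg at h
          have : u1 + u2 + u3 < 0 := by linarith
          linarith
        have hu2pos : 0 < u2 := by
          rcases lt_trichotomy u2 0 with h | h | h
          · exfalso
            nlinarith [mul_pos (neg_pos.2 hu1neg) (neg_pos.2 h)]
          · exfalso
            rw [h] at he2
            have : u1 * u3 = 0 := by linarith [he2]
            rcases mul_eq_zero.1 this with h' | h'
            · linarith
            · linarith
          · exact h
        have hpos := mul_pos hu2pos hu3pos
        rw [mul_assoc]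
        exact mul_neg_of_neg_of_pos hu1neg hpos
      have hineq : μ * μ * ν < α * β * γ := by
        rw [he2] at hprod
        linarith [hprod, hkey]
      have hold : α ^ 3 + β ^ 3 + γ ^ 3 - 3 * (α * β * γ) = (3 * s * q - s ^ 3) / 2 := by
        unfold s q; ring
      have hnew : μ ^ 3 + μ ^ 3 + ν ^ 3 - 3 * (μ * μ * ν) = (3 * s * q - s ^ 3) / 2 := by
        unfold μ ν
        linear_combination (s / 4) * hr2
      clear_value s q r μ ν u1 u2 u3
      linarith [hineq, hold, hnew]

end PiN3

end


noncomputable section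

namespace PiN3

open Finset

variable {m : ℕ}

/-- update three coordinates: effect on sums of `f`-values. -/
lemma sum_update3 (z : Fin m → ℝ) {i j l : Fin m} (hij : i ≠ j) (hil : i ≠ l) (hjl : j ≠ l)
    (a b g : ℝ) (f : ℝ → ℝ) :
    ∑ k, f ((Function.update (Function.update (Function.update z i a) j b) l g) k)
      = ∑ k, f (z k) - f (z i) - f (z j) - f (z l) + f a + f b + f g := by
  set z' := Function.update (Function.update (Function.update z i a) j b) l g with hz'
  have hS : ({i, j, l} : Finset (Fin m)) ⊆ univ := subset_univ _
  have hmemj : j ∈ ({j, l} : Finset (Fin m)) := by simp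
  have hz'i : z' i = a := by
    rw [hz', Function.update_of_ne hil, Function.update_of_ne hij, Function.update_self]
  have hz'j : z' j = b := by
    rw [hz', Function.update_of_ne hjl, Function.update_self]
  have hz'l : z' l = g := by rw [hz', Function.update_self]
  have hz'other : ∀ k, k ∉ ({i, j, l} : Finset (Fin m)) → z' k = z k := by
    intro k hk
    simp only [mem_insert, mem_singleton, not_or] at hk
    rw [hz', Function.update_of_ne (Ne.symm (by exact fun h => hk.2.2 h.symm)),
      Function.update_of_ne (fun h => hk.2.1 h), Function.update_of_ne (fun h => hk.1 h)]
  have hsplit : ∀ w : Fin m → ℝ,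
      ∑ k, f (w k) = ∑ k ∈ (univ \ {i, j, l} : Finset (Fin m)), f (w k)
        + ∑ k ∈ ({i, j, l} : Finset (Fin m)), f (w k) := by
    intro w
    rw [Finset.sum_sdiff hS]
  have htriple : ∀ w : Fin m → ℝ,
      ∑ k ∈ ({i, j, l} : Finset (Fin m)), f (w k) = f (w i) + f (w j) + f (w l) := by
    intro w
    rw [show ({i, j, l} : Finset (Fin m)) = insert i (insert j {l}) from rfl,
      Finset.sum_insert (by simp [hij, hil]), Finset.sum_insert (by simp [hjl]),
      Finset.sum_singleton]
    ring
  have hsame : ∑ k ∈ (univ \ {i, j, l} : Finset (Fin m)), f (z' k)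
      = ∑ k ∈ (univ \ {i, j, l} : Finset (Fin m)), f (z k) := by
    apply Finset.sum_congr rfl
    intro k hk
    rw [hz'other k (by simpa using (Finset.mem_sdiff.1 hk).2)]
  rw [hsplit z', hsplit z, htriple z', htriple z, hsame, hz'i, hz'j, hz'l]
  ring

/-- expansion of `∑ (x i - t) ^ 2`. -/
lemma sum_sub_sq (x : Fin m → ℝ) (t : ℝ) :
    ∑ i, (x i - t) ^ 2 = (∑ i, x i ^ 2) - 2 * t * (∑ i, x i) + m * t ^ 2 := by
  have h : ∀ i ∈ univ, (x i - t) ^ 2 = x i ^ 2 - 2 * t * x i + t ^ 2 := fun i _ => by ring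
  rw [Finset.sum_congr rfl h]
  rw [Finset.sum_add_distrib, Finset.sum_sub_distrib, ← Finset.mul_sum, Finset.sum_const,
    Finset.card_univ, Fintype.card_fin, nsmul_eq_mul]

/-- expansion of `∑ (x i - t) ^ 3`. -/
lemma sum_sub_cube (x : Fin m → ℝ) (t : ℝ) :
    ∑ i, (x i - t) ^ 3 = (∑ i, x i ^ 3) - 3 * t * (∑ i, x i ^ 2)
      + 3 * t ^ 2 * (∑ i, x i) - m * t ^ 3 := by
  have h : ∀ i ∈ univ, (x i - t) ^ 3
      = x i ^ 3 - 3 * t * x i ^ 2 + 3 * t ^ 2 * x i - t ^ 3 := fun i _ => by ring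
  rw [Finset.sum_congr rfl h]
  rw [Finset.sum_sub_distrib, Finset.sum_add_distrib, Finset.sum_sub_distrib,
    ← Finset.mul_sum, ← Finset.mul_sum, Finset.sum_const, Finset.card_univ,
    Fintype.card_fin, nsmul_eq_mul]

/-- **Maximum theorem** : on the fiber of `p₂` through the upper-arc point with parameter `t`,
`p₃` is maximised at that point.  (Positivity of `x` is not needed.) -/
theorem p3_max {x : Fin m → ℝ} (hsum : ∑ i, x i = 1) {t : ℝ}
    (htm : (m:ℝ) * t ≤ 1)
    (hp2 : ∑ i, x i ^ 2 = ((m:ℝ) - 1) * t ^ 2 + (1 - ((m:ℝ) - 1) * t) ^ 2) :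
    ∑ i, x i ^ 3 ≤ ((m:ℝ) - 1) * t ^ 3 + (1 - ((m:ℝ) - 1) * t) ^ 3 := by
  set ρ := 1 - (m:ℝ) * t with hρ
  have hρ0 : 0 ≤ ρ := by rw [hρ]; linarith
  have hA : ∑ i, (x i - t) ^ 2 = ρ ^ 2 := by
    rw [sum_sub_sq, hsum, hp2, hρ]; ring
  have hB : ∀ i, x i - t ≤ ρ := by
    intro i
    have h1 : (x i - t) ^ 2 ≤ ρ ^ 2 := by
      rw [← hA]
      exact Finset.single_le_sum (f := fun k => (x k - t) ^ 2) (fun k _ => sq_nonneg _)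
        (Finset.mem_univ i)
    nlinarith
  have hC : ∑ i, (x i - t) ^ 3 ≤ ρ ^ 3 := by
    have hterm : ∀ i ∈ univ, (x i - t) ^ 3 ≤ ρ * (x i - t) ^ 2 := by
      intro i _
      have := hB i
      nlinarith [sq_nonneg (x i - t)]
    calc ∑ i, (x i - t) ^ 3 ≤ ∑ i, ρ * (x i - t) ^ 2 := Finset.sum_le_sum hterm
      _ = ρ * ∑ i, (x i - t) ^ 2 := by rw [Finset.mul_sum]
      _ = ρ ^ 3 := by rw [hA]; ring
  have hcube := sum_sub_cube x t
  rw [hsum, hp2] at hcube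
  have : ∑ i, x i ^ 3 = ∑ i, (x i - t) ^ 3 + 3 * t * (((m:ℝ) - 1) * t ^ 2
      + (1 - ((m:ℝ) - 1) * t) ^ 2) - 3 * t ^ 2 + (m:ℝ) * t ^ 3 := by linarith
  rw [this]
  have htarget : ((m:ℝ) - 1) * t ^ 3 + (1 - ((m:ℝ) - 1) * t) ^ 3
      = ρ ^ 3 + 3 * t * (((m:ℝ) - 1) * t ^ 2 + (1 - ((m:ℝ) - 1) * t) ^ 2)
        - 3 * t ^ 2 + (m:ℝ) * t ^ 3 := by
    rw [hρ]; ring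
  linarith [hC, htarget]

/-- `p₂` bounds on the simplex. -/
lemma p2_bounds {x : Fin m → ℝ} (hx : x ∈ stdSimplex ℝ (Fin m)) :
    1 ≤ (m:ℝ) * ∑ i, x i ^ 2 ∧ ∑ i, x i ^ 2 ≤ 1 := by
  obtain ⟨hx0, hx1⟩ := hx
  constructor
  · have h := sq_sum_le_card_mul_sum_sq (s := (univ : Finset (Fin m))) (f := x)
    rw [hx1] at h
    simpa using h
  · have hle : ∀ i ∈ univ, x i ^ 2 ≤ x i := by
      intro i _
      have h1 : x i ≤ 1 := by
        rw [← hx1]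
        exact Finset.single_le_sum (fun k _ => hx0 k) (Finset.mem_univ i)
      nlinarith [hx0 i]
    calc ∑ i, x i ^ 2 ≤ ∑ i, x i := Finset.sum_le_sum hle
      _ = 1 := hx1

end PiN3

end


noncomputable section

namespace PiN3

open Finset

variable {m : ℕ}

lemma continuous_psum (k : ℕ) : Continuous fun y : Fin m → ℝ => ∑ i, y i ^ k :=
  continuous_finset_sum _ fun i _ => (continuous_apply i).pow k

/-- **Minimum theorem**: on the fiber of `p₂` over `c`, `p₃ ≥ G c`. -/
theorem p3_min {x : Fin m → ℝ} (hx : x ∈ stdSimplex ℝ (Fin m)) :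
    G (∑ i, x i ^ 2) ≤ ∑ i, x i ^ 3 := by
  classical
  set c := ∑ i, x i ^ 2 with hc
  set K := stdSimplex ℝ (Fin m) ∩ {y : Fin m → ℝ | ∑ i, y i ^ 2 = c} with hK
  have hKx : x ∈ K := ⟨hx, rfl⟩
  have hKcomp : IsCompact K :=
    (isCompact_stdSimplex _ _).inter_right (isClosed_eq (continuous_psum 2) continuous_const)
  obtain ⟨z, hzK, hzmin⟩ :=
    hKcomp.exists_isMinOn ⟨x, hKx⟩ (continuous_psum 3).continuousOn
  have hz0 : ∀ i, 0 ≤ z i := hzK.1.1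
  have hzsum : ∑ i, z i = 1 := hzK.1.2
  have hzc : ∑ i, z i ^ 2 = c := hzK.2
  suffices hrep : ∃ p u v, IsRep c p u v ∧ ∑ i, z i ^ 3 = rval p u v by
    obtain ⟨p, u, v, hr, hval⟩ := hrep
    rw [G_eq_of_rep hr, ← hval]
    exact isMinOn_iff.1 hzmin x hKx
  -- no bad triple at the minimizer
  have hnbt : ∀ i j l : Fin m, i ≠ j → i ≠ l → j ≠ l →
      0 < z l → z l ≤ z j → z j < z i → False := by
    intro i j l hij hil hjl h1 h2 h3
    obtain ⟨a, b, g, ha, hb, hg, hsum3, hsq3, hcube3⟩ := exists_better h1 h2 h3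
    set z' := Function.update (Function.update (Function.update z i a) j b) l g with hz'
    have hs1 := sum_update3 z hij hil hjl a b g (fun w => w)
    have hs2 := sum_update3 z hij hil hjl a b g (fun w => w ^ 2)
    have hs3 := sum_update3 z hij hil hjl a b g (fun w => w ^ 3)
    have hz'K : z' ∈ K := by
      refine ⟨⟨?_, ?_⟩, ?_⟩
      · intro k
        rcases eq_or_ne k l with rfl | hkl
        · rw [hz', Function.update_self]; exact hg
        · rw [hz', Function.update_of_ne hkl]
          rcases eq_or_ne k j with rfl | hkj
          · rw [Function.update_self]; exact hb
          · rw [Function.update_of_ne hkj]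
            rcases eq_or_ne k i with rfl | hki
            · rw [Function.update_self]; exact ha
            · rw [Function.update_of_ne hki]; exact hz0 k
      · rw [← hz'] at hs1
        rw [hs1, hzsum]
        linarith
      · show ∑ k, z' k ^ 2 = c
        rw [← hz'] at hs2
        rw [hs2, hzc]
        linarith
    have hlt : ∑ k, z' k ^ 3 < ∑ k, z k ^ 3 := by
      rw [← hz'] at hs3
      rw [hs3]
      linarith
    exact absurd (isMinOn_iff.1 hzmin z' hz'K) (by linarith)
  -- structure of the minimizer
  set P := univ.filter (fun i => 0 < z i) with hP
  have hzero : ∀ i, i ∉ P → z i = 0 := by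
    intro i hi
    rw [hP, mem_filter] at hi
    push_neg at hi
    exact le_antisymm (hi (mem_univ i)) (hz0 i)
  have hsumP : ∀ f : ℝ → ℝ, f 0 = 0 → ∑ i, f (z i) = ∑ i ∈ P, f (z i) := by
    intro f hf
    exact (Finset.sum_subset (subset_univ P) (fun i _ hi => by rw [hzero i hi, hf])).symm
  have hPne : P.Nonempty := by
    by_contra hPe
    rw [Finset.not_nonempty_iff_eq_empty] at hPe
    have : ∑ i, z i = 0 := by
      apply Finset.sum_eq_zero
      intro i _
      exact hzero i (by rw [hPe]; exact notMem_empty i)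
    rw [hzsum] at this
    norm_num at this
  obtain ⟨iu, hiu, hiumax⟩ := Finset.exists_max_image P z hPne
  set u := z iu with hu
  have hupos : 0 < u := (mem_filter.1 hiu).2
  set A := P.filter (fun k => z k = u) with hA
  set B := P.filter (fun k => ¬(z k = u)) with hB
  have hiuA : iu ∈ A := by rw [hA, mem_filter]; exact ⟨hiu, rfl⟩
  have hsumAB : ∀ f : ℝ → ℝ,
      ∑ i ∈ A, f (z i) + ∑ i ∈ B, f (z i) = ∑ i ∈ P, f (z i) := by
    intro f
    rw [hA, hB]
    exact Finset.sum_filter_add_sum_filter_not P _ _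
  have hsumA : ∀ f : ℝ → ℝ, ∑ i ∈ A, f (z i) = A.card * f u := by
    intro f
    rw [Finset.sum_congr rfl (fun k hk => by rw [(mem_filter.1 hk).2] : ∀ k ∈ A, f (z k) = f u),
      Finset.sum_const, nsmul_eq_mul]
  rcases Finset.eq_empty_or_nonempty B with hBe | hBne
  · -- all positive coordinates equal u : rep (A.card, u, 0)
    have hPall : ∀ k ∈ P, z k = u := by
      intro k hk
      by_contra hne
      have hkB : k ∈ B := by rw [hB, mem_filter]; exact ⟨hk, hne⟩
      rw [hBe] at hkB
      exact notMem_empty k hkB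
    have hAP : A = P := by
      rw [hA]; exact Finset.filter_true_of_mem hPall
    have h1 : (A.card : ℝ) * u = 1 := by
      rw [← hsumA (fun w => w), hAP, ← hsumP (fun w => w) rfl]
      exact hzsum
    have h2 : (A.card : ℝ) * u ^ 2 = c := by
      rw [← hsumA (fun w => w ^ 2), hAP, ← hsumP (fun w => w ^ 2) (by norm_num)]
      exact hzc
    have h3 : ∑ i, z i ^ 3 = (A.card : ℝ) * u ^ 3 := by
      rw [← hsumA (fun w => w ^ 3), hAP, ← hsumP (fun w => w ^ 3) (by norm_num)]
    exact ⟨A.card, u, 0, ⟨Finset.card_pos.2 ⟨iu, hiuA⟩, le_rfl, hupos.le,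
      by rw [← h1]; ring, by rw [← h2]; ring⟩, by rw [h3]; unfold rval; ring⟩
  · -- two values
    obtain ⟨iv, hiv, hivmax⟩ := Finset.exists_max_image B z hBne
    set v := z iv with hv
    have hivP : iv ∈ P := (mem_filter.1 hiv).1
    have hvpos : 0 < v := (mem_filter.1 hivP).2
    have hvu : v < u := lt_of_le_of_ne (hiumax iv hivP) (mem_filter.1 hiv).2
    have hiuiv : iu ≠ iv := by
      intro h
      have : u = v := by rw [hu, hv, h]
      linarith
    have hBall : ∀ k ∈ B, z k = v := by
      intro w hw
      by_contra hne
      have hwP : w ∈ P := (mem_filter.1 hw).1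
      have hwlt : z w < v := lt_of_le_of_ne (hivmax w hw) hne
      have hwpos : 0 < z w := (mem_filter.1 hwP).2
      have hiuw : iu ≠ w := by
        intro h
        have : u = z w := by rw [hu, h]
        linarith
      have hivw : iv ≠ w := by
        intro h
        have : v = z w := by rw [hv, h]
        linarith
      exact hnbt iu iv w hiuiv hiuw hivw hwpos hwlt.le (by rw [← hu, ← hv]; exact hvu)
    have hBcard : B.card = 1 := by
      by_contra hcard
      have h0 : B.card ≠ 0 := Finset.card_ne_zero_of_mem hiv
      obtain ⟨j₁, hj₁, j₂, hj₂, hjj⟩ := Finset.one_lt_card.1 (by omega : 1 < B.card)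
      have hiuj₁ : iu ≠ j₁ := by
        intro h
        have : u = v := by rw [hu, h, hBall j₁ hj₁]
        linarith
      have hiuj₂ : iu ≠ j₂ := by
        intro h
        have : u = v := by rw [hu, h, hBall j₂ hj₂]
        linarith
      exact hnbt iu j₁ j₂ hiuj₁ hiuj₂ hjj
        (by rw [hBall j₂ hj₂]; exact hvpos)
        (by rw [hBall j₁ hj₁, hBall j₂ hj₂])
        (by rw [hBall j₁ hj₁, ← hu]; exact hvu)
    have hsumB : ∀ f : ℝ → ℝ, ∑ i ∈ B, f (z i) = f v := by
      intro f
      obtain ⟨b, hb⟩ := Finset.card_eq_one.1 hBcard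
      have hivb : iv = b := by
        have h' := hiv
        rw [hb, mem_singleton] at h'
        exact h'
      rw [hb, Finset.sum_singleton, ← hivb, ← hv]
    have h1 : (A.card : ℝ) * u + v = 1 := by
      rw [← hsumA (fun w => w), ← hsumB (fun w => w), hsumAB (fun w => w),
        ← hsumP (fun w => w) rfl]
      exact hzsum
    have h2 : (A.card : ℝ) * u ^ 2 + v ^ 2 = c := by
      rw [← hsumA (fun w => w ^ 2), ← hsumB (fun w => w ^ 2), hsumAB (fun w => w ^ 2),
        ← hsumP (fun w => w ^ 2) (by norm_num)]
      exact hzc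
    have h3 : ∑ i, z i ^ 3 = (A.card : ℝ) * u ^ 3 + v ^ 3 := by
      rw [← hsumA (fun w => w ^ 3), ← hsumB (fun w => w ^ 3), hsumAB (fun w => w ^ 3),
        ← hsumP (fun w => w ^ 3) (by norm_num)]
    exact ⟨A.card, u, v, ⟨Finset.card_pos.2 ⟨iu, hiuA⟩, hvpos.le, hvu.le, h1, h2⟩, h3⟩

end PiN3

end


noncomputable section

namespace PiN3

open Real Set

lemma tk_at_right {j : ℕ} (hj : 1 ≤ j) : tk j (1 / (j:ℝ)) = 1 / (j:ℝ) := by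
  have hj0 : ((j:ℝ)) ≠ 0 := by positivity
  have harg : (j:ℝ) * (((j:ℝ) + 1) * (1 / (j:ℝ)) - 1) = 1 := by field_simp; ring
  unfold tk
  rw [harg, sqrt_one]
  field_simp

lemma tk_at_left {j : ℕ} (hj : 1 ≤ j) : tk j (1 / ((j:ℝ) + 1)) = 1 / ((j:ℝ) + 1) := by
  have hj0 : ((j:ℝ)) ≠ 0 := by positivity
  have hj10 : ((j:ℝ) + 1) ≠ 0 := by positivity
  have harg : (j:ℝ) * (((j:ℝ) + 1) * (1 / ((j:ℝ) + 1)) - 1) = 0 := by field_simp; ring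
  unfold tk
  rw [harg, sqrt_zero]
  field_simp; ring

lemma Gk_at_right {j : ℕ} (hj : 1 ≤ j) : Gk j (1 / (j:ℝ)) = (1 / (j:ℝ)) ^ 2 := by
  have hj0 : ((j:ℝ)) ≠ 0 := by positivity
  unfold Gk rval
  rw [tk_at_right hj]
  field_simp
  ring

lemma Gk_at_left {j : ℕ} (hj : 1 ≤ j) : Gk j (1 / ((j:ℝ) + 1)) = (1 / ((j:ℝ) + 1)) ^ 2 := by
  have hj10 : ((j:ℝ) + 1) ≠ 0 := by positivity
  unfold Gk rval
  rw [tk_at_left hj]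
  have h1 : 1 - (j:ℝ) * (1 / ((j:ℝ) + 1)) = 1 / ((j:ℝ) + 1) := by field_simp; ring
  rw [h1]
  field_simp

/-- identification of `kc` on the open pieces. -/
lemma kc_eq {j : ℕ} (hj : 1 ≤ j) {c : ℝ} (h1 : 1 < ((j:ℝ) + 1) * c) (h2 : (j:ℝ) * c < 1) :
    kc c = j := by
  have hj0 : (0:ℝ) < (j:ℝ) := by positivity
  have hc : 0 < c := by nlinarith
  have hlow : (j:ℝ) < 1 / c := by rw [lt_div_iff₀ hc]; linarith
  have hhigh : 1 / c < (j:ℝ) + 1 := by rw [div_lt_iff₀ hc]; linarith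
  have hceil : ⌈1 / c⌉₊ = j + 1 := by
    apply le_antisymm
    · apply Nat.ceil_le.2
      push_cast
      linarith
    · exact Nat.lt_ceil.2 (by push_cast; linarith)
  unfold kc
  rw [hceil]
  omega

lemma kc_cast_recip {k : ℕ} (hk : 2 ≤ k) : kc (1 / (k:ℝ)) = k - 1 := by
  have hk0 : ((k:ℝ)) ≠ 0 := by positivity
  have : (1:ℝ) / (1 / (k:ℝ)) = (k:ℝ) := by field_simp
  unfold kc
  rw [this, Nat.ceil_natCast]
  omega

theorem continuousOn_G : ContinuousOn G (Ioc (0:ℝ) 1) := by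
  intro c₀ hc₀
  obtain ⟨hc0, hc1⟩ := hc₀
  have hk₀1 : 1 ≤ kc c₀ := kc_one_le c₀
  obtain ⟨hb1, hb2⟩ := kc_spec hc0 hc1
  set k₀ := kc c₀ with hk₀
  have hk₀R : (1:ℝ) ≤ (k₀:ℝ) := Nat.one_le_cast.2 hk₀1
  -- the left piece index
  by_cases hjun : ((k₀:ℝ) + 1) * c₀ = 1
  case pos =>
    -- c₀ = 1/(k₀+1) : junction point
    have hc₀v : c₀ = 1 / ((k₀:ℝ) + 1) := by
      field_simp at hjun ⊢
      linarith
    set k₁ := k₀ + 1 with hk₁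
    have hGjun : G c₀ = Gk k₁ c₀ := by
      rw [G_eq_Gk, ← hk₀, hc₀v, Gk_at_left hk₀1]
      rw [show ((k₀:ℝ) + 1) = ((k₁:ℕ):ℝ) by rw [hk₁]; push_cast; ring]
      rw [Gk_at_right (by omega)]
    have hA : ∀ c ∈ Ioc (1 / ((k₁:ℝ) + 1)) c₀, G c = Gk k₁ c := by
      intro c hc
      rcases eq_or_lt_of_le hc.2 with rfl | hlt
      · exact hGjun
      · have hk₁R : (0:ℝ) < (k₁:ℝ) := by positivity
        have hcpos : 0 < c := lt_trans (by positivity) hc.1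
        have h1 : 1 < ((k₁:ℝ) + 1) * c := by
          have h' := hc.1
          rw [div_lt_iff₀ (by positivity : (0:ℝ) < (k₁:ℝ) + 1)] at h'
          nlinarith
        have h2 : (k₁:ℝ) * c < 1 := by
          have : (k₁:ℝ) * c₀ = 1 := by
            rw [hk₁]; push_cast; linarith [hjun]
          nlinarith
        rw [G_eq_Gk, kc_eq (by omega) h1 h2]
    -- right piece : k₀, for c ∈ [c₀, 1/k₀]
    have hB : ∀ c, c₀ ≤ c → (k₀:ℝ) * c ≤ 1 → G c = Gk k₀ c := by
      intro c hcc hck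
      rcases eq_or_lt_of_le hck with heq | hlt
      · have hceq : c = 1 / (k₀:ℝ) := by
          field_simp
          linarith
        rw [hceq, Gk_at_right hk₀1, ← G_recip hk₀1]
      · rcases eq_or_lt_of_le hcc with rfl | hlt2
        · rw [G_eq_Gk]
        · have h1 : 1 < ((k₀:ℝ) + 1) * c := by nlinarith
          rw [G_eq_Gk, kc_eq hk₀1 h1 hlt]
    -- assemble
    have hleft : ContinuousWithinAt G (Iic c₀) c₀ := by
      have hmem : Ioi (1 / ((k₁:ℝ) + 1)) ∈ nhds c₀ := by
        apply Ioi_mem_nhds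
        rw [hc₀v, div_lt_div_iff₀ (by positivity) (by positivity)]
        rw [hk₁]; push_cast
        linarith
      rw [← continuousWithinAt_inter hmem]
      have hset : Iic c₀ ∩ Ioi (1 / ((k₁:ℝ) + 1)) = Ioc (1 / ((k₁:ℝ) + 1)) c₀ := by
        rw [Set.inter_comm, Set.Ioi_inter_Iic]
      rw [hset]
      exact ((continuous_Gk k₁ (by omega)).continuousAt.continuousWithinAt).congr hA (hA c₀ ⟨by
        rw [hc₀v, div_lt_div_iff₀ (by positivity) (by positivity)]
        rw [hk₁]; push_cast; linarith, le_rfl⟩)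
    have hright : ContinuousWithinAt G (Ici c₀) c₀ := by
      have hk0lt : c₀ < 1 / (k₀:ℝ) := by
        rw [hc₀v, div_lt_div_iff₀ (by positivity) (by positivity : (0:ℝ) < (k₀:ℝ))]
        linarith
      have hmem : Iio (1 / (k₀:ℝ)) ∈ nhds c₀ := Iio_mem_nhds hk0lt
      rw [← continuousWithinAt_inter hmem]
      apply ((continuous_Gk k₀ hk₀1).continuousAt.continuousWithinAt).congr
      · intro c hc
        exact hB c hc.1 (by
          have := hc.2
          rw [mem_Iio, lt_div_iff₀ (by positivity : (0:ℝ) < (k₀:ℝ))] at this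
          nlinarith)
      · exact hB c₀ le_rfl (by nlinarith)
    exact (hleft.union hright).mono (fun y hy => (le_total y c₀).imp id id)
  case neg =>
    -- non-junction : single piece k₀ on both sides
    have hb1' : 1 < ((k₀:ℝ) + 1) * c₀ := lt_of_le_of_ne hb1 (fun h => hjun h.symm)
    have hAB : ∀ c, 1 < ((k₀:ℝ) + 1) * c → (k₀:ℝ) * c ≤ 1 → G c = Gk k₀ c := by
      intro c h1 hck
      rcases eq_or_lt_of_le hck with heq | hlt
      · have hceq : c = 1 / (k₀:ℝ) := by
          field_simp
          linarith
        rw [hceq, Gk_at_right hk₀1, ← G_recip hk₀1]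
      · rw [G_eq_Gk, kc_eq hk₀1 h1 hlt]
    rcases eq_or_lt_of_le hb2 with hk0eq | hk0lt
    · -- k₀ c₀ = 1 : this forces k₀ = 1, c₀ = 1
      have hk₀v : k₀ = 1 := by
        by_contra hne
        have hk₀2 : 2 ≤ k₀ := by omega
        have : c₀ = 1 / (k₀:ℝ) := by
          field_simp
          linarith
        have h1 : kc c₀ = k₀ - 1 := by rw [this]; exact kc_cast_recip hk₀2
        rw [← hk₀] at h1
        omega
      have hc₀v : c₀ = 1 := by
        rw [hk₀v] at hk0eq
        push_cast at hk0eq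
        linarith
      -- within Ioc 0 1, points ≥ c₀ = 1 form {1}; use left piece only
      have hleft : ContinuousWithinAt G (Iic c₀) c₀ := by
        have hmem : Ioi (1 / ((k₀:ℝ) + 1)) ∈ nhds c₀ := by
          apply Ioi_mem_nhds
          rw [div_lt_iff₀ (by positivity)]
          nlinarith
        rw [← continuousWithinAt_inter hmem]
        apply ((continuous_Gk k₀ hk₀1).continuousAt.continuousWithinAt).congr
        · intro c hc
          have hcgt : 1 / ((k₀:ℝ) + 1) < c := hc.2
          have hcpos : 0 < c := lt_trans (by positivity) hcgt
          have hcle : c ≤ c₀ := hc.1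
          apply hAB c
          · rw [div_lt_iff₀ (by positivity)] at hcgt
            nlinarith
          · nlinarith
        · exact hAB c₀ hb1' hb2
      exact hleft.mono (fun y hy => by rw [Set.mem_Iic, hc₀v]; exact hy.2)
    · -- c₀ < 1/k₀ : interior of piece k₀ (junction on the left already excluded)
      have hmem : Ioo (1 / ((k₀:ℝ) + 1)) (1 / (k₀:ℝ)) ∈ nhds c₀ := by
        apply Ioo_mem_nhds
        · rw [div_lt_iff₀ (by positivity)]; nlinarith
        · rw [lt_div_iff₀ (by positivity : (0:ℝ) < (k₀:ℝ))]; linarith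
      rw [← continuousWithinAt_inter hmem]
      apply ((continuous_Gk k₀ hk₀1).continuousAt.continuousWithinAt).congr
      · intro c hc
        obtain ⟨-, hl, hr⟩ := hc
        apply hAB c
        · rw [div_lt_iff₀ (by positivity)] at hl
          nlinarith
        · rw [lt_div_iff₀ (by positivity : (0:ℝ) < (k₀:ℝ))] at hr
          linarith
      · exact hAB c₀ hb1' hb2

end PiN3

end


noncomputable section

namespace PiN3

open Finset

/-- the upper-arc point: one big coordinate, `m` coordinates equal to `t`. -/
def upt (m : ℕ) (t : ℝ) : Fin (m + 1) → ℝ := Fin.cons (1 - (m:ℝ) * t) (fun _ => t)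

lemma sum_upt (m : ℕ) (t : ℝ) (f : ℝ → ℝ) :
    ∑ i, f (upt m t i) = f (1 - (m:ℝ) * t) + (m:ℝ) * f t := by
  rw [Fin.sum_univ_succ]
  simp [upt, Finset.sum_const, nsmul_eq_mul]

lemma upt_mem {m : ℕ} {t : ℝ} (ht0 : 0 ≤ t) (htm : ((m:ℝ) + 1) * t ≤ 1) :
    upt m t ∈ stdSimplex ℝ (Fin (m + 1)) := by
  constructor
  · intro i
    refine Fin.cases ?_ ?_ i
    · simp only [upt, Fin.cons_zero]
      nlinarith
    · intro j
      simpa [upt] using ht0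
  · have := sum_upt m t (fun w => w)
    rw [this]
    ring

lemma upt_p2 (m : ℕ) (t : ℝ) : ∑ i, (upt m t i) ^ 2 = (m:ℝ) * t ^ 2 + (1 - (m:ℝ) * t) ^ 2 := by
  rw [sum_upt m t (fun w => w ^ 2)]
  ring

lemma upt_p3 (m : ℕ) (t : ℝ) : ∑ i, (upt m t i) ^ 3 = (m:ℝ) * t ^ 3 + (1 - (m:ℝ) * t) ^ 3 := by
  rw [sum_upt m t (fun w => w ^ 3)]
  ring

/-- the lower-arc point in dimension `n`: `k` coordinates `t`, one `1 - k t`, rest `0`. -/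
def lpt (n k : ℕ) (t : ℝ) : Fin n → ℝ := fun i =>
  if (i:ℕ) < k then t else if (i:ℕ) = k then 1 - (k:ℝ) * t else 0

lemma sum_lpt {n k : ℕ} (hkn : k < n) (t : ℝ) (f : ℝ → ℝ) (hf : f 0 = 0) :
    ∑ i, f (lpt n k t i) = (k:ℝ) * f t + f (1 - (k:ℝ) * t) := by
  have h := Fin.sum_univ_eq_sum_range
    (fun j => f (if j < k then t else if j = k then 1 - (k:ℝ) * t else 0)) n
  have heq : ∑ i, f (lpt n k t i)
      = ∑ i : Fin n, (fun j => f (if j < k then t else if j = k then 1 - (k:ℝ) * t else 0)) (i:ℕ) :=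
    rfl
  rw [heq, h, ← Finset.sum_range_add_sum_Ico _ (le_of_lt hkn)]
  have h1 : ∑ j ∈ Finset.range k, f (if j < k then t else if j = k then 1 - (k:ℝ) * t else 0)
      = (k:ℝ) * f t := by
    rw [Finset.sum_congr rfl (fun j hj => by
      rw [if_pos (Finset.mem_range.1 hj)])]
    rw [Finset.sum_const, Finset.card_range, nsmul_eq_mul]
  have h2 : ∑ j ∈ Finset.Ico k n, f (if j < k then t else if j = k then 1 - (k:ℝ) * t else 0)
      = f (1 - (k:ℝ) * t) := by
    rw [Finset.sum_eq_sum_Ico_succ_bot hkn]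
    rw [if_neg (lt_irrefl k), if_pos rfl]
    have h3 : ∑ j ∈ Finset.Ico (k+1) n, f (if j < k then t else if j = k then 1 - (k:ℝ) * t else 0)
        = 0 := by
      apply Finset.sum_eq_zero
      intro j hj
      rw [Finset.mem_Ico] at hj
      rw [if_neg (by omega), if_neg (by omega), hf]
    rw [h3]
    ring
  rw [h1, h2]

lemma lpt_mem {n k : ℕ} (hkn : k < n) {t : ℝ} (h1 : 1 ≤ ((k:ℝ) + 1) * t) (h2 : (k:ℝ) * t ≤ 1) :
    lpt n k t ∈ stdSimplex ℝ (Fin n) := by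
  have hk0 : (0:ℝ) ≤ (k:ℝ) := Nat.cast_nonneg k
  have ht0 : 0 ≤ t := by nlinarith
  constructor
  · intro i
    unfold lpt
    split
    · exact ht0
    · split
      · linarith
      · exact le_rfl
  · calc ∑ x, lpt n k t x = (k:ℝ) * t + (1 - (k:ℝ) * t) := sum_lpt hkn t (fun w => w) rfl
      _ = 1 := by ring

lemma lpt_p2 {n k : ℕ} (hkn : k < n) (t : ℝ) :
    ∑ i, (lpt n k t i) ^ 2 = (k:ℝ) * t ^ 2 + (1 - (k:ℝ) * t) ^ 2 :=
  sum_lpt hkn t (fun w => w ^ 2) (by norm_num)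

lemma lpt_p3 {n k : ℕ} (hkn : k < n) (t : ℝ) :
    ∑ i, (lpt n k t i) ^ 3 = (k:ℝ) * t ^ 3 + (1 - (k:ℝ) * t) ^ 3 :=
  sum_lpt hkn t (fun w => w ^ 3) (by norm_num)

/-- `c`-version of the maximum theorem. -/
lemma p3_le_F {m : ℕ} (hm : 2 ≤ m) {y : Fin m → ℝ} (hy : y ∈ stdSimplex ℝ (Fin m)) :
    ∑ i, y i ^ 3 ≤ F m (∑ i, y i ^ 2) := by
  obtain ⟨hp1, hp2⟩ := p2_bounds hy
  obtain ⟨h1, h2, h3⟩ := um_spec hm hp1 hp2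
  have := p3_max hy.2 h2 h3.symm
  unfold F
  linarith

/-- `G ≤ F` on admissible fibers. -/
lemma G_le_F {m : ℕ} (hm : 2 ≤ m) {c : ℝ} (hc1 : 1 ≤ (m:ℝ) * c) (hc2 : c ≤ 1) :
    G c ≤ F m c := by
  obtain ⟨m', rfl⟩ : ∃ m', m = m' + 1 := ⟨m - 1, by omega⟩
  obtain ⟨h1, h2, h3⟩ := um_spec hm hc1 hc2
  set t := um (m' + 1) c with ht
  have hmem : upt m' t ∈ stdSimplex ℝ (Fin (m' + 1)) := by
    apply upt_mem h1
    push_cast at h2 ⊢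
    linarith
  have hp2 : ∑ i, (upt m' t i) ^ 2 = c := by
    rw [upt_p2]
    unfold phi at h3
    push_cast at h3
    linarith
  have hmin := p3_min hmem
  have hmax := p3_le_F hm hmem
  rw [hp2] at hmin hmax
  linarith

end PiN3

end


noncomputable section

namespace PiN3

open Finset Set

theorem coverage (m : ℕ) (hm : 1 ≤ m) : ∀ c d : ℝ, 1 ≤ ((m:ℝ) + 1) * c → c ≤ 1 →
    G c ≤ d → d ≤ F (m + 1) c →
    ∃ x ∈ stdSimplex ℝ (Fin (m + 1)), (∑ i, x i ^ 2) = c ∧ (∑ i, x i ^ 3) = d := by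
  induction m, hm using Nat.le_induction with
  | base =>
    intro c d hc1 hc2 hd1 hd2
    have hc1' : 1 ≤ ((2:ℕ):ℝ) * c := by push_cast at hc1 ⊢; linarith
    obtain ⟨h1, h2, h3⟩ := um_spec (le_refl 2) hc1' hc2
    set t := um 2 c with ht
    have h2' : 2 * t ≤ 1 := by push_cast at h2; linarith
    have h3' : t ^ 2 + (1 - t) ^ 2 = c := by
      unfold phi at h3; push_cast at h3; linarith
    have hrep : IsRep c 1 (1 - t) t := by
      refine ⟨le_rfl, h1, by linarith, by push_cast; ring, ?_⟩
      push_cast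
      linarith
    have hGv : G c = rval 1 (1 - t) t := G_eq_of_rep hrep
    have hFv : F 2 c = rval 1 (1 - t) t := by
      unfold F rval
      push_cast
      ring
    have hdv : d = G c := by
      have : F (1 + 1) c = G c := by rw [show (1+1) = 2 from rfl, hFv, hGv]
      linarith [hd1, hd2, this]
    refine ⟨upt 1 t, upt_mem h1 (by push_cast; linarith), ?_, ?_⟩
    · rw [upt_p2]
      push_cast
      linarith
    · rw [upt_p3, hdv, hGv]
      unfold rval
      push_cast
      ring
  | succ m hm IH =>
    intro c d hc1 hc2 hd1 hd2
    have hmR : (1:ℝ) ≤ (m:ℝ) := Nat.one_le_cast.2 hm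
    -- cast clean-up
    have hc1' : 1 ≤ ((m:ℝ) + 2) * c := by push_cast at hc1; linarith
    have hc1'' : 1 ≤ ((m + 2 : ℕ):ℝ) * c := by push_cast; linarith
    obtain ⟨h1, h2, h3⟩ := um_spec (by omega : 2 ≤ m + 2) hc1'' hc2
    set t := um (m + 2) c with ht
    have ht2 : ((m:ℝ) + 2) * t ≤ 1 := by push_cast at h2; linarith
    have hc_eq : c = ((m:ℝ) + 1) * t ^ 2 + (1 - ((m:ℝ) + 1) * t) ^ 2 := by
      unfold phi at h3; push_cast at h3; linarith
    have ht1 : t < 1 := by nlinarith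
    -- the left endpoint of the slice interval
    set B := (((m:ℝ) + 1) * ((m:ℝ) + 2) * t - (m:ℝ)) / ((m:ℝ) + 2) with hB
    set b₀ := max 0 B with hb₀
    have hb₀0 : 0 ≤ b₀ := le_max_left _ _
    have hb₀t : b₀ ≤ t := by
      apply max_le h1
      rw [hB, div_le_iff₀ (by positivity)]
      nlinarith
    have hζb₀ : (1 - b₀) ^ 2 ≤ ((m:ℝ) + 1) * (c - b₀ ^ 2) := by
      rcases le_or_gt B 0 with hB0 | hB0
      · rw [hb₀, max_eq_left hB0]
        have hBnum : ((m:ℝ) + 1) * ((m:ℝ) + 2) * t - (m:ℝ) ≤ 0 := by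
          rw [hB, div_nonpos_iff] at hB0
          rcases hB0 with ⟨h', h''⟩ | ⟨h', h''⟩
          · nlinarith
          · exact h'
        have hf2 : ((m:ℝ) + 1) * t - 1 ≤ 0 := by nlinarith
        nlinarith [mul_nonneg (by linarith : (0:ℝ) ≤ (m:ℝ) - ((m:ℝ)+1) * ((m:ℝ)+2) * t)
          (by linarith : (0:ℝ) ≤ 1 - ((m:ℝ)+1) * t)]
      · rw [hb₀, max_eq_right hB0.le]
        apply le_of_eq
        rw [hB, hc_eq]
        have h0 : ((m:ℝ) + 2) ≠ 0 := by positivity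
        field_simp
        ring
    have hP1 : ∀ b, b₀ ≤ b → b ≤ t → (1 - b) ^ 2 ≤ ((m:ℝ) + 1) * (c - b ^ 2) := by
      intro b hb1 hb2
      nlinarith [mul_nonneg (by linarith : (0:ℝ) ≤ b - b₀)
        (by nlinarith : (0:ℝ) ≤ 2 - ((m:ℝ) + 2) * (b + b₀))]
    have hP2 : ∀ b, b₀ ≤ b → b ≤ t → c - b ^ 2 ≤ (1 - b) ^ 2 := by
      intro b hb1 hb2
      have h3t : (0:ℝ) ≤ 2 - ((m:ℝ) + 3) * t := by nlinarith
      have hχt : c - t ^ 2 ≤ (1 - t) ^ 2 := by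
        nlinarith [mul_nonneg (mul_nonneg (by positivity : (0:ℝ) ≤ (m:ℝ)) h1) h3t]
      nlinarith [mul_nonneg (by linarith : (0:ℝ) ≤ t - b) (by nlinarith : (0:ℝ) ≤ 1 - b - t)]
    set ψ : ℝ → ℝ := fun b => (c - b ^ 2) / (1 - b) ^ 2 with hψdef
    have hblt1 : ∀ b, b₀ ≤ b → b ≤ t → b < 1 := fun b hb1 hb2 => lt_of_le_of_lt hb2 ht1
    have hψ1 : ∀ b, b₀ ≤ b → b ≤ t → 1 ≤ ((m:ℝ) + 1) * ψ b := by
      intro b hb1 hb2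
      have hden : (0:ℝ) < (1 - b) ^ 2 := pow_pos (by linarith [hblt1 b hb1 hb2]) 2
      show 1 ≤ ((m:ℝ) + 1) * ((c - b ^ 2) / (1 - b) ^ 2)
      rw [← mul_div_assoc, le_div_iff₀ hden]
      nlinarith [hP1 b hb1 hb2]
    have hψ2 : ∀ b, b₀ ≤ b → b ≤ t → ψ b ≤ 1 := by
      intro b hb1 hb2
      have hden : (0:ℝ) < (1 - b) ^ 2 := pow_pos (by linarith [hblt1 b hb1 hb2]) 2
      show (c - b ^ 2) / (1 - b) ^ 2 ≤ 1
      rw [div_le_one hden]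
      exact hP2 b hb1 hb2
    have hψ0 : ∀ b, b₀ ≤ b → b ≤ t → 0 < ψ b := by
      intro b hb1 hb2
      have := hψ1 b hb1 hb2
      nlinarith
    -- the boundary functions of the slice
    set lo : ℝ → ℝ := fun b => b ^ 3 + (1 - b) ^ 3 * G (ψ b) with hlodef
    have hψcont : ContinuousOn ψ (Icc b₀ t) := by
      apply ContinuousOn.div
      · fun_prop
      · fun_prop
      · intro b hb
        exact (pow_pos (by linarith [hblt1 b hb.1 hb.2] : (0:ℝ) < 1 - b) 2).ne'
    have hcont_lo : ContinuousOn lo (Icc b₀ t) := by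
      apply ContinuousOn.add (by fun_prop)
      apply ContinuousOn.mul (by fun_prop)
      exact continuousOn_G.comp hψcont (fun b hb => ⟨hψ0 b hb.1 hb.2, hψ2 b hb.1 hb.2⟩)
    have hGF' : ∀ b, b₀ ≤ b → b ≤ t → G (ψ b) ≤ F (m + 1) (ψ b) := by
      intro b hb1 hb2
      apply G_le_F (by omega)
      · push_cast
        exact hψ1 b hb1 hb2
      · exact hψ2 b hb1 hb2
    -- value of lo at b₀
    have hlo_b₀ : lo b₀ = G c := by
      rcases le_or_gt B 0 with hB0 | hB0
      · have hb₀v : b₀ = 0 := by rw [hb₀, max_eq_left hB0]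
        rw [hlodef]
        simp only [hb₀v]
        have : ψ 0 = c := by rw [hψdef]; norm_num
        rw [this]
        norm_num
      · have hb₀v : b₀ = B := by rw [hb₀, max_eq_right hB0.le]
        have hζeq : ((m:ℝ) + 1) * (c - b₀ ^ 2) = (1 - b₀) ^ 2 := by
          rw [hb₀v, hB, hc_eq]
          field_simp
          ring
        have hb₀le : ((m:ℝ) + 2) * b₀ ≤ 1 := by nlinarith
        set w := (1 - b₀) / ((m:ℝ) + 1) with hw
        have hrep : IsRep c (m + 1) w b₀ := by
          refine ⟨by omega, hb₀0, ?_, ?_, ?_⟩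
          · rw [hw, le_div_iff₀ (by positivity)]
            nlinarith
          · rw [hw]
            field_simp; push_cast; ring
          · rw [hw]
            have hm10 : ((m:ℝ) + 1) ≠ 0 := by positivity
            field_simp
            push_cast; linarith [show ((m:ℝ)+1) * (((m:ℝ)+1) * (c - b₀^2)) = ((m:ℝ)+1) * (1-b₀)^2 by rw [hζeq]]
        have hψb₀ : ψ b₀ = 1 / ((m:ℝ) + 1) := by
          have hden : (0:ℝ) < (1 - b₀) ^ 2 := pow_pos (by linarith [hblt1 b₀ le_rfl hb₀t]) 2
          show (c - b₀ ^ 2) / (1 - b₀) ^ 2 = 1 / ((m:ℝ) + 1)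
          rw [div_eq_div_iff hden.ne' (by positivity : ((m:ℝ) + 1) ≠ 0)]
          linear_combination hζeq
        have hGψ : G (ψ b₀) = (1 / ((m:ℝ) + 1)) ^ 2 := by
          rw [hψb₀]
          rw [show ((m:ℝ) + 1) = ((m + 1 : ℕ):ℝ) by push_cast; ring]
          exact G_recip (by omega)
        show b₀ ^ 3 + (1 - b₀) ^ 3 * G (ψ b₀) = G c
        rw [hGψ, G_eq_of_rep hrep]
        unfold rval
        rw [hw]
        push_cast
        have hm10 : ((m:ℝ) + 1) ≠ 0 := by positivity
        field_simp
        ring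
    -- the top of the slice at b = t covers F (m+2) c
    have hhit : F (m + 2) c ≤ t ^ 3 + (1 - t) ^ 3 * F (m + 1) (ψ t) := by
      have hden : (0:ℝ) < 1 - t := by linarith
      set y : Fin (m + 1) → ℝ := fun i => (Fin.cons (1 - ((m:ℝ) + 1) * t) (fun _ : Fin m => t) : Fin (m+1) → ℝ) i / (1 - t) with hy
      have hysum : ∑ i, y i = 1 := by
        show ∑ i, (Fin.cons (1 - ((m:ℝ) + 1) * t) (fun _ : Fin m => t) : Fin (m+1) → ℝ) i / (1 - t) = 1
        rw [← Finset.sum_div]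
        rw [Fin.sum_univ_succ]
        simp only [Fin.cons_zero, Fin.cons_succ]
        rw [Finset.sum_const, Finset.card_univ, Fintype.card_fin, nsmul_eq_mul]
        field_simp
        ring
      have hymem : y ∈ stdSimplex ℝ (Fin (m + 1)) := by
        refine ⟨?_, hysum⟩
        intro i
        show 0 ≤ (Fin.cons (1 - ((m:ℝ) + 1) * t) (fun _ : Fin m => t) : Fin (m+1) → ℝ) i / (1 - t)
        apply div_nonneg _ hden.le
        refine Fin.cases ?_ ?_ i
        · simp only [Fin.cons_zero]
          nlinarith
        · intro j
          simpa using h1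
      have hyp2 : ∑ i, y i ^ 2 = ψ t := by
        show ∑ i, ((Fin.cons (1 - ((m:ℝ) + 1) * t) (fun _ : Fin m => t) : Fin (m+1) → ℝ) i / (1 - t)) ^ 2
            = (c - t ^ 2) / (1 - t) ^ 2
        have hcongr : ∀ i : Fin (m + 1),
            ((Fin.cons (1 - ((m:ℝ) + 1) * t) (fun _ : Fin m => t) : Fin (m+1) → ℝ) i / (1 - t)) ^ 2
            = (Fin.cons (1 - ((m:ℝ) + 1) * t) (fun _ : Fin m => t) : Fin (m+1) → ℝ) i ^ 2 / (1 - t) ^ 2 :=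
          fun i => by rw [div_pow]
        rw [Finset.sum_congr rfl (fun i _ => hcongr i), ← Finset.sum_div]
        rw [Fin.sum_univ_succ]
        simp only [Fin.cons_zero, Fin.cons_succ]
        rw [Finset.sum_const, Finset.card_univ, Fintype.card_fin, nsmul_eq_mul]
        rw [div_eq_div_iff (pow_ne_zero 2 (by linarith : (1:ℝ) - t ≠ 0))
          (pow_ne_zero 2 (by linarith : (1:ℝ) - t ≠ 0))]
        linear_combination (-((1:ℝ)-t)^2) * hc_eq
      have hyp3 : ∑ i, y i ^ 3 = ((m:ℝ) * t ^ 3 + (1 - ((m:ℝ) + 1) * t) ^ 3) / (1 - t) ^ 3 := by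
        show ∑ i, ((Fin.cons (1 - ((m:ℝ) + 1) * t) (fun _ : Fin m => t) : Fin (m+1) → ℝ) i / (1 - t)) ^ 3
            = ((m:ℝ) * t ^ 3 + (1 - ((m:ℝ) + 1) * t) ^ 3) / (1 - t) ^ 3
        have hcongr : ∀ i : Fin (m + 1),
            ((Fin.cons (1 - ((m:ℝ) + 1) * t) (fun _ : Fin m => t) : Fin (m+1) → ℝ) i / (1 - t)) ^ 3
            = (Fin.cons (1 - ((m:ℝ) + 1) * t) (fun _ : Fin m => t) : Fin (m+1) → ℝ) i ^ 3 / (1 - t) ^ 3 :=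
          fun i => by rw [div_pow]
        rw [Finset.sum_congr rfl (fun i _ => hcongr i), ← Finset.sum_div]
        rw [Fin.sum_univ_succ]
        simp only [Fin.cons_zero, Fin.cons_succ]
        rw [Finset.sum_const, Finset.card_univ, Fintype.card_fin, nsmul_eq_mul]
        ring
      have hFm2 : F (m + 2) c = ((m:ℝ) + 1) * t ^ 3 + (1 - ((m:ℝ) + 1) * t) ^ 3 := by
        unfold F
        rw [← ht]
        push_cast
        ring
      have hle := p3_le_F (by omega : 2 ≤ m + 1) hymem
      rw [hyp2, hyp3] at hle
      rw [hFm2]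
      rw [div_le_iff₀ (pow_pos (by linarith : (0:ℝ) < 1 - t) 3)] at hle
      nlinarith [hle]
    -- choose the slice parameter b⋆ and the sub-fiber value d'
    have hsel : ∃ b', (b₀ ≤ b' ∧ b' ≤ t) ∧ ∃ d', G (ψ b') ≤ d' ∧ d' ≤ F (m + 1) (ψ b') ∧
        d = b' ^ 3 + (1 - b') ^ 3 * d' := by
      rcases le_or_gt d (lo t) with hcase | hcase
      · have hsub := intermediate_value_Icc hb₀t hcont_lo
        have hd_mem : d ∈ Icc (lo b₀) (lo t) := ⟨by rw [hlo_b₀]; exact hd1, hcase⟩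
        obtain ⟨b', hb'I, hb'⟩ := hsub hd_mem
        exact ⟨b', ⟨hb'I.1, hb'I.2⟩, G (ψ b'), le_rfl, hGF' b' hb'I.1 hb'I.2, hb'.symm⟩
      · have hden : (0:ℝ) < (1 - t) ^ 3 := pow_pos (by linarith) 3
        refine ⟨t, ⟨hb₀t, le_rfl⟩, (d - t ^ 3) / (1 - t) ^ 3, ?_, ?_, ?_⟩
        · rw [le_div_iff₀ hden]
          have hcase' : t ^ 3 + (1 - t) ^ 3 * G (ψ t) < d := hcase
          nlinarith [hcase']
        · rw [div_le_iff₀ hden]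
          have hd2' : d ≤ F (m + 2) c := hd2
          nlinarith [le_trans hd2' hhit]
        · have h1t : ((1:ℝ) - t) ≠ 0 := by linarith
          field_simp; ring

    obtain ⟨b', ⟨hb'1, hb'2⟩, d', hd'1, hd'2, hdec⟩ := hsel
    have hblt1 : b' < 1 := hblt1 b' hb'1 hb'2
    obtain ⟨y, hymem, hyp2, hyp3⟩ := IH (ψ b') d' (by push_cast; exact hψ1 b' hb'1 hb'2)
      (hψ2 b' hb'1 hb'2) hd'1 hd'2
    refine ⟨Fin.cons b' (fun i => (1 - b') * y i), ⟨?_, ?_⟩, ?_, ?_⟩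
    · intro i
      refine Fin.cases ?_ ?_ i
      · simpa using le_trans hb₀0 hb'1
      · intro j
        simp only [Fin.cons_succ]
        exact mul_nonneg (by linarith) (hymem.1 j)
    · rw [Fin.sum_univ_succ]
      simp only [Fin.cons_zero, Fin.cons_succ]
      rw [← Finset.mul_sum, hymem.2]
      ring
    · rw [Fin.sum_univ_succ]
      simp only [Fin.cons_zero, Fin.cons_succ]
      have : ∀ j : Fin (m + 1), ((1 - b') * y j) ^ 2 = (1 - b') ^ 2 * y j ^ 2 := fun j => by ring
      rw [Finset.sum_congr rfl (fun j _ => this j), ← Finset.mul_sum, hyp2]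
      show b' ^ 2 + (1 - b') ^ 2 * ((c - b' ^ 2) / (1 - b') ^ 2) = c
      have hden : ((1:ℝ) - b') ≠ 0 := by linarith
      field_simp; ring
    · rw [Fin.sum_univ_succ]
      simp only [Fin.cons_zero, Fin.cons_succ]
      have : ∀ j : Fin (m + 1), ((1 - b') * y j) ^ 3 = (1 - b') ^ 3 * y j ^ 3 := fun j => by ring
      rw [Finset.sum_congr rfl (fun j _ => this j), ← Finset.mul_sum, hyp3, hdec]

end PiN3

end


noncomputable section

namespace PiN3

open Finset Set

variable {q : ℕ}

/-- the simplex image. -/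
def Pi3 (n : ℕ) : Set (ℝ × ℝ) :=
  (fun x : Fin n → ℝ => (∑ j, x j ^ 2, ∑ j, x j ^ 3)) '' stdSimplex ℝ (Fin n)

lemma Pi3_compact (n : ℕ) : IsCompact (Pi3 n) :=
  (isCompact_stdSimplex _ _).image ((continuous_psum 2).prodMk (continuous_psum 3))

/-- basic bounds for points of the image. -/
lemma Pi3_mem_bounds {n : ℕ} (hn : 2 ≤ n) {z : ℝ × ℝ} (hz : z ∈ Pi3 n) :
    1 ≤ ((n:ℝ)) * z.1 ∧ z.1 ≤ 1 ∧ G z.1 ≤ z.2 ∧ z.2 ≤ F n z.1 := by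
  obtain ⟨x, hx, rfl⟩ := hz
  obtain ⟨h1, h2⟩ := p2_bounds hx
  exact ⟨h1, h2, p3_min hx, p3_le_F hn hx⟩

/-- `p₂ ∈ [1/n, 1]` forces `F = G` at the endpoints of the range. -/
lemma F_eq_G_left (hq : 2 ≤ q) : F (q + 1) (1 / ((q:ℝ) + 1)) = G (1 / ((q:ℝ) + 1)) := by
  have hq0 : ((q:ℝ)) ≠ 0 := by positivity
  have hq10 : ((q:ℝ) + 1) ≠ 0 := by positivity
  have hum : um (q + 1) (1 / ((q:ℝ) + 1)) = 1 / ((q:ℝ) + 1) := by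
    unfold um
    have harg : ((((q:ℕ) + 1 :ℕ):ℝ) - 1) * (((q + 1 :ℕ):ℝ) * (1 / ((q:ℝ) + 1)) - 1) = 0 := by
      push_cast
      field_simp; ring
    rw [harg, Real.sqrt_zero]
    push_cast
    field_simp; ring_nf; exact mul_inv_cancel₀ hq0
  rw [show G (1 / ((q:ℝ) + 1)) = (1 / ((q:ℝ) + 1)) ^ 2 by
    rw [show ((q:ℝ) + 1) = ((q + 1 : ℕ):ℝ) by push_cast; ring]
    exact G_recip (by omega)]
  unfold F
  rw [hum]
  push_cast
  field_simp
  ring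

lemma F_eq_G_right (hq : 2 ≤ q) : F (q + 1) 1 = G 1 := by
  have hq0 : ((q:ℝ)) ≠ 0 := by positivity
  have hum : um (q + 1) 1 = 0 := by
    unfold um
    have harg : ((((q:ℕ) + 1 :ℕ):ℝ) - 1) * (((q + 1 :ℕ):ℝ) * 1 - 1) = (q:ℝ) ^ 2 := by
      push_cast
      ring
    rw [harg, Real.sqrt_sq (by positivity)]
    push_cast
    ring_nf
  have hG1 : G 1 = 1 := by
    have := G_recip (le_refl 1)
    norm_num at this
    exact this
  unfold F
  rw [hum, hG1]
  push_cast
  ring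

end PiN3

end

/-- The parametrizing map of the upper boundary arc `U_{n-1}` of `Π_{n,3}`. -/
noncomputable def upperArcMap (n : ℕ) (t : ℝ) : ℝ × ℝ :=
  (((n : ℝ) - 1) * t ^ 2 + (1 - ((n : ℝ) - 1) * t) ^ 2,
   ((n : ℝ) - 1) * t ^ 3 + (1 - ((n : ℝ) - 1) * t) ^ 3)

/-- The parametrizing map of the lower boundary arc `L_k` of `Π_{n,3}`. -/
noncomputable def lowerArcMap (k : ℕ) (t : ℝ) : ℝ × ℝ :=
  ((k : ℝ) * t ^ 2 + (1 - (k : ℝ) * t) ^ 2, (k : ℝ) * t ^ 3 + (1 - (k : ℝ) * t) ^ 3)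



noncomputable section

namespace PiN3

open Finset Set

variable {q : ℕ}

lemma upper_subset (hq : 2 ≤ q) :
    upperArcMap (q + 1) '' Icc (0:ℝ) (1 / ((q + 1 : ℕ):ℝ)) ⊆ Pi3 (q + 1) := by
  rintro z ⟨t, ⟨ht0, ht1⟩, rfl⟩
  have hq1 : (0:ℝ) < ((q + 1 : ℕ):ℝ) := by positivity
  rw [le_div_iff₀ hq1] at ht1
  refine ⟨upt q t, upt_mem ht0 (by push_cast at ht1 ⊢; linarith), ?_⟩
  rw [Prod.ext_iff]
  constructor
  · show (∑ j, upt q t j ^ 2) = (upperArcMap (q+1) t).1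
    rw [upt_p2]
    unfold upperArcMap
    push_cast
    ring
  · show (∑ j, upt q t j ^ 3) = (upperArcMap (q+1) t).2
    rw [upt_p3]
    unfold upperArcMap
    push_cast
    ring

lemma lower_subset (hq : 2 ≤ q) {k : ℕ} (hk : k ∈ Finset.Icc 1 q) :
    lowerArcMap k '' Icc (1 / ((k:ℝ) + 1)) (1 / (k:ℝ)) ⊆ Pi3 (q + 1) := by
  obtain ⟨hk1, hk2⟩ := Finset.mem_Icc.1 hk
  rintro z ⟨t, ⟨ht1, ht2⟩, rfl⟩
  have hkR : (0:ℝ) < (k:ℝ) := by exact_mod_cast Nat.pos_of_ne_zero (by omega)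
  rw [div_le_iff₀ (by positivity)] at ht1
  rw [le_div_iff₀ hkR] at ht2
  have hkn : k < q + 1 := by omega
  refine ⟨lpt (q+1) k t, lpt_mem hkn (by linarith) (by linarith), ?_⟩
  rw [Prod.ext_iff]
  exact ⟨lpt_p2 hkn t, lpt_p3 hkn t⟩

lemma upper_not_interior (hq : 2 ≤ q) {t : ℝ} (ht : t ∈ Icc (0:ℝ) (1 / ((q + 1 : ℕ):ℝ))) :
    upperArcMap (q + 1) t ∉ interior (Pi3 (q + 1)) := by
  intro hint
  rw [mem_interior_iff_mem_nhds, Metric.mem_nhds_iff] at hint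
  obtain ⟨ε, hε, hball⟩ := hint
  set z := upperArcMap (q + 1) t with hz
  have hz' : (z.1, z.2 + ε / 2) ∈ Metric.ball z ε := by
    rw [Metric.mem_ball, Prod.dist_eq]
    have h1 : dist z.1 z.1 = 0 := dist_self _
    have h2 : dist (z.2 + ε/2) z.2 = ε/2 := by
      rw [Real.dist_eq]
      rw [show z.2 + ε/2 - z.2 = ε/2 by ring, abs_of_pos (by linarith)]
    simp only [h1, h2]
    rw [max_eq_right (by linarith)]
    linarith
  obtain ⟨x, hx, hxe⟩ := hball hz'
  rw [Prod.ext_iff] at hxe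
  obtain ⟨hxe1, hxe2⟩ := hxe
  simp only at hxe1 hxe2
  have ht2 : ((q + 1 : ℕ):ℝ) * t ≤ 1 := by
    have := ht.2
    rw [le_div_iff₀ (by positivity : (0:ℝ) < ((q + 1 : ℕ):ℝ))] at this
    linarith
  have hmax := p3_max hx.2 ht2 (by
    rw [hxe1]
    show z.1 = _
    rw [hz]
    unfold upperArcMap
    push_cast
    ring)
  rw [hxe2] at hmax
  have : z.2 = ((q + 1 :ℕ):ℝ) * t ^ 3 - t^3 + (1 - (((q + 1 :ℕ):ℝ) - 1) * t) ^ 3 := by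
    rw [hz]
    unfold upperArcMap
    push_cast
    ring
  push_cast at hmax this
  linarith

lemma lower_not_interior (hq : 2 ≤ q) {k : ℕ} (hk : k ∈ Finset.Icc 1 q) {t : ℝ}
    (ht : t ∈ Icc (1 / ((k:ℝ) + 1)) (1 / (k:ℝ))) :
    lowerArcMap k t ∉ interior (Pi3 (q + 1)) := by
  intro hint
  obtain ⟨hk1, hk2⟩ := Finset.mem_Icc.1 hk
  have hkR : (0:ℝ) < (k:ℝ) := by exact_mod_cast Nat.pos_of_ne_zero (by omega)
  obtain ⟨ht1, ht2⟩ := ht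
  rw [div_le_iff₀ (by positivity)] at ht1
  rw [le_div_iff₀ hkR] at ht2
  rw [mem_interior_iff_mem_nhds, Metric.mem_nhds_iff] at hint
  obtain ⟨ε, hε, hball⟩ := hint
  set z := lowerArcMap k t with hz
  have hrep : IsRep z.1 k t (1 - (k:ℝ) * t) := by
    refine ⟨hk1, by linarith, by linarith, by ring, rfl⟩
  have hGz : G z.1 = z.2 := by
    rw [G_eq_of_rep hrep]
    unfold rval
    show _ = (lowerArcMap k t).2
    unfold lowerArcMap
    ring
  have hz' : (z.1, z.2 - ε / 2) ∈ Metric.ball z ε := by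
    rw [Metric.mem_ball, Prod.dist_eq]
    have h1 : dist z.1 z.1 = 0 := dist_self _
    have h2 : dist (z.2 - ε/2) z.2 = ε/2 := by
      rw [Real.dist_eq]
      rw [show z.2 - ε/2 - z.2 = -(ε/2) by ring, abs_neg, abs_of_pos (by linarith)]
    simp only [h1, h2]
    rw [max_eq_right (by linarith)]
    linarith
  obtain ⟨x, hx, hxe⟩ := hball hz'
  rw [Prod.ext_iff] at hxe
  obtain ⟨hxe1, hxe2⟩ := hxe
  simp only at hxe1 hxe2
  have hmin := p3_min hx
  rw [hxe1, hxe2, hGz] at hmin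
  linarith

end PiN3

end


noncomputable section

namespace PiN3

open Finset Set

variable {q : ℕ}

/-- the union of the boundary arcs. -/
def Arcs (q : ℕ) : Set (ℝ × ℝ) :=
  upperArcMap (q + 1) '' Icc (0:ℝ) (1 / ((q + 1 : ℕ):ℝ)) ∪
    ⋃ k ∈ Finset.Icc 1 q, lowerArcMap k '' Icc (1 / ((k:ℝ) + 1)) (1 / (k:ℝ))

lemma notArc_interior (hq : 2 ≤ q) {z : ℝ × ℝ} (hz : z ∈ Pi3 (q + 1)) (hzA : z ∉ Arcs q) :
    z ∈ interior (Pi3 (q + 1)) := by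
  obtain ⟨h1, h2, h3, h4⟩ := Pi3_mem_bounds (by omega) hz
  set c := z.1 with hc
  set d := z.2 with hd
  have hq1R : (0:ℝ) < ((q + 1 : ℕ):ℝ) := by positivity
  have hc0 : 0 < c := by nlinarith
  -- z is not on the upper arc, so d < F (q+1) c
  have hdF : d < F (q + 1) c := by
    rcases lt_or_eq_of_le h4 with h | h
    · exact h
    · exfalso
      apply hzA
      left
      obtain ⟨hu1, hu2, hu3⟩ := um_spec (by omega : 2 ≤ q + 1) h1 h2
      refine ⟨um (q + 1) c, ⟨hu1, ?_⟩, ?_⟩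
      · rw [le_div_iff₀ hq1R]
        linarith
      · rw [Prod.ext_iff]
        constructor
        · show (upperArcMap (q+1) (um (q+1) c)).1 = c
          calc (upperArcMap (q+1) (um (q+1) c)).1 = phi (q+1) (um (q+1) c) := rfl
            _ = c := hu3
        · show (upperArcMap (q+1) (um (q+1) c)).2 = d
          calc (upperArcMap (q+1) (um (q+1) c)).2 = F (q+1) c := rfl
            _ = d := h.symm
  -- z is not on any lower arc, so G c < d
  have hdG : G c < d := by
    rcases lt_or_eq_of_le h3 with h | h
    · exact h
    · exfalso
      apply hzA
      right
      have hkc1 : 1 ≤ kc c := kc_one_le c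
      have hkcq : kc c ≤ q := by
        have := kc_le (by omega : 2 ≤ q + 1) h1 hc0
        omega
      have hkcR : (0:ℝ) < ((kc c : ℕ):ℝ) := by
        exact_mod_cast Nat.pos_of_ne_zero (by omega)
      obtain ⟨ht1, ht2⟩ := tk_kc_bounds hc0 h2
      have hrep := isRep_kc hc0 h2
      refine Set.mem_biUnion (Finset.mem_Icc.2 ⟨hkc1, hkcq⟩) ?_
      refine ⟨tk (kc c) c, ⟨?_, ?_⟩, ?_⟩
      · rw [div_le_iff₀ (by positivity)]
        linarith
      · rw [le_div_iff₀ hkcR]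
        linarith
      · rw [Prod.ext_iff]
        constructor
        · show (lowerArcMap (kc c) (tk (kc c) c)).1 = c
          have := hrep.2.2.2.2
          unfold lowerArcMap
          simpa using this
        · show (lowerArcMap (kc c) (tk (kc c) c)).2 = d
          rw [← h, G_eq_of_rep hrep]
          unfold lowerArcMap rval
          simp
  -- strict range for c
  have hc1s : 1 < ((q + 1 : ℕ):ℝ) * c := by
    rcases lt_or_eq_of_le h1 with h | h
    · exact h
    · exfalso
      have hcv : c = 1 / ((q:ℝ) + 1) := by
        push_cast at h
        field_simp
        linarith
      have := F_eq_G_left hq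
      rw [← hcv] at this
      linarith
  have hc2s : c < 1 := by
    rcases lt_or_eq_of_le h2 with h | h
    · exact h
    · exfalso
      have := F_eq_G_right hq
      rw [← h] at this
      linarith
  -- continuity setup
  have hGc := continuousOn_G c ⟨hc0, h2⟩
  rw [Metric.continuousWithinAt_iff] at hGc
  obtain ⟨δ₁, hδ₁, hG1⟩ := hGc ((d - G c) / 2) (by linarith)
  have hFc := (continuous_F (q + 1)).continuousAt (x := c)
  rw [Metric.continuousAt_iff] at hFc
  obtain ⟨δ₂, hδ₂, hF2⟩ := hFc ((F (q + 1) c - d) / 2) (by linarith)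
  have hgap : 0 < c - 1 / ((q + 1 : ℕ):ℝ) := by
    rw [sub_pos, div_lt_iff₀ hq1R]
    linarith
  set δ := min (min δ₁ δ₂) (min (min ((d - G c)/2) ((F (q+1) c - d)/2))
      (min (1 - c) (c - 1 / ((q + 1 : ℕ):ℝ)))) with hδ
  have hδ0 : 0 < δ := by
    apply lt_min (lt_min hδ₁ hδ₂)
    apply lt_min (lt_min (by linarith) (by linarith))
    exact lt_min (by linarith) hgap
  rw [mem_interior_iff_mem_nhds, Metric.mem_nhds_iff]
  refine ⟨δ, hδ0, ?_⟩
  intro w hw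
  rw [Metric.mem_ball, Prod.dist_eq, max_lt_iff] at hw
  obtain ⟨hw1, hw2⟩ := hw
  rw [Real.dist_eq, abs_lt] at hw1 hw2
  have hδle1 : δ ≤ δ₁ := le_trans (min_le_left _ _) (min_le_left _ _)
  have hδle2 : δ ≤ δ₂ := le_trans (min_le_left _ _) (min_le_right _ _)
  have hδle3 : δ ≤ (d - G c)/2 :=
    le_trans (min_le_right _ _) (le_trans (min_le_left _ _) (min_le_left _ _))
  have hδle4 : δ ≤ (F (q+1) c - d)/2 :=
    le_trans (min_le_right _ _) (le_trans (min_le_left _ _) (min_le_right _ _))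
  have hδle5 : δ ≤ 1 - c :=
    le_trans (min_le_right _ _) (le_trans (min_le_right _ _) (min_le_left _ _))
  have hδle6 : δ ≤ c - 1 / ((q + 1 : ℕ):ℝ) :=
    le_trans (min_le_right _ _) (le_trans (min_le_right _ _) (min_le_right _ _))
  -- conditions for coverage at w = (c', d')
  have hwc1 : 1 ≤ ((q:ℝ) + 1) * w.1 := by
    have : 1 / ((q + 1 : ℕ):ℝ) ≤ w.1 := by linarith [hw1.1]
    rw [div_le_iff₀ hq1R] at this
    push_cast at this ⊢
    linarith
  have hwc2 : w.1 ≤ 1 := by linarith [hw1.2]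
  have hwc0 : 0 < w.1 := by
    have : (0:ℝ) < 1 / ((q + 1 : ℕ):ℝ) := by positivity
    linarith [hw1.1]
  have hwdist : dist w.1 c < δ := by
    rw [Real.dist_eq, abs_lt]
    constructor <;> linarith [hw1.1, hw1.2]
  have hwG : G w.1 ≤ w.2 := by
    have hd1 := hG1 ⟨hwc0, hwc2⟩ (lt_of_lt_of_le hwdist hδle1)
    rw [Real.dist_eq, abs_lt] at hd1
    linarith [hd1.1, hd1.2, hw2.1]
  have hwF : w.2 ≤ F (q + 1) w.1 := by
    have hd2 := hF2 (lt_of_lt_of_le hwdist hδle2)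
    rw [Real.dist_eq, abs_lt] at hd2
    linarith [hd2.1, hd2.2, hw2.2]
  obtain ⟨x, hx, hp2, hp3⟩ := coverage q (by omega) w.1 w.2 hwc1 hwc2 hwG hwF
  exact ⟨x, hx, by rw [Prod.ext_iff]; exact ⟨hp2, hp3⟩⟩

end PiN3

end

/-- **Theorem 2.17.** For `n ≥ 3`, the boundary of `Π_{n,3} = (p₂,p₃)(Δ_{n-1}) ⊂ ℝ²` is the
union of the upper arc `U_{n-1}` and the lower arcs `L_1,…,L_{n-1}`, whose endpoints are as
stated. -/
theorem boundary_of_Pi_n_3 (n : ℕ) (hn : 3 ≤ n) :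
    (frontier ((fun x : Fin n → ℝ => (∑ j, x j ^ 2, ∑ j, x j ^ 3)) '' stdSimplex ℝ (Fin n))
      = upperArcMap n '' Set.Icc (0 : ℝ) (1 / n) ∪
        ⋃ k ∈ Finset.Icc 1 (n - 1), lowerArcMap k '' Set.Icc (1 / ((k : ℝ) + 1)) (1 / k)) ∧
    upperArcMap n (1 / (n : ℝ)) = (1 / (n : ℝ), 1 / (n : ℝ) ^ 2) ∧
    upperArcMap n 0 = (1, 1) ∧
    ∀ k ∈ Finset.Icc 1 (n - 1),
      lowerArcMap k (1 / ((k : ℝ) + 1)) = (1 / ((k : ℝ) + 1), 1 / ((k : ℝ) + 1) ^ 2) ∧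
      lowerArcMap k (1 / (k : ℝ)) = (1 / (k : ℝ), 1 / (k : ℝ) ^ 2) := by

  obtain ⟨q, rfl⟩ : ∃ q, n = q + 1 := ⟨n - 1, by omega⟩
  have hq : 2 ≤ q := by omega
  have hn0 : ((q + 1 : ℕ):ℝ) ≠ 0 := by positivity
  refine ⟨?_, ?_, ?_, ?_⟩
  · -- the frontier statement
    have hq1 : q + 1 - 1 = q := by omega
    rw [hq1]
    show frontier (PiN3.Pi3 (q + 1)) = PiN3.Arcs q
    rw [(PiN3.Pi3_compact (q + 1)).isClosed.frontier_eq]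
    ext z
    constructor
    · rintro ⟨hz1, hz2⟩
      by_contra hA
      exact hz2 (PiN3.notArc_interior hq hz1 hA)
    · intro hA
      refine ⟨?_, ?_⟩
      · rcases hA with h | h
        · exact PiN3.upper_subset hq h
        · obtain ⟨k, hk, hmem⟩ := Set.mem_iUnion₂.1 h
          exact PiN3.lower_subset hq hk hmem
      · rcases hA with h | h
        · obtain ⟨t, ht, rfl⟩ := h
          exact PiN3.upper_not_interior hq ht
        · obtain ⟨k, hk, hmem⟩ := Set.mem_iUnion₂.1 h
          obtain ⟨t, ht, rfl⟩ := hmem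
          exact PiN3.lower_not_interior hq hk ht
  · unfold upperArcMap
    rw [Prod.ext_iff]
    constructor <;> (simp only; field_simp; ring)
  · unfold upperArcMap
    norm_num
  · intro k hk
    obtain ⟨hk1, hk2⟩ := Finset.mem_Icc.1 hk
    have hkR : ((k:ℕ):ℝ) ≠ 0 := by
      have : (0:ℝ) < (k:ℝ) := by exact_mod_cast Nat.pos_of_ne_zero (by omega)
      positivity
    have hk1R : ((k:ℝ) + 1) ≠ 0 := by positivity
    constructor
    · unfold lowerArcMap
      rw [Prod.ext_iff]
      constructor <;> (simp only; field_simp; ring)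
    · unfold lowerArcMap
      rw [Prod.ext_iff]
      constructor <;> (simp only; field_simp; ring)
end

section
/- The topological boundary of Π_3 ⊂ ℝ² equals {(t, t^{3/2}) : 0 ≤ t ≤ 1} ∪ ⋃_{k≥1} L_k, where for each positive integer k, L_k := {(kt² + (1−kt)², kt³ + (1−kt)³) : 1/(k+1) ≤ t ≤ 1/k}. -/
noncomputable def ellD (k : ℕ) (a : ℝ) : ℝ := Real.sqrt ((k:ℝ) * (((k:ℝ)+1)*a - 1))
noncomputable def ellT (k : ℕ) (a : ℝ) : ℝ := ((k:ℝ) + ellD k a)/((k:ℝ)*((k:ℝ)+1))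
noncomputable def ell (k : ℕ) (a : ℝ) : ℝ :=
  (k:ℝ) * ellT k a ^ 3 + (1 - (k:ℝ) * ellT k a) ^ 3

lemma ell_continuous (k : ℕ) : Continuous (ell k) := by
  unfold ell ellT ellD
  fun_prop

lemma ellT_arc {k : ℕ} (hk : 1 ≤ k) {t : ℝ} (ht : 1/((k:ℝ)+1) ≤ t) :
    ellT k ((k:ℝ) * t ^ 2 + (1 - (k:ℝ) * t) ^ 2) = t := by
  have hK : (1:ℝ) ≤ (k:ℝ) := by exact_mod_cast hk
  have hKpos : (0:ℝ) < (k:ℝ) := by linarith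
  have ht1 : 1 ≤ ((k:ℝ)+1) * t := by
    rw [div_le_iff₀ (by linarith)] at ht; linarith [ht]
  have h1 : (k:ℝ) * (((k:ℝ)+1)*((k:ℝ) * t ^ 2 + (1 - (k:ℝ) * t) ^ 2) - 1)
      = ((k:ℝ)*(((k:ℝ)+1)*t - 1))^2 := by ring
  have h2 : 0 ≤ (k:ℝ)*(((k:ℝ)+1)*t - 1) := mul_nonneg hKpos.le (by linarith)
  unfold ellT ellD
  rw [h1, Real.sqrt_sq h2]
  field_simp
  ring

lemma ell_arc {k : ℕ} (hk : 1 ≤ k) {t : ℝ} (ht : 1/((k:ℝ)+1) ≤ t) :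
    ell k ((lowerArcMap k t).1) = (lowerArcMap k t).2 := by
  simp only [lowerArcMap, ell]
  rw [ellT_arc hk ht]

lemma ellD_sq {k : ℕ} {a : ℝ} (ha : 1/((k:ℝ)+1) ≤ a) (hk : 1 ≤ k) :
    (ellD k a)^2 = (k:ℝ) * (((k:ℝ)+1)*a - 1) := by
  have hK : (1:ℝ) ≤ (k:ℝ) := by exact_mod_cast hk
  have ha1 : 1 ≤ ((k:ℝ)+1) * a := by
    rw [div_le_iff₀ (by linarith)] at ha; linarith
  exact Real.sq_sqrt (mul_nonneg (by linarith) (by linarith))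

lemma ellD_nonneg (k : ℕ) (a : ℝ) : 0 ≤ ellD k a := Real.sqrt_nonneg _

lemma ellD_le_one {k : ℕ} (hk : 1 ≤ k) {a : ℝ} (ha : a ≤ 1/(k:ℝ)) :
    ellD k a ≤ 1 := by
  have hK : (1:ℝ) ≤ (k:ℝ) := by exact_mod_cast hk
  have hKpos : (0:ℝ) < (k:ℝ) := by linarith
  have ha1 : (k:ℝ) * a ≤ 1 := by
    rw [le_div_iff₀ hKpos] at ha; linarith
  have harg : (k:ℝ)*(((k:ℝ)+1)*a-1) ≤ 1 := by nlinarith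
  calc ellD k a ≤ Real.sqrt 1 := Real.sqrt_le_sqrt harg
    _ = 1 := Real.sqrt_one

lemma ellT_mem {k : ℕ} (hk : 1 ≤ k) {a : ℝ}
    (ha : a ∈ Set.Icc (1/((k:ℝ)+1)) (1/(k:ℝ))) :
    ellT k a ∈ Set.Icc (1/((k:ℝ)+1)) (1/(k:ℝ)) := by
  have hK : (1:ℝ) ≤ (k:ℝ) := by exact_mod_cast hk
  have hKpos : (0:ℝ) < (k:ℝ) := by linarith
  have hD0 := ellD_nonneg k a
  have hD1 := ellD_le_one hk ha.2
  unfold ellT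
  constructor
  · rw [div_le_div_iff₀ (by linarith) (by positivity)]
    nlinarith
  · rw [div_le_div_iff₀ (by positivity) hKpos]
    nlinarith

lemma ellT_first {k : ℕ} (hk : 1 ≤ k) {a : ℝ}
    (ha : 1/((k:ℝ)+1) ≤ a) :
    (k:ℝ) * (ellT k a) ^ 2 + (1 - (k:ℝ) * ellT k a) ^ 2 = a := by
  have hK : (1:ℝ) ≤ (k:ℝ) := by exact_mod_cast hk
  have hKpos : (0:ℝ) < (k:ℝ) := by linarith
  have hD2 := ellD_sq ha hk
  unfold ellT
  field_simp
  linear_combination ((k:ℝ)+1) * hD2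

lemma arc_of_ell {k : ℕ} (hk : 1 ≤ k) {a : ℝ}
    (ha : a ∈ Set.Icc (1/((k:ℝ)+1)) (1/(k:ℝ))) :
    lowerArcMap k (ellT k a) = (a, ell k a) := by
  unfold lowerArcMap
  rw [ellT_first hk ha.1]
  rfl

lemma ell_right {k : ℕ} (hk : 1 ≤ k) : ell k (1/(k:ℝ)) = 1/((k:ℝ))^2 := by
  have hK : (1:ℝ) ≤ (k:ℝ) := by exact_mod_cast hk
  have hKpos : (0:ℝ) < (k:ℝ) := by linarith
  have h := ell_arc hk (t := 1/(k:ℝ)) (by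
    rw [div_le_div_iff₀ (by linarith) hKpos]; linarith)
  simp only [lowerArcMap] at h
  have e1 : (k:ℝ) * (1/(k:ℝ)) ^ 2 + (1 - (k:ℝ) * (1/(k:ℝ))) ^ 2 = 1/(k:ℝ) := by
    field_simp; ring
  have e2 : (k:ℝ) * (1/(k:ℝ)) ^ 3 + (1 - (k:ℝ) * (1/(k:ℝ))) ^ 3 = 1/(k:ℝ)^2 := by
    field_simp; ring
  rw [e1, e2] at h
  exact h

lemma ell_left {k : ℕ} (hk : 1 ≤ k) : ell k (1/((k:ℝ)+1)) = 1/((k:ℝ)+1)^2 := by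
  have hK : (1:ℝ) ≤ (k:ℝ) := by exact_mod_cast hk
  have h := ell_arc hk (t := 1/((k:ℝ)+1)) le_rfl
  simp only [lowerArcMap] at h
  have e1 : (k:ℝ) * (1/((k:ℝ)+1)) ^ 2 + (1 - (k:ℝ) * (1/((k:ℝ)+1))) ^ 2 = 1/((k:ℝ)+1) := by
    field_simp
    ring
  have e2 : (k:ℝ) * (1/((k:ℝ)+1)) ^ 3 + (1 - (k:ℝ) * (1/((k:ℝ)+1))) ^ 3 = 1/((k:ℝ)+1)^2 := by
    field_simp
    ring
  rw [e1, e2] at h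
  exact h

lemma ell_nonneg {k : ℕ} (hk : 1 ≤ k) {a : ℝ}
    (ha : a ∈ Set.Icc (1/((k:ℝ)+1)) (1/(k:ℝ))) : 0 ≤ ell k a := by
  have hK : (1:ℝ) ≤ (k:ℝ) := by exact_mod_cast hk
  have hKpos : (0:ℝ) < (k:ℝ) := by linarith
  have hT := ellT_mem hk ha
  have hT0 : 0 ≤ ellT k a := le_trans (by positivity) hT.1
  have hT1 : (k:ℝ) * ellT k a ≤ 1 := by
    have := hT.2; rw [le_div_iff₀ hKpos] at this; linarith
  have : 0 ≤ 1 - (k:ℝ) * ellT k a := by linarith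
  unfold ell; positivity

lemma two_val_le {K t s : ℝ} (hK : 1 ≤ K) (ht : 0 ≤ t) (hs : 0 ≤ s) :
    K * t^3 + s^3 ≤ Real.sqrt (K * t^2 + s^2) ^ 3 := by
  set R := Real.sqrt (K * t^2 + s^2) with hR
  have hA : 0 ≤ K * t^2 + s^2 := by positivity
  have hR2 : R^2 = K * t^2 + s^2 := Real.sq_sqrt hA
  have hR0 : 0 ≤ R := Real.sqrt_nonneg _
  have htR : t ≤ R := by
    have h2 : t^2 ≤ R^2 := by rw [hR2]; nlinarith
    nlinarith
  have hsR : s ≤ R := by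
    have h2 : s^2 ≤ R^2 := by rw [hR2]; nlinarith
    nlinarith
  have h3 : K*t^3 + s^3 ≤ (K*t^2 + s^2) * R := by
    nlinarith [mul_le_mul_of_nonneg_left htR (show 0 ≤ K*t^2 by positivity),
      mul_le_mul_of_nonneg_left hsR (show 0 ≤ s^2 by positivity)]
  calc K*t^3 + s^3 ≤ (K*t^2+s^2) * R := h3
    _ = R^3 := by rw [← hR2]; ring

lemma ell_le_sqrt {k : ℕ} (hk : 1 ≤ k) {a : ℝ}
    (ha : a ∈ Set.Icc (1/((k:ℝ)+1)) (1/(k:ℝ))) :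
    ell k a ≤ Real.sqrt a ^ 3 := by
  have hK : (1:ℝ) ≤ (k:ℝ) := by exact_mod_cast hk
  have hKpos : (0:ℝ) < (k:ℝ) := by linarith
  have hT := ellT_mem hk ha
  have hT0 : 0 ≤ ellT k a := le_trans (by positivity) hT.1
  have hT1 : 0 ≤ 1 - (k:ℝ) * ellT k a := by
    have := hT.2; rw [le_div_iff₀ hKpos] at this; linarith
  have h := two_val_le (K := (k:ℝ)) (t := ellT k a) (s := 1 - (k:ℝ)*ellT k a)
    hK hT0 hT1
  rw [ellT_first hk ha.1] at h
  exact h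

set_option maxHeartbeats 1000000 in

/-- Three-variable strict exchange: a non-extremal positive triple admits a
strictly better triple with the same first two power sums. -/
lemma threeVar {u v w : ℝ} (hw0 : 0 < w) (hwv : w ≤ v) (huv : v < u) :
    ∃ p q r : ℝ, 0 ≤ p ∧ 0 ≤ q ∧ 0 ≤ r ∧ p + q + r = u + v + w ∧
      p^2 + q^2 + r^2 = u^2 + v^2 + w^2 ∧ p^3 + q^3 + r^3 < u^3 + v^3 + w^3 := by
  have hv0 : 0 < v := lt_of_lt_of_le hw0 hwv
  have hu0 : 0 < u := lt_trans hv0 huv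
  by_cases hcase : (u+v+w)^2 < 2*(u^2+v^2+w^2)
  · -- boundary competitor (x', y', 0)
    obtain ⟨E, hEdef⟩ : ∃ e, e = Real.sqrt (2*(u^2+v^2+w^2) - (u+v+w)^2) := ⟨_, rfl⟩
    have hEarg : 0 ≤ 2*(u^2+v^2+w^2) - (u+v+w)^2 := by nlinarith
    have hE2 : E^2 = 2*(u^2+v^2+w^2) - (u+v+w)^2 := by rw [hEdef]; exact Real.sq_sqrt hEarg
    have hE0 : 0 ≤ E := hEdef ▸ Real.sqrt_nonneg _
    have hEle : E ≤ u+v+w := by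
      nlinarith [hE2, mul_pos hu0 hv0, mul_pos hu0 hw0, mul_pos hv0 hw0]
    refine ⟨(u+v+w+E)/2, (u+v+w-E)/2, 0, by positivity, by linarith, le_rfl,
      by ring, by linear_combination (1/2 : ℝ) * hE2, ?_⟩
    have heq : ((u+v+w+E)/2)^3 + ((u+v+w-E)/2)^3 + (0:ℝ)^3
        = u^3+v^3+w^3 - 3*(u*v*w) := by
      linear_combination ((3:ℝ)/4*(u+v+w)) * hE2
    rw [heq]
    nlinarith [mul_pos (mul_pos hu0 hv0) hw0]
  · -- interior competitor (α, α, β)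
    push_neg at hcase
    obtain ⟨R, hRdef⟩ : ∃ r, r = Real.sqrt (6*(u^2+v^2+w^2) - 2*(u+v+w)^2) := ⟨_, rfl⟩
    have harg : 0 ≤ 6*(u^2+v^2+w^2) - 2*(u+v+w)^2 := by
      nlinarith [sq_nonneg (u-v), sq_nonneg (v-w), sq_nonneg (u-w)]
    have hR2 : R^2 = 6*(u^2+v^2+w^2) - 2*(u+v+w)^2 := by rw [hRdef]; exact Real.sq_sqrt harg
    have hR0 : 0 ≤ R := hRdef ▸ Real.sqrt_nonneg _
    have hRpos : 0 < R := by
      rw [hRdef]; apply Real.sqrt_pos.mpr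
      have huvp : 0 < (u-v)^2 := pow_pos (by linarith) 2
      nlinarith [sq_nonneg (v-w), sq_nonneg (u-w)]
    have hβ0 : 0 ≤ (u+v+w)/3 - R/3 := by nlinarith [hR2, hR0]
    have hα0 : 0 ≤ (u+v+w)/3 + R/6 := by positivity
    rcases le_or_gt ((u+v+w)/3 + R/6) v with hv_ge | hv_lt
    · -- impossible: two top values strictly apart but both ≥ α
      exfalso
      have hA : 0 < u - ((u+v+w)/3 + R/6) := by linarith
      have hB : 0 ≤ v - ((u+v+w)/3 + R/6) := by linarith
      have hkey : 2*(((u+v+w)/3 + R/6) - ((u+v+w)/3 - R/3)) *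
            ((u - ((u+v+w)/3 + R/6)) + (v - ((u+v+w)/3 + R/6)))
          + (u - ((u+v+w)/3 + R/6))^2 + (v - ((u+v+w)/3 + R/6))^2
          + ((u - ((u+v+w)/3 + R/6)) + (v - ((u+v+w)/3 + R/6)))^2 = 0 := by
        linear_combination (-(1:ℝ)/6) * hR2
      nlinarith [mul_pos hRpos (by linarith :
        (0:ℝ) < (u - ((u+v+w)/3 + R/6)) + (v - ((u+v+w)/3 + R/6))),
        sq_nonneg (u - ((u+v+w)/3 + R/6)), sq_nonneg (v - ((u+v+w)/3 + R/6)),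
        sq_nonneg ((u - ((u+v+w)/3 + R/6)) + (v - ((u+v+w)/3 + R/6)))]
    · rcases le_or_gt u ((u+v+w)/3 + R/6) with hu_le | hu_gt
      · -- impossible: all three below α
        exfalso
        have h1 : 0 ≤ ((u+v+w)/3 + R/6) - u := by linarith
        have h2 : 0 < ((u+v+w)/3 + R/6) - v := by linarith
        have h3 : 0 < ((u+v+w)/3 + R/6) - w := by linarith
        have hkey : (((u+v+w)/3 + R/6) - u) * (((u+v+w)/3 + R/6) - v)
            + (((u+v+w)/3 + R/6) - u) * (((u+v+w)/3 + R/6) - w)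
            + (((u+v+w)/3 + R/6) - v) * (((u+v+w)/3 + R/6) - w) = 0 := by
          linear_combination ((1:ℝ)/12) * hR2
        nlinarith [mul_pos h2 h3, mul_nonneg h1 h2.le, mul_nonneg h1 h3.le]
      · -- genuine case: competitor (α, α, β)
        have h2 : 0 < ((u+v+w)/3 + R/6) - v := by linarith
        have h3 : 0 < ((u+v+w)/3 + R/6) - w := by linarith
        have h1 : ((u+v+w)/3 + R/6) - u < 0 := by linarith
        have hprod : (((u+v+w)/3 + R/6) - u) * ((((u+v+w)/3 + R/6) - v)
            * (((u+v+w)/3 + R/6) - w)) < 0 :=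
          mul_neg_of_neg_of_pos h1 (mul_pos h2 h3)
        have hid : ((u+v+w)/3 + R/6)^2 * ((u+v+w)/3 - R/3) - u*v*w
            = (((u+v+w)/3 + R/6) - u) * ((((u+v+w)/3 + R/6) - v)
              * (((u+v+w)/3 + R/6) - w)) := by
          linear_combination (-R/72 - (u+v+w)/36) * hR2
        have hcubes : u^3+v^3+w^3 - (2*((u+v+w)/3 + R/6)^3 + ((u+v+w)/3 - R/3)^3)
            = 3*(u*v*w - ((u+v+w)/3 + R/6)^2 * ((u+v+w)/3 - R/3)) := by
          linear_combination (-(u+v+w)/4) * hR2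
        refine ⟨(u+v+w)/3 + R/6, (u+v+w)/3 + R/6, (u+v+w)/3 - R/3,
          hα0, hα0, hβ0, by ring, by linear_combination ((1:ℝ)/6) * hR2, ?_⟩
        linarith [hid, hcubes, hprod]


def Tset : Set (ℝ × ℝ) := ⋃ n : ℕ, ⋃ (_ : 3 ≤ n),
  (fun x : Fin n → ℝ => (∑ j, x j ^ 2, ∑ j, x j ^ 3)) '' stdSimplex ℝ (Fin n)

lemma config_sum (k N : ℕ) (u v d : ℝ) (φ : ℝ → ℝ) :
    ∑ i : Fin (k+1+N), φ (if (i:ℕ) < k then u else if (i:ℕ) = k then v else d)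
      = k * φ u + φ v + N * φ d := by
  rw [Fin.sum_univ_eq_sum_range (fun m => φ (if m < k then u else if m = k then v else d))]
  rw [Finset.range_eq_Ico,
    ← Finset.sum_Ico_consecutive _ (Nat.zero_le k) (by omega : k ≤ k+1+N),
    ← Finset.sum_Ico_consecutive _ (by omega : k ≤ k+1) (by omega : k+1 ≤ k+1+N)]
  have h1 : ∑ i ∈ Finset.Ico 0 k, φ (if i < k then u else if i = k then v else d)
      = k * φ u := by
    rw [Finset.sum_congr rfl (fun i hi => by
      rw [if_pos (Finset.mem_Ico.mp hi).2])]
    rw [Finset.sum_const, Nat.card_Ico, nsmul_eq_mul, Nat.sub_zero]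
  have h2 : ∑ i ∈ Finset.Ico k (k+1), φ (if i < k then u else if i = k then v else d)
      = φ v := by
    rw [Nat.Ico_succ_singleton, Finset.sum_singleton, if_neg (lt_irrefl k), if_pos rfl]
  have h3 : ∑ i ∈ Finset.Ico (k+1) (k+1+N), φ (if i < k then u else if i = k then v else d)
      = N * φ d := by
    rw [Finset.sum_congr rfl (fun i hi => by
      have hik : k + 1 ≤ i := (Finset.mem_Ico.mp hi).1
      rw [if_neg (by omega), if_neg (by omega)])]
    rw [Finset.sum_const, Nat.card_Ico, nsmul_eq_mul,
      (by omega : k+1+N-(k+1) = N)]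
  rw [h1, h2, h3]
  ring

lemma dust_mem {k : ℕ} (hk : 1 ≤ k) {u v : ℝ} (hu : 0 ≤ u) (hv : 0 ≤ v)
    (huv : (k:ℝ)*u + v ≤ 1) :
    ((k:ℝ)*u^2 + v^2, (k:ℝ)*u^3 + v^3) ∈ closure Tset := by
  obtain ⟨μ, hμdef⟩ : ∃ m, m = 1 - ((k:ℝ)*u + v) := ⟨_, rfl⟩
  have hμ0 : 0 ≤ μ := by rw [hμdef]; linarith
  refine mem_closure_of_tendsto (b := (Filter.atTop : Filter ℕ)) (f := fun N : ℕ =>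
    (((k:ℝ)*u^2 + v^2 + μ^2/N, (k:ℝ)*u^3 + v^3 + μ^3/N^2) : ℝ × ℝ)) ?_ ?_
  · -- tendsto
    have t1 : Filter.Tendsto (fun N : ℕ => μ^2/N) Filter.atTop (nhds 0) :=
      tendsto_const_div_atTop_nhds_zero_nat _
    have t2 : Filter.Tendsto (fun N : ℕ => μ^3/N^2) Filter.atTop (nhds 0) := by
      have : (fun N : ℕ => μ^3/N^2) = fun N : ℕ => (μ^3/N) * (1/N) := by
        funext N; ring
      rw [this]
      have := (tendsto_const_div_atTop_nhds_zero_nat (μ^3)).mul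
        (tendsto_const_div_atTop_nhds_zero_nat 1)
      simpa using this
    have c1 : Filter.Tendsto (fun N : ℕ => (k:ℝ)*u^2 + v^2 + μ^2/N)
        Filter.atTop (nhds ((k:ℝ)*u^2 + v^2)) := by
      simpa using tendsto_const_nhds.add t1
    have c2 : Filter.Tendsto (fun N : ℕ => (k:ℝ)*u^3 + v^3 + μ^3/N^2)
        Filter.atTop (nhds ((k:ℝ)*u^3 + v^3)) := by
      simpa using tendsto_const_nhds.add t2
    exact c1.prodMk_nhds c2
  · -- eventual membership
    filter_upwards [Filter.eventually_ge_atTop 1] with N hN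
    have hN0 : (0:ℝ) < (N:ℝ) := by exact_mod_cast hN
    set x : Fin (k+1+N) → ℝ :=
      fun i => if (i:ℕ) < k then u else if (i:ℕ) = k then v else μ/N with hxdef
    have hxmem : x ∈ stdSimplex ℝ (Fin (k+1+N)) := by
      constructor
      · intro i
        simp only [hxdef]
        split_ifs
        · exact hu
        · exact hv
        · positivity
      · have := config_sum k N u v (μ/N) id
        simp only [id] at this
        rw [hxdef]
        rw [this]
        field_simp
        rw [hμdef]
        ring
    have himg : (fun x : Fin (k+1+N) → ℝ => (∑ j, x j ^ 2, ∑ j, x j ^ 3)) x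
        = ((k:ℝ)*u^2 + v^2 + μ^2/N, (k:ℝ)*u^3 + v^3 + μ^3/N^2) := by
      have h2 := config_sum k N u v (μ/N) (fun t => t^2)
      have h3 := config_sum k N u v (μ/N) (fun t => t^3)
      simp only [hxdef]
      rw [Prod.ext_iff]
      constructor
      · simp only []
        rw [h2]
        rw [div_pow]
        field_simp
      · simp only []
        rw [h3]
        rw [div_pow]
        field_simp
    apply Set.mem_iUnion.mpr
    refine ⟨k+1+N, Set.mem_iUnion.mpr ⟨by omega, ⟨x, hxmem, himg⟩⟩⟩

set_option maxHeartbeats 800000 in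
lemma cover_low {k : ℕ} (hk : 1 ≤ k) {a b : ℝ}
    (ha : a ∈ Set.Icc (1/((k:ℝ)+1)) (1/(k:ℝ)))
    (hb1 : ell k a ≤ b) (hb2 : b ≤ (k:ℝ) * Real.sqrt (a/(k:ℝ))^3) :
    (a, b) ∈ closure Tset := by
  have hK : (1:ℝ) ≤ (k:ℝ) := by exact_mod_cast hk
  have hKpos : (0:ℝ) < (k:ℝ) := by linarith
  have hT := ellT_mem hk ha
  have hT0 : 0 ≤ ellT k a := le_trans (by positivity) hT.1
  have hD0 := ellD_nonneg k a
  have hD2 := ellD_sq ha.1 hk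
  have hfirst := ellT_first hk ha.1
  obtain ⟨S, hSdef⟩ : ∃ s, s = 1 - (k:ℝ) * ellT k a := ⟨_, rfl⟩
  have hS2 : S = (1 - ellD k a)/((k:ℝ)+1) := by
    rw [hSdef]; unfold ellT; field_simp; ring
  have hS0 : 0 ≤ S := by
    rw [hSdef]
    have h2 := hT.2
    rw [le_div_iff₀ hKpos] at h2
    linarith
  have hSle : S ≤ 1/((k:ℝ)+1) := by
    rw [hS2]; gcongr <;> linarith
  -- the sliding family
  have hcont : Continuous (fun v : ℝ => (k:ℝ) * Real.sqrt ((a - v^2)/(k:ℝ))^3 + v^3) := by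
    fun_prop
  have hfS : (k:ℝ) * Real.sqrt ((a - S^2)/(k:ℝ))^3 + S^3 = ell k a := by
    have harg : (a - S^2)/(k:ℝ) = (ellT k a)^2 := by
      rw [hSdef]; field_simp; nlinarith [hfirst]
    rw [harg, Real.sqrt_sq hT0]
    unfold ell; rw [hSdef]
  have hf0 : (k:ℝ) * Real.sqrt ((a - 0^2)/(k:ℝ))^3 + 0^3
      = (k:ℝ) * Real.sqrt (a/(k:ℝ))^3 := by norm_num
  have hmem : b ∈ Set.uIcc ((k:ℝ) * Real.sqrt ((a - S^2)/(k:ℝ))^3 + S^3)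
      ((k:ℝ) * Real.sqrt ((a - 0^2)/(k:ℝ))^3 + 0^3) := by
    rw [hfS, hf0]
    exact Set.mem_uIcc.mpr (Or.inl ⟨hb1, hb2⟩)
  obtain ⟨v, hv, hfv⟩ := intermediate_value_uIcc
    (f := fun v : ℝ => (k:ℝ) * Real.sqrt ((a - v^2)/(k:ℝ))^3 + v^3)
    (a := S) (b := 0) (hcont.continuousOn) (by rw [Set.uIcc_comm] at hmem ⊢; exact hmem)
  rw [Set.uIcc_of_ge hS0] at hv
  have hv0 : 0 ≤ v := hv.1
  have hvS : v ≤ S := hv.2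
  -- facts about the found configuration
  have hvS2 : v^2 ≤ S^2 := pow_le_pow_left₀ hv0 hvS 2
  have hva : v^2 ≤ a := by
    rw [hSdef] at hvS2
    nlinarith [mul_nonneg hKpos.le (sq_nonneg (ellT k a))]
  have hargnn : 0 ≤ (a - v^2)/(k:ℝ) := div_nonneg (by linarith) hKpos.le
  obtain ⟨u, hudef⟩ : ∃ u, u = Real.sqrt ((a - v^2)/(k:ℝ)) := ⟨_, rfl⟩
  have hu0 : 0 ≤ u := hudef ▸ Real.sqrt_nonneg _
  have hu2 : (k:ℝ) * u^2 = a - v^2 := by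
    rw [hudef, Real.sq_sqrt hargnn]; field_simp
  -- feasibility k*u + v ≤ 1
  have hqfact : ((k:ℝ)+1)*v^2 - 2*v + 1 - (k:ℝ)*a
      = (((k:ℝ)+1)) * ((S - v) * ((1 + ellD k a)/((k:ℝ)+1) - v)) := by
    rw [hS2]
    field_simp
    linear_combination hD2
  have hq0 : 0 ≤ ((k:ℝ)+1)*v^2 - 2*v + 1 - (k:ℝ)*a := by
    rw [hqfact]
    have h1 : 0 ≤ S - v := by linarith
    have h2 : 0 ≤ (1 + ellD k a)/((k:ℝ)+1) - v := by
      have : S ≤ (1 + ellD k a)/((k:ℝ)+1) := by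
        rw [hS2]; gcongr <;> linarith
      linarith
    have h3 : (0:ℝ) ≤ (k:ℝ)+1 := by linarith
    exact mul_nonneg h3 (mul_nonneg h1 h2)
  have hfeas : (k:ℝ)*u + v ≤ 1 := by
    have h1v : 0 ≤ 1 - v := by
      have : (1:ℝ)/((k:ℝ)+1) ≤ 1 := by
        rw [div_le_one (by linarith)]; linarith
      linarith
    have hsq : ((k:ℝ)*u)^2 ≤ (1-v)^2 := by
      have e1 : ((k:ℝ)*u)^2 = (k:ℝ)*(a - v^2) := by
        rw [mul_pow]; linear_combination (k:ℝ) * hu2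
      have e2 : (1-v)^2 - (k:ℝ)*(a-v^2) = ((k:ℝ)+1)*v^2 - 2*v + 1 - (k:ℝ)*a := by
        ring
      linarith [hq0, e2 ▸ hq0]
    by_contra hcon
    push_neg at hcon
    have h1 : 1 - v < (k:ℝ)*u := by linarith
    have h2 := mul_self_lt_mul_self h1v h1
    have h4 : (1-v)^2 < ((k:ℝ)*u)^2 := by rw [pow_two, pow_two]; exact h2
    linarith [hsq]
  -- conclude via dust
  have hmem2 := dust_mem hk hu0 hv0 hfeas
  have he1 : (k:ℝ)*u^2 + v^2 = a := by linarith [hu2]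
  have he2 : (k:ℝ)*u^3 + v^3 = b := by
    rw [hudef]
    exact hfv
  rw [he1, he2] at hmem2
  exact hmem2

lemma cover_high {k : ℕ} (hk2 : 2 ≤ k) {a b : ℝ} (ha0 : 0 < a) (hak : a ≤ 1/(k:ℝ))
    (hb1 : (k:ℝ) * Real.sqrt (a/(k:ℝ))^3 ≤ b) (hb2 : b ≤ Real.sqrt a ^3) :
    (a, b) ∈ closure Tset := by
  have hK : (2:ℝ) ≤ (k:ℝ) := by exact_mod_cast hk2
  have hKpos : (0:ℝ) < (k:ℝ) := by linarith
  obtain ⟨m, hmdef⟩ : ∃ m, m = k - 1 := ⟨_, rfl⟩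
  have hm1 : 1 ≤ m := by omega
  have hmK : (m:ℝ) = (k:ℝ) - 1 := by
    rw [hmdef]; push_cast [Nat.cast_sub (by omega : 1 ≤ k)]; ring
  have hm0 : (0:ℝ) < (m:ℝ) := by rw [hmK]; linarith
  obtain ⟨estar, hedef⟩ : ∃ e, e = Real.sqrt (a/(k:ℝ)) := ⟨_, rfl⟩
  have he0 : 0 ≤ estar := hedef ▸ Real.sqrt_nonneg _
  have he2 : estar^2 = a/(k:ℝ) := by rw [hedef]; exact Real.sq_sqrt (by positivity)
  have hcont : Continuous (fun e : ℝ => Real.sqrt (a - (m:ℝ)*e^2)^3 + (m:ℝ) * e^3) := by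
    fun_prop
  have hg0 : Real.sqrt (a - (m:ℝ)*(0:ℝ)^2)^3 + (m:ℝ)*(0:ℝ)^3 = Real.sqrt a ^3 := by
    norm_num
  have hgstar : Real.sqrt (a - (m:ℝ)*estar^2)^3 + (m:ℝ)*estar^3
      = (k:ℝ) * Real.sqrt (a/(k:ℝ))^3 := by
    have harg : a - (m:ℝ)*estar^2 = a/(k:ℝ) := by
      rw [he2, hmK]; field_simp; ring
    rw [harg, hedef, hmK]
    ring
  have hmem : b ∈ Set.uIcc (Real.sqrt (a - (m:ℝ)*estar^2)^3 + (m:ℝ)*estar^3)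
      (Real.sqrt (a - (m:ℝ)*(0:ℝ)^2)^3 + (m:ℝ)*(0:ℝ)^3) := by
    rw [hgstar, hg0]
    exact Set.mem_uIcc.mpr (Or.inl ⟨hb1, hb2⟩)
  obtain ⟨e, he, hge⟩ := intermediate_value_uIcc
    (f := fun e : ℝ => Real.sqrt (a - (m:ℝ)*e^2)^3 + (m:ℝ) * e^3)
    (a := estar) (b := 0) (hcont.continuousOn) hmem
  rw [Set.uIcc_of_ge he0] at he
  have hee0 : 0 ≤ e := he.1
  have heestar : e ≤ estar := he.2
  have hme2 : (m:ℝ)*e^2 ≤ a - a/(k:ℝ) := by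
    have h1 : e^2 ≤ a/(k:ℝ) := by
      rw [← he2]
      exact pow_le_pow_left₀ hee0 heestar 2
    have h2 : (m:ℝ) * e^2 ≤ (m:ℝ) * (a/(k:ℝ)) := by
      exact mul_le_mul_of_nonneg_left h1 hm0.le
    rw [hmK] at h2 ⊢
    have : ((k:ℝ) - 1) * (a/(k:ℝ)) = a - a/(k:ℝ) := by field_simp
    linarith [this ▸ h2]
  have hargnn : 0 ≤ a - (m:ℝ)*e^2 := by
    have : 0 ≤ a/(k:ℝ) := by positivity
    linarith
  obtain ⟨c, hcdef⟩ : ∃ c, c = Real.sqrt (a - (m:ℝ)*e^2) := ⟨_, rfl⟩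
  have hc0 : 0 ≤ c := hcdef ▸ Real.sqrt_nonneg _
  have hc2 : c^2 = a - (m:ℝ)*e^2 := by rw [hcdef]; exact Real.sq_sqrt hargnn
  have hfeas : (m:ℝ)*e + c ≤ 1 := by
    have hsq : ((m:ℝ)*e + c)^2 ≤ (k:ℝ)*a := by
      have key : ((m:ℝ)+1)*(c^2 + (m:ℝ)*e^2) - ((m:ℝ)*e + c)^2 = (m:ℝ)*(c - e)^2 := by
        ring
      have hka : ((m:ℝ)+1)*(c^2 + (m:ℝ)*e^2) = (k:ℝ)*a := by
        rw [hc2, hmK]; ring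
      nlinarith [mul_nonneg hm0.le (sq_nonneg (c - e))]
    have hka1 : (k:ℝ)*a ≤ 1 := by
      rw [le_div_iff₀ hKpos] at hak; linarith
    nlinarith [mul_nonneg (mul_nonneg hm0.le hee0) hc0, mul_nonneg hm0.le hee0, hc0]
  have hmem2 := dust_mem hm1 hee0 hc0 hfeas
  have he1 : (m:ℝ)*e^2 + c^2 = a := by rw [hc2]; ring
  have heq2 : (m:ℝ)*e^3 + c^3 = b := by
    rw [hcdef]
    rw [← hge]
    ring
  rw [he1, heq2] at hmem2
  exact hmem2

lemma cover {k : ℕ} (hk : 1 ≤ k) {a b : ℝ}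
    (ha : a ∈ Set.Icc (1/((k:ℝ)+1)) (1/(k:ℝ)))
    (hb1 : ell k a ≤ b) (hb2 : b ≤ Real.sqrt a ^3) :
    (a, b) ∈ closure Tset := by
  have hKpos : (0:ℝ) < (k:ℝ) := by
    have : (1:ℝ) ≤ (k:ℝ) := by exact_mod_cast hk
    linarith
  have ha0 : 0 < a := lt_of_lt_of_le (by positivity) ha.1
  rcases le_total b ((k:ℝ) * Real.sqrt (a/(k:ℝ))^3) with hb | hb
  · exact cover_low hk ha hb1 hb
  · rcases eq_or_lt_of_le hk with hk1 | hk2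
    · -- k = 1
      have hk1' : k = 1 := hk1.symm
      subst hk1'
      exact cover_low hk ha hb1 (by simpa using hb2)
    · exact cover_high hk2 ha0 ha.2 hb hb2

lemma sum_update1 {n : ℕ} (y : Fin n → ℝ) (φ : ℝ → ℝ) (i : Fin n) (p : ℝ) :
    ∑ m, φ (Function.update y i p m) = ∑ m, φ (y m) - φ (y i) + φ p := by
  have h1 : (fun m => φ (Function.update y i p m)) = Function.update (fun m => φ (y m)) i (φ p) := by
    funext m
    rcases eq_or_ne m i with h | h
    · subst h; simp
    · simp [Function.update_of_ne h]
  rw [h1, Finset.sum_update_of_mem (Finset.mem_univ i)]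
  have h2 : ∑ m ∈ Finset.univ \ {i}, φ (y m) = ∑ m, φ (y m) - φ (y i) := by
    rw [← Finset.erase_eq, eq_sub_iff_add_eq, Finset.sum_erase_add _ _ (Finset.mem_univ i)]
  rw [h2]; ring

lemma sum_update3 {n : ℕ} (y : Fin n → ℝ) (φ : ℝ → ℝ) {i j l : Fin n}
    (hij : i ≠ j) (hil : i ≠ l) (hjl : j ≠ l) (p q r : ℝ) :
    ∑ m, φ (Function.update (Function.update (Function.update y i p) j q) l r m)
      = ∑ m, φ (y m) - φ (y i) - φ (y j) - φ (y l) + φ p + φ q + φ r := by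
  rw [sum_update1, sum_update1, sum_update1]
  rw [Function.update_of_ne hjl.symm, Function.update_of_ne hil.symm,
    Function.update_of_ne hij.symm]
  ring

lemma sum_split {n : ℕ} (y : Fin n → ℝ) (M : ℝ) (φ : ℝ → ℝ) (hφ : φ 0 = 0) :
    ∑ i, φ (y i) = (Finset.univ.filter (fun i => y i = M)).card * φ M
      + ∑ i ∈ Finset.univ.filter (fun i => ¬ y i = M ∧ ¬ y i = 0), φ (y i) := by
  rw [← Finset.sum_filter_add_sum_filter_not Finset.univ (fun i => y i = M) (fun i => φ (y i))]
  congr 1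
  · rw [Finset.sum_congr rfl (fun i hi => by
      rw [(Finset.mem_filter.mp hi).2]), Finset.sum_const, nsmul_eq_mul]
  · rw [← Finset.sum_filter_add_sum_filter_not
      (Finset.univ.filter (fun i => ¬ y i = M)) (fun i => y i = 0) (fun i => φ (y i))]
    have hz : ∑ i ∈ (Finset.univ.filter (fun i => ¬ y i = M)).filter (fun i => y i = 0),
        φ (y i) = 0 := by
      apply Finset.sum_eq_zero
      intro i hi
      rw [(Finset.mem_filter.mp hi).2, hφ]
    rw [hz, Finset.filter_filter, zero_add]

set_option maxHeartbeats 1000000 in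
lemma lower_bound {n : ℕ} {x : Fin n → ℝ} (hx : x ∈ stdSimplex ℝ (Fin n))
    {k : ℕ} (hk : 1 ≤ k)
    (ha : (∑ j, x j ^ 2) ∈ Set.Icc (1/((k:ℝ)+1)) (1/(k:ℝ))) :
    ell k (∑ j, x j ^ 2) ≤ ∑ j, x j ^ 3 := by
  have hK : (1:ℝ) ≤ (k:ℝ) := by exact_mod_cast hk
  have hKpos : (0:ℝ) < (k:ℝ) := by linarith
  obtain ⟨a, hadef⟩ : ∃ a, a = ∑ j, x j ^ 2 := ⟨_, rfl⟩
  rw [← hadef] at ha ⊢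
  -- minimizer of the cube sum on the slice
  have hcont3 : Continuous (fun y : Fin n → ℝ => ∑ j, y j ^ 3) :=
    continuous_finset_sum _ (fun i _ => (continuous_apply i).pow 3)
  have hcont2 : Continuous (fun y : Fin n → ℝ => ∑ j, y j ^ 2) :=
    continuous_finset_sum _ (fun i _ => (continuous_apply i).pow 2)
  have hcompact : IsCompact (stdSimplex ℝ (Fin n) ∩ {y | ∑ j, y j ^ 2 = a}) :=
    (isCompact_stdSimplex _ _).inter_right (isClosed_eq hcont2 continuous_const)
  have hne : (stdSimplex ℝ (Fin n) ∩ {y | ∑ j, y j ^ 2 = a}).Nonempty :=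
    ⟨x, hx, hadef.symm⟩
  obtain ⟨y, ⟨hy1, hy2⟩, hminOn⟩ := hcompact.exists_isMinOn hne hcont3.continuousOn
  have hmin : ∀ z ∈ stdSimplex ℝ (Fin n), (∑ j, z j ^ 2) = a →
      (∑ j, y j ^ 3) ≤ ∑ j, z j ^ 3 := fun z hz hz2 => hminOn ⟨hz, hz2⟩
  have hy2' : (∑ j, y j ^ 2) = a := hy2
  suffices hnew : ell k a ≤ ∑ j, y j ^ 3 by
    exact le_trans hnew (hmin x hx hadef.symm)
  -- exchange principle
  have hexch : ∀ (i j l : Fin n), i ≠ j → i ≠ l → j ≠ l → ∀ p q r : ℝ,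
      0 ≤ p → 0 ≤ q → 0 ≤ r → p + q + r = y i + y j + y l →
      p^2 + q^2 + r^2 = (y i)^2 + (y j)^2 + (y l)^2 →
      (y i)^3 + (y j)^3 + (y l)^3 ≤ p^3 + q^3 + r^3 := by
    intro i j l hij hil hjl p q r hp hq hr h1 h2
    set z := Function.update (Function.update (Function.update y i p) j q) l r with hzdef
    have hzs : ∀ φ : ℝ → ℝ, ∑ m, φ (z m)
        = ∑ m, φ (y m) - φ (y i) - φ (y j) - φ (y l) + φ p + φ q + φ r :=
      fun φ => sum_update3 y φ hij hil hjl p q r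
    have hznn : ∀ m, 0 ≤ z m := by
      intro m
      rcases eq_or_ne m l with h | h
      · rw [hzdef]; subst h; simp [hr]
      rcases eq_or_ne m j with h' | h'
      · rw [hzdef]; subst h'; simp [Function.update_of_ne h, hq]
      rcases eq_or_ne m i with h'' | h''
      · rw [hzdef]; subst h''; simp [Function.update_of_ne h, Function.update_of_ne h', hp]
      · rw [hzdef]; simp [Function.update_of_ne h, Function.update_of_ne h',
          Function.update_of_ne h'', hy1.1 m]
    have hzmem : z ∈ stdSimplex ℝ (Fin n) := by
      constructor
      · exact hznn
      · have := hzs id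
        simp only [id] at this
        rw [this, hy1.2]
        linarith
    have hz2 : (∑ m, z m ^ 2) = a := by
      have := hzs (fun t => t^2)
      rw [this, hy2']
      linarith
    have h3 := hmin z hzmem hz2
    have := hzs (fun t => t^3)
    rw [this] at h3
    linarith
  -- the maximum coordinate
  have huniv : (Finset.univ : Finset (Fin n)).Nonempty := by
    by_contra h
    rw [Finset.not_nonempty_iff_eq_empty] at h
    have := hy1.2
    rw [h, Finset.sum_empty] at this
    norm_num at this
  obtain ⟨M, hMdef⟩ : ∃ M, M = Finset.univ.sup' huniv y := ⟨_, rfl⟩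
  obtain ⟨i0, -, hi0⟩ := Finset.exists_mem_eq_sup' huniv y
  rw [← hMdef] at hi0
  have hMle : ∀ i, y i ≤ M := fun i => hMdef ▸ Finset.le_sup' y (Finset.mem_univ i)
  have hM0 : 0 < M := by
    by_contra h
    push_neg at h
    have hzero : ∀ i ∈ Finset.univ, y i ≤ 0 := fun i _ => le_trans (hMle i) h
    have := Finset.sum_nonpos hzero
    rw [hy1.2] at this
    norm_num at this
  -- at most one middle coordinate
  have claim_mid : ∀ i j : Fin n, i ≠ j → ¬ y i = M ∧ ¬ y i = 0 →
      ¬ y j = M ∧ ¬ y j = 0 → False := by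
    intro i j hij hi hj
    have hi1 : 0 < y i := lt_of_le_of_ne (hy1.1 i) (Ne.symm hi.2)
    have hi2 : y i < M := lt_of_le_of_ne (hMle i) hi.1
    have hj1 : 0 < y j := lt_of_le_of_ne (hy1.1 j) (Ne.symm hj.2)
    have hj2 : y j < M := lt_of_le_of_ne (hMle j) hj.1
    have hi0i : i0 ≠ i := fun h => by rw [← h, hi0] at hi2; exact lt_irrefl _ hi2
    have hi0j : i0 ≠ j := fun h => by rw [← h, hi0] at hj2; exact lt_irrefl _ hj2
    rcases le_total (y i) (y j) with hle | hle
    · obtain ⟨p, q, r, hp, hq, hr, h1, h2, h3⟩ :=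
        threeVar (u := y i0) (v := y j) (w := y i) hi1 hle (hi0 ▸ hj2)
      have := hexch i0 j i hi0j hi0i (Ne.symm hij) p q r hp hq hr h1 h2
      linarith
    · obtain ⟨p, q, r, hp, hq, hr, h1, h2, h3⟩ :=
        threeVar (u := y i0) (v := y i) (w := y j) hj1 hle (hi0 ▸ hi2)
      have := hexch i0 i j hi0i hi0j hij p q r hp hq hr h1 h2
      linarith
  have hmid_card : (Finset.univ.filter (fun i => ¬ y i = M ∧ ¬ y i = 0)).card ≤ 1 := by
    rw [Finset.card_le_one]
    intro i hi j hj
    by_contra h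
    exact claim_mid i j h (Finset.mem_filter.mp hi).2 (Finset.mem_filter.mp hj).2
  -- split sums
  obtain ⟨k', hk'def⟩ : ∃ c, c = (Finset.univ.filter (fun i => y i = M)).card := ⟨_, rfl⟩
  have hk'1 : 1 ≤ k' := by
    rw [hk'def]
    rw [Nat.one_le_iff_ne_zero, ← Nat.pos_iff_ne_zero, Finset.card_pos]
    exact ⟨i0, Finset.mem_filter.mpr ⟨Finset.mem_univ i0, hi0.symm⟩⟩
  have hK'1 : (1:ℝ) ≤ (k':ℝ) := by exact_mod_cast hk'1
  have hsplit : ∀ φ : ℝ → ℝ, φ 0 = 0 → ∑ i, φ (y i) = k' * φ M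
      + ∑ i ∈ Finset.univ.filter (fun i => ¬ y i = M ∧ ¬ y i = 0), φ (y i) := by
    intro φ hφ
    rw [sum_split y M φ hφ, hk'def]
  rcases Nat.eq_zero_or_pos (Finset.univ.filter (fun i => ¬ y i = M ∧ ¬ y i = 0)).card
    with hcard | hcard
  · -- Case A : no middle coordinate
    rw [Finset.card_eq_zero] at hcard
    have hs1 : (1:ℝ) = k' * M := by
      have := hsplit id rfl
      simp only [id] at this
      rw [hcard, Finset.sum_empty] at this
      rw [← hy1.2, this, add_zero]
    have hs2 : a = k' * M^2 := by
      have := hsplit (fun t => t^2) (by norm_num)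
      rw [hcard, Finset.sum_empty, add_zero] at this
      rw [← hy2', this]
    have hs3 : (∑ j, y j ^3) = k' * M^3 := by
      have := hsplit (fun t => t^3) (by norm_num)
      rw [hcard, Finset.sum_empty, add_zero] at this
      rw [this]
    have hK'pos : (0:ℝ) < k' := by linarith
    have hMval : M = 1/(k':ℝ) := by
      field_simp
      linarith
    have haval : a = 1/(k':ℝ) := by
      rw [hs2, hMval]
      field_simp
    have hp3 : (∑ j, y j ^3) = 1/(k':ℝ)^2 := by
      rw [hs3, hMval]
      field_simp
    -- k ≤ k' ≤ k + 1
    have hb1 : (k:ℝ) ≤ (k':ℝ) := by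
      have := ha.2
      rw [haval] at this
      rw [div_le_div_iff₀ (by linarith) hKpos] at this
      linarith
    have hb2 : (k':ℝ) ≤ (k:ℝ) + 1 := by
      have := ha.1
      rw [haval] at this
      rw [div_le_div_iff₀ (by linarith) (by linarith)] at this
      linarith
    have : k ≤ k' := by exact_mod_cast hb1
    have h2 : k' ≤ k + 1 := by exact_mod_cast (by push_cast; linarith : (k':ℝ) ≤ ((k+1:ℕ):ℝ))
    rcases Nat.eq_or_lt_of_le this with heq | hlt
    · rw [haval, hp3, ← heq]
      rw [ell_right hk]
    · have heq : k' = k + 1 := by omega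
      rw [haval, hp3, heq]
      push_cast
      rw [ell_left hk]
  · -- Case B : exactly one middle coordinate
    have hcard1 : (Finset.univ.filter (fun i => ¬ y i = M ∧ ¬ y i = 0)).card = 1 := by omega
    rw [Finset.card_eq_one] at hcard1
    obtain ⟨i1, hi1⟩ := hcard1
    have hi1mem : i1 ∈ Finset.univ.filter (fun i => ¬ y i = M ∧ ¬ y i = 0) := by
      rw [hi1]; exact Finset.mem_singleton_self i1
    have hi1prop := (Finset.mem_filter.mp hi1mem).2
    obtain ⟨s, hsdef⟩ : ∃ s, s = y i1 := ⟨_, rfl⟩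
    have hs0 : 0 < s := hsdef ▸ lt_of_le_of_ne (hy1.1 i1) (Ne.symm hi1prop.2)
    have hsM : s < M := hsdef ▸ lt_of_le_of_ne (hMle i1) hi1prop.1
    have hs1 : (1:ℝ) = k' * M + s := by
      have := hsplit id rfl
      simp only [id] at this
      rw [hi1, Finset.sum_singleton, ← hsdef] at this
      rw [← hy1.2, this]
    have hs2 : a = k' * M^2 + s^2 := by
      have := hsplit (fun t => t^2) (by norm_num)
      rw [hi1, Finset.sum_singleton, ← hsdef] at this
      rw [← hy2', this]
    have hs3 : (∑ j, y j ^3) = k' * M^3 + s^3 := by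
      have := hsplit (fun t => t^3) (by norm_num)
      rw [hi1, Finset.sum_singleton, ← hsdef] at this
      rw [this]
    have hK'pos : (0:ℝ) < k' := by linarith
    -- M strictly between 1/(k'+1) and 1/k'
    have hMlow : 1/((k':ℝ)+1) < M := by
      rw [div_lt_iff₀ (by linarith)]
      nlinarith
    have hMhigh : M < 1/(k':ℝ) := by
      rw [lt_div_iff₀ hK'pos]
      nlinarith
    -- a strictly between 1/(k'+1) and 1/k'
    have ha' : a = (k':ℝ)*M^2 + (1 - (k':ℝ)*M)^2 := by
      rw [hs2]
      have : s = 1 - (k':ℝ)*M := by linarith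
      rw [this]
    have halow : 1/((k':ℝ)+1) < a := by
      rw [div_lt_iff₀ (by linarith)]
      have h1 : 0 < ((k':ℝ)+1)*M - 1 := by
        rw [div_lt_iff₀ (by linarith)] at hMlow
        linarith
      nlinarith [mul_pos (mul_pos hK'pos h1) h1, ha']
    have hahigh : a < 1/(k':ℝ) := by
      rw [lt_div_iff₀ hK'pos]
      have h1 : (k':ℝ)*M - 1 < 0 := by
        rw [lt_div_iff₀ hK'pos] at hMhigh
        linarith
      have h2 : 0 < (k':ℝ)*((k':ℝ)+1)*M - ((k':ℝ)-1) := by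
        rw [div_lt_iff₀ (by linarith)] at hMlow
        nlinarith
      nlinarith [mul_pos (neg_pos.mpr h1) h2, ha']
    -- k = k'
    have hkk' : k = k' := by
      have hc1 : (k:ℝ) < (k':ℝ) + 1 := by
        have := lt_of_lt_of_le halow (ha.2 : a ≤ 1/(k:ℝ))
        rw [div_lt_div_iff₀ (by linarith) hKpos] at this
        linarith
      have hc2 : (k':ℝ) < (k:ℝ) + 1 := by
        have := lt_of_le_of_lt (ha.1 : 1/((k:ℝ)+1) ≤ a) hahigh
        rw [div_lt_div_iff₀ (by linarith) hK'pos] at this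
        linarith
      have d1 : k < k' + 1 := by exact_mod_cast (by push_cast; linarith : (k:ℝ) < ((k'+1:ℕ):ℝ))
      have d2 : k' < k + 1 := by exact_mod_cast (by push_cast; linarith : (k':ℝ) < ((k+1:ℕ):ℝ))
      omega
    subst hkk'
    -- identify with the arc value
    have hsM1 : s = 1 - (k:ℝ)*M := by linarith
    have harc := ell_arc hk (t := M) (le_of_lt hMlow)
    simp only [lowerArcMap] at harc
    rw [← hsM1] at harc
    rw [← hs2] at harc
    rw [hs3, harc]

def Zset : Set (ℝ × ℝ) :=
  {p : ℝ × ℝ | 0 ≤ p.1 ∧ p.1 ≤ 1 ∧ 0 ≤ p.2 ∧ p.2 ≤ Real.sqrt p.1 ^ 3}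

def Kset : Set (ℝ × ℝ) :=
  {p : ℝ × ℝ | 0 ≤ p.1 ∧ p.1 ≤ 1 ∧ 0 ≤ p.2 ∧ p.2 ≤ Real.sqrt p.1 ^ 3 ∧
    ∀ k : ℕ, 1 ≤ k → p.1 ∈ Set.Icc (1/((k:ℝ)+1)) (1/(k:ℝ)) → ell k p.1 ≤ p.2}

lemma Kset_def : Kset =
    {p : ℝ × ℝ | 0 ≤ p.1 ∧ p.1 ≤ 1 ∧ 0 ≤ p.2 ∧ p.2 ≤ Real.sqrt p.1 ^ 3 ∧
      ∀ k : ℕ, 1 ≤ k → p.1 ∈ Set.Icc (1/((k:ℝ)+1)) (1/(k:ℝ)) → ell k p.1 ≤ p.2} := rfl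

lemma Zset_closed : IsClosed Zset := by
  apply IsClosed.inter (isClosed_le continuous_const continuous_fst)
  apply IsClosed.inter (isClosed_le continuous_fst continuous_const)
  apply IsClosed.inter (isClosed_le continuous_const continuous_snd)
  exact isClosed_le continuous_snd ((Real.continuous_sqrt.comp continuous_fst).pow 3)

lemma Tset_subset_Zset : Tset ⊆ Zset := by
  rintro P hP
  obtain ⟨n, hn, x, hx, rfl⟩ : ∃ n, 3 ≤ n ∧ ∃ x ∈ stdSimplex ℝ (Fin n),
      (∑ j, x j ^ 2, ∑ j, x j ^ 3) = P := by
    simp only [Tset, Set.mem_iUnion, Set.mem_image] at hP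
    obtain ⟨n, hn, x, hx, hxP⟩ := hP
    exact ⟨n, hn, x, hx, hxP⟩
  have hnn : ∀ i, 0 ≤ x i := hx.1
  have hsum : ∑ j, x j = 1 := hx.2
  have hle1 : ∀ i, x i ≤ 1 := by
    intro i
    rw [← hsum]
    exact Finset.single_le_sum (fun j _ => hnn j) (Finset.mem_univ i)
  have h2nn : (0:ℝ) ≤ ∑ j, x j ^ 2 := Finset.sum_nonneg (fun j _ => sq_nonneg _)
  have h3nn : (0:ℝ) ≤ ∑ j, x j ^ 3 := Finset.sum_nonneg (fun j _ => pow_nonneg (hnn j) 3)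
  have h2le1 : (∑ j, x j ^ 2) ≤ 1 := by
    rw [← hsum]
    apply Finset.sum_le_sum
    intro j _
    nlinarith [hnn j, hle1 j]
  refine ⟨h2nn, h2le1, h3nn, ?_⟩
  obtain ⟨A, hAdef⟩ : ∃ A, A = ∑ j, x j ^ 2 := ⟨_, rfl⟩
  simp only [← hAdef]
  have hA0 : 0 ≤ A := hAdef ▸ h2nn
  have hsA : Real.sqrt A ^ 2 = A := Real.sq_sqrt hA0
  have hsA0 : 0 ≤ Real.sqrt A := Real.sqrt_nonneg _
  have hxle : ∀ i, x i ≤ Real.sqrt A := by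
    intro i
    have h1 : x i ^ 2 ≤ A := by
      rw [hAdef]
      exact Finset.single_le_sum (f := fun j => x j ^ 2)
        (fun j _ => sq_nonneg _) (Finset.mem_univ i)
    nlinarith [hnn i, hsA0]
  have step : ∀ i, x i ^ 3 ≤ x i ^ 2 * Real.sqrt A := by
    intro i
    have := mul_le_mul_of_nonneg_left (hxle i) (sq_nonneg (x i))
    calc x i ^ 3 = x i ^ 2 * x i := by ring
      _ ≤ x i ^ 2 * Real.sqrt A := this
  calc (∑ j, x j ^ 3) ≤ ∑ j, x j ^ 2 * Real.sqrt A :=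
        Finset.sum_le_sum (fun j _ => step j)
    _ = A * Real.sqrt A := by rw [← Finset.sum_mul, ← hAdef]
    _ = Real.sqrt A ^ 3 := by
        rw [show Real.sqrt A ^ 3 = Real.sqrt A ^ 2 * Real.sqrt A from by ring, hsA]

lemma closure_subset_Zset : closure Tset ⊆ Zset :=
  closure_minimal Tset_subset_Zset Zset_closed

lemma Tset_lower {P : ℝ × ℝ} (hP : P ∈ Tset) {k : ℕ} (hk : 1 ≤ k)
    (ha : P.1 ∈ Set.Icc (1/((k:ℝ)+1)) (1/(k:ℝ))) : ell k P.1 ≤ P.2 := by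
  obtain ⟨n, hn, x, hx, rfl⟩ : ∃ n, 3 ≤ n ∧ ∃ x ∈ stdSimplex ℝ (Fin n),
      (∑ j, x j ^ 2, ∑ j, x j ^ 3) = P := by
    simp only [Tset, Set.mem_iUnion, Set.mem_image] at hP
    obtain ⟨n, hn, x, hx, hxP⟩ := hP
    exact ⟨n, hn, x, hx, hxP⟩
  exact lower_bound hx hk ha

set_option maxHeartbeats 800000 in
lemma closure_subset_Kset : closure Tset ⊆ Kset := by
  rintro P hP
  have hZ := closure_subset_Zset hP
  refine ⟨hZ.1, hZ.2.1, hZ.2.2.1, hZ.2.2.2, ?_⟩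
  intro k hk ha
  have hK : (1:ℝ) ≤ (k:ℝ) := by exact_mod_cast hk
  have hKpos : (0:ℝ) < (k:ℝ) := by linarith
  obtain ⟨f, hf, hlim⟩ := mem_closure_iff_seq_limit.mp hP
  have hlim1 : Filter.Tendsto (fun m => (f m).1) Filter.atTop (nhds P.1) :=
    (continuous_fst.tendsto P).comp hlim
  have hlim2 : Filter.Tendsto (fun m => (f m).2) Filter.atTop (nhds P.2) :=
    (continuous_snd.tendsto P).comp hlim
  have key : ∀ g : ℝ → ℝ, Continuous g →
      (∀ᶠ m in Filter.atTop, g ((f m).1) ≤ (f m).2) → g P.1 ≤ P.2 := by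
    intro g hg hev
    exact le_of_tendsto_of_tendsto ((hg.tendsto _).comp hlim1) hlim2 hev
  rcases eq_or_lt_of_le ha.1 with hseam1 | hlt1
  · -- P.1 = 1/(k+1) : seam between pieces k+1 and k
    have hcast1 : ((k+1:ℕ):ℝ) = (k:ℝ)+1 := by push_cast; ring
    have hv1 : ell (k+1) P.1 = 1/((k:ℝ)+1)^2 := by
      rw [← hseam1]
      have h := ell_right (k := k+1) (by omega)
      rw [hcast1] at h
      exact h
    have hv2 : ell k P.1 = 1/((k:ℝ)+1)^2 := by
      rw [← hseam1]; exact ell_left hk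
    have hg : ell k P.1 = min (ell k P.1) (ell (k+1) P.1) := by
      rw [hv1, hv2, min_self]
    rw [hg]
    apply key (fun c => min (ell k c) (ell (k+1) c))
      ((ell_continuous k).min (ell_continuous (k+1)))
    have hnb : ∀ᶠ m in Filter.atTop, (f m).1 ∈ Set.Ioo (1/((k:ℝ)+2)) (1/(k:ℝ)) := by
      apply hlim1
      apply Ioo_mem_nhds
      · rw [← hseam1, div_lt_div_iff₀ (by linarith) (by linarith)]; linarith
      · rw [← hseam1, div_lt_div_iff₀ (by linarith) hKpos]; linarith
    filter_upwards [hnb] with m hm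
    rcases le_total ((f m).1) (1/((k:ℝ)+1)) with hside | hside
    · refine le_trans (min_le_right _ _) (Tset_lower (hf m) (by omega) ?_)
      rw [hcast1]
      have e : (k:ℝ)+1+1 = (k:ℝ)+2 := by ring
      rw [e]
      exact ⟨by linarith [hm.1], hside⟩
    · exact le_trans (min_le_left _ _) (Tset_lower (hf m) hk ⟨hside, hm.2.le⟩)
  · rcases eq_or_lt_of_le ha.2 with hseam2 | hlt2
    · -- P.1 = 1/k : seam between pieces k and k-1
      rcases eq_or_lt_of_le hk with hk1 | hk2
      · -- k = 1 : P.1 = 1, right end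
        have hk1' : k = 1 := hk1.symm
        subst hk1'
        apply key (ell 1) (ell_continuous 1)
        have hnb : ∀ᶠ m in Filter.atTop, (f m).1 ∈ Set.Ioi (1/(2:ℝ)) := by
          apply hlim1
          apply Ioi_mem_nhds
          rw [hseam2]; norm_num
        filter_upwards [hnb] with m hm
        apply Tset_lower (hf m) le_rfl
        have hup := (Tset_subset_Zset (hf m)).2.1
        constructor
        · push_cast; linarith [Set.mem_Ioi.mp hm]
        · push_cast; linarith
      · -- k ≥ 2
        have hk2' : 2 ≤ k := hk2
        have hK2 : (2:ℝ) ≤ (k:ℝ) := by exact_mod_cast hk2'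
        have hcast2 : ((k-1:ℕ):ℝ) = (k:ℝ)-1 := by
          push_cast [Nat.cast_sub (by omega : 1 ≤ k)]; ring
        have hv1 : ell k P.1 = 1/(k:ℝ)^2 := by rw [hseam2]; exact ell_right hk
        have hv2 : ell (k-1) P.1 = 1/(k:ℝ)^2 := by
          rw [hseam2]
          have h := ell_left (k := k-1) (by omega)
          rw [hcast2] at h
          have : (k:ℝ)-1+1 = (k:ℝ) := by ring
          rw [this] at h
          exact h
        have hg : ell k P.1 = min (ell k P.1) (ell (k-1) P.1) := by
          rw [hv1, hv2, min_self]
        rw [hg]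
        apply key (fun c => min (ell k c) (ell (k-1) c))
          ((ell_continuous k).min (ell_continuous (k-1)))
        have hnb : ∀ᶠ m in Filter.atTop,
            (f m).1 ∈ Set.Ioo (1/((k:ℝ)+1)) (1/((k:ℝ)-1)) := by
          apply hlim1
          apply Ioo_mem_nhds
          · rw [hseam2, div_lt_div_iff₀ (by linarith) hKpos]; linarith
          · rw [hseam2, div_lt_div_iff₀ hKpos (by linarith)]; linarith
        filter_upwards [hnb] with m hm
        rcases le_total ((f m).1) (1/(k:ℝ)) with hside | hside
        · exact le_trans (min_le_left _ _)
            (Tset_lower (hf m) hk ⟨hm.1.le, hside⟩)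
        · refine le_trans (min_le_right _ _) (Tset_lower (hf m) (by omega) ?_)
          rw [hcast2]
          have : (k:ℝ)-1+1 = (k:ℝ) := by ring
          rw [this]
          exact ⟨hside, hm.2.le⟩
    · -- interior of the piece
      apply key (ell k) (ell_continuous k)
      have hnb : ∀ᶠ m in Filter.atTop,
          (f m).1 ∈ Set.Ioo (1/((k:ℝ)+1)) (1/(k:ℝ)) := by
        apply hlim1
        exact Ioo_mem_nhds hlt1 hlt2
      filter_upwards [hnb] with m hm
      exact Tset_lower (hf m) hk ⟨hm.1.le, hm.2.le⟩

lemma exists_k {a : ℝ} (h0 : 0 < a) (h1 : a ≤ 1) :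
    ∃ k : ℕ, 1 ≤ k ∧ 1/((k:ℝ)+1) < a ∧ a ≤ 1/(k:ℝ) := by
  obtain ⟨k, hkdef⟩ : ∃ k, k = ⌊1/a⌋₊ := ⟨_, rfl⟩
  have hinv1 : (1:ℝ) ≤ 1/a := by
    rw [le_div_iff₀ h0]; linarith
  have hk1 : 1 ≤ k := by
    rw [hkdef]
    exact Nat.le_floor (by exact_mod_cast hinv1)
  have hK1 : (1:ℝ) ≤ (k:ℝ) := by exact_mod_cast hk1
  refine ⟨k, hk1, ?_, ?_⟩
  · have := Nat.lt_floor_add_one (1/a)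
    rw [← hkdef] at this
    rw [div_lt_iff₀ (by linarith)]
    rw [div_lt_iff₀ h0] at this
    linarith
  · have : (k:ℝ) ≤ 1/a := by
      rw [hkdef]
      exact Nat.floor_le (by positivity)
    rw [le_div_iff₀ (by linarith)]
    rw [le_div_iff₀ h0] at this
    linarith

lemma Kset_subset_closure : Kset ⊆ closure Tset := by
  rintro ⟨a, b⟩ ⟨h1, h2, h3, h4, h5⟩
  simp only at h1 h2 h3 h4 h5
  rcases eq_or_lt_of_le h1 with hz | ha0
  · -- a = 0, so b = 0
    have hb0 : b = 0 := by
      rw [← hz] at h4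
      norm_num at h4
      linarith
    have := dust_mem (k := 1) le_rfl (u := 0) (v := 0) le_rfl le_rfl (by norm_num)
    norm_num at this
    rw [hb0, ← hz]
    exact this
  · obtain ⟨k, hk, hlow, hhigh⟩ := exists_k ha0 h2
    exact cover hk ⟨hlow.le, hhigh⟩ (h5 k hk ⟨hlow.le, hhigh⟩) h4

lemma closure_eq_Kset : closure Tset = Kset :=
  Set.Subset.antisymm closure_subset_Kset Kset_subset_closure

lemma curve_mem {c : ℝ} (hc : c ∈ Set.Icc (0:ℝ) 1) :
    (c, Real.sqrt c ^ 3) ∈ closure Tset := by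
  have h1 : Real.sqrt c ≤ 1 := Real.sqrt_le_one.mpr hc.2
  have h0 : 0 ≤ Real.sqrt c := Real.sqrt_nonneg _
  have := dust_mem (k := 1) le_rfl (u := Real.sqrt c) (v := 0) h0 le_rfl
    (by push_cast; linarith)
  have hsq : Real.sqrt c ^ 2 = c := Real.sq_sqrt hc.1
  norm_num at this
  rw [hsq] at this
  exact this

lemma arc_mem {k : ℕ} (hk : 1 ≤ k) {t : ℝ}
    (ht : t ∈ Set.Icc (1/((k:ℝ)+1)) (1/(k:ℝ))) :
    lowerArcMap k t ∈ closure Tset := by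
  have hK : (1:ℝ) ≤ (k:ℝ) := by exact_mod_cast hk
  have hKpos : (0:ℝ) < (k:ℝ) := by linarith
  have ht0 : 0 ≤ t := le_trans (by positivity) ht.1
  have hs0 : 0 ≤ 1 - (k:ℝ)*t := by
    have := ht.2
    rw [le_div_iff₀ hKpos] at this
    linarith
  have := dust_mem hk ht0 hs0 (by linarith)
  exact this

lemma arc_fst_mem {k : ℕ} (hk : 1 ≤ k) {t : ℝ}
    (ht : t ∈ Set.Icc (1/((k:ℝ)+1)) (1/(k:ℝ))) :
    (lowerArcMap k t).1 ∈ Set.Icc (1/((k:ℝ)+1)) (1/(k:ℝ)) := by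
  have hK : (1:ℝ) ≤ (k:ℝ) := by exact_mod_cast hk
  have hKpos : (0:ℝ) < (k:ℝ) := by linarith
  have ht1 : 1 ≤ ((k:ℝ)+1)*t := by
    have := ht.1
    rw [div_le_iff₀ (by linarith)] at this
    linarith
  have ht2 : (k:ℝ)*t ≤ 1 := by
    have := ht.2
    rw [le_div_iff₀ hKpos] at this
    linarith
  simp only [lowerArcMap]
  constructor
  · rw [div_le_iff₀ (by linarith)]
    nlinarith [sq_nonneg (((k:ℝ)+1)*t - 1)]
  · rw [le_div_iff₀ hKpos]
    have hf1 : 0 ≤ 1 - (k:ℝ)*t := by linarith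
    have hf2 : 0 ≤ (k:ℝ)*((k:ℝ)+1)*t - (k:ℝ) + 1 := by nlinarith
    nlinarith [mul_nonneg hf1 hf2]

lemma dist_snd_lt {a b b' ε : ℝ} (h : |b' - b| < ε) :
    dist ((a, b') : ℝ × ℝ) ((a, b) : ℝ × ℝ) < ε := by
  rw [Prod.dist_eq]
  simp only [dist_self, Real.dist_eq]
  have hε : 0 < ε := lt_of_le_of_lt (abs_nonneg _) h
  exact max_lt hε h

lemma not_interior_upper {c : ℝ} (hc : c ∈ Set.Icc (0:ℝ) 1) :
    (c, Real.sqrt c ^ 3) ∉ interior (closure Tset) := by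
  intro h
  rw [mem_interior_iff_mem_nhds, Metric.mem_nhds_iff] at h
  obtain ⟨ε, hε, hball⟩ := h
  have hQ : ((c, Real.sqrt c ^ 3 + ε/2) : ℝ × ℝ) ∈ closure Tset := by
    apply hball
    rw [Metric.mem_ball]
    apply dist_snd_lt
    rw [show Real.sqrt c ^3 + ε/2 - Real.sqrt c^3 = ε/2 by ring,
      abs_of_pos (by linarith)]
    linarith
  rw [closure_eq_Kset, Kset_def] at hQ
  have := hQ.2.2.2.1
  simp only at this
  linarith

lemma not_interior_arc {k : ℕ} (hk : 1 ≤ k) {t : ℝ}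
    (ht : t ∈ Set.Icc (1/((k:ℝ)+1)) (1/(k:ℝ))) :
    lowerArcMap k t ∉ interior (closure Tset) := by
  intro h
  have hfst := arc_fst_mem hk ht
  have hsnd : (lowerArcMap k t).2 = ell k ((lowerArcMap k t).1) :=
    (ell_arc hk ht.1).symm
  rw [mem_interior_iff_mem_nhds, Metric.mem_nhds_iff] at h
  obtain ⟨ε, hε, hball⟩ := h
  have hQ : (((lowerArcMap k t).1, (lowerArcMap k t).2 - ε/2) : ℝ × ℝ)
      ∈ closure Tset := by
    apply hball
    rw [Metric.mem_ball]
    have : (lowerArcMap k t) = ((lowerArcMap k t).1, (lowerArcMap k t).2) := rfl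
    rw [this]
    apply dist_snd_lt
    rw [show (lowerArcMap k t).2 - ε/2 - (lowerArcMap k t).2 = -(ε/2) by ring,
      abs_neg, abs_of_pos (by linarith)]
    linarith
  rw [closure_eq_Kset, Kset_def] at hQ
  have h5 := hQ.2.2.2.2 k hk hfst
  simp only at h5
  rw [hsnd] at h5
  linarith

lemma nat_eq_of_between {k k' : ℕ} (h1 : (k:ℝ) < (k':ℝ) + 1)
    (h2 : (k':ℝ) < (k:ℝ) + 1) : k = k' := by
  have d1 : k < k' + 1 := by exact_mod_cast (by push_cast; linarith : (k:ℝ) < ((k'+1:ℕ):ℝ))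
  have d2 : k' < k + 1 := by exact_mod_cast (by push_cast; linarith : (k':ℝ) < ((k+1:ℕ):ℝ))
  omega

set_option maxHeartbeats 800000 in
lemma interior_step {a b : ℝ} (hmem : ((a,b) : ℝ × ℝ) ∈ closure Tset)
    (hnΓ : ∀ c ∈ Set.Icc (0:ℝ) 1, ((a,b) : ℝ × ℝ) ≠ (c, Real.sqrt c ^ 3))
    (hnA : ∀ k : ℕ, 1 ≤ k → ∀ t ∈ Set.Icc (1/((k:ℝ)+1)) (1/(k:ℝ)),
      ((a,b) : ℝ × ℝ) ≠ lowerArcMap k t) :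
    ((a,b) : ℝ × ℝ) ∈ interior (closure Tset) := by
  have hK0 := hmem
  rw [closure_eq_Kset, Kset_def] at hK0
  obtain ⟨h1, h2, h3, h4, h5⟩ := hK0
  simp only at h1 h2 h3 h4 h5
  -- a is strictly between 0 and 1
  have ha0 : 0 < a := by
    rcases eq_or_lt_of_le h1 with hz | hz
    · exfalso
      apply hnΓ 0 (by norm_num)
      have hb0 : b = 0 := by
        rw [← hz] at h4
        norm_num at h4
        linarith
      rw [← hz, hb0]
      norm_num
    · exact hz
  obtain ⟨k, hk, hlow, hhigh⟩ := exists_k ha0 h2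
  have hK : (1:ℝ) ≤ (k:ℝ) := by exact_mod_cast hk
  have hKpos : (0:ℝ) < (k:ℝ) := by linarith
  have hIcc : a ∈ Set.Icc (1/((k:ℝ)+1)) (1/(k:ℝ)) := ⟨hlow.le, hhigh⟩
  -- strict upper bound
  have hup : b < Real.sqrt a ^ 3 := by
    rcases eq_or_lt_of_le h4 with he | he
    · exact absurd he (by
        intro hcontra
        exact hnΓ a ⟨h1, h2⟩ (by rw [hcontra]))
    · exact he
  -- strict lower bound at piece k
  have hlo : ell k a < b := by
    rcases eq_or_lt_of_le (h5 k hk hIcc) with he | he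
    · exfalso
      apply hnA k hk (ellT k a) (ellT_mem hk hIcc)
      rw [arc_of_ell hk hIcc, he]
    · exact he
  have ha1 : a < 1 := by
    rcases eq_or_lt_of_le h2 with hone | hone
    · exfalso
      have hk1 : k = 1 := by
        have := hhigh
        rw [hone] at this
        have h1k : (k:ℝ) ≤ 1 := by
          rw [le_div_iff₀ hKpos] at this
          nlinarith
        have : k ≤ 1 := by exact_mod_cast h1k
        omega
      subst hk1
      have he1 : ell 1 a = 1 := by
        rw [hone]
        have := ell_right (k := 1) le_rfl
        norm_num at this
        exact this
      have : Real.sqrt a ^ 3 = 1 := by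
        rw [hone]
        norm_num
      rw [he1] at hlo
      rw [this] at hup
      linarith
    · exact hone
  -- build the open neighbourhood
  rcases eq_or_lt_of_le hhigh with hseam | hstrict
  · -- a = 1/k, seam : k ≥ 2 here
    have hk2 : 2 ≤ k := by
      by_contra hcon
      have : k = 1 := by omega
      subst this
      norm_num at hseam
      rw [← hseam] at ha1
      linarith
    have hK2 : (2:ℝ) ≤ (k:ℝ) := by exact_mod_cast hk2
    have hcast2 : ((k-1:ℕ):ℝ) = (k:ℝ)-1 := by
      push_cast [Nat.cast_sub (by omega : 1 ≤ k)]; ring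
    have hlo' : ell (k-1) a < b := by
      have e1 : ell (k-1) a = 1/(k:ℝ)^2 := by
        rw [hseam]
        have h := ell_left (k := k-1) (by omega)
        rw [hcast2] at h
        rw [show (k:ℝ)-1+1 = (k:ℝ) by ring] at h
        exact h
      have e2 : ell k a = 1/(k:ℝ)^2 := by
        rw [hseam]; exact ell_right hk
      rw [e1, ← e2]
      exact hlo
    obtain ⟨O, hOdef⟩ : ∃ O : Set (ℝ × ℝ), O = {q : ℝ × ℝ |
        1/((k:ℝ)+1) < q.1 ∧ q.1 < 1/((k:ℝ)-1) ∧ ell k q.1 < q.2 ∧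
        ell (k-1) q.1 < q.2 ∧ q.2 < Real.sqrt q.1 ^ 3} := ⟨_, rfl⟩
    have hOopen : IsOpen O := by
      rw [hOdef]
      apply IsOpen.inter (isOpen_lt continuous_const continuous_fst)
      apply IsOpen.inter (isOpen_lt continuous_fst continuous_const)
      apply IsOpen.inter (isOpen_lt ((ell_continuous k).comp continuous_fst) continuous_snd)
      apply IsOpen.inter (isOpen_lt ((ell_continuous (k-1)).comp continuous_fst) continuous_snd)
      exact isOpen_lt continuous_snd ((Real.continuous_sqrt.comp continuous_fst).pow 3)
    have hPO : ((a,b) : ℝ × ℝ) ∈ O := by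
      rw [hOdef]
      refine ⟨hlow, ?_, hlo, hlo', hup⟩
      rw [hseam, div_lt_div_iff₀ hKpos (by linarith)]
      linarith
    have hOK : O ⊆ closure Tset := by
      intro q hq
      rw [hOdef] at hq
      obtain ⟨g1, g2, g3, g4, g5⟩ := hq
      rw [closure_eq_Kset, Kset_def]
      have hq1pos : 0 < q.1 := lt_trans (by positivity) g1
      have hq11 : q.1 ≤ 1 := by
        have : 1/((k:ℝ)-1) ≤ 1 := by
          rw [div_le_one (by linarith)]; linarith
        linarith
      have hq2nn : 0 ≤ q.2 := by
        rcases le_total q.1 (1/(k:ℝ)) with hs | hs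
        · have := ell_nonneg hk (a := q.1) ⟨g1.le, hs⟩
          linarith
        · have := ell_nonneg (k := k-1) (by omega) (a := q.1) (by
            rw [hcast2, show (k:ℝ)-1+1 = (k:ℝ) by ring]
            exact ⟨hs, g2.le⟩)
          linarith
      refine ⟨hq1pos.le, hq11, hq2nn, g5.le, ?_⟩
      intro k'' hk'' hIcc''
      have hK'' : (1:ℝ) ≤ (k'':ℝ) := by exact_mod_cast hk''
      have c1 : (k:ℝ) - 1 < (k'':ℝ) + 1 := by
        have := lt_of_le_of_lt hIcc''.1 g2
        rw [div_lt_div_iff₀ (by linarith) (by linarith)] at this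
        linarith
      have c2 : (k'':ℝ) < (k:ℝ) + 1 := by
        have := lt_of_lt_of_le g1 hIcc''.2
        rw [div_lt_div_iff₀ (by linarith) (by linarith)] at this
        linarith
      have hcase : k'' = k ∨ k'' = k - 1 := by
        have d1 : k - 1 < k'' + 1 := by
          exact_mod_cast (by push_cast [hcast2]; linarith : ((k-1:ℕ):ℝ) < ((k''+1:ℕ):ℝ))
        have d2 : k'' < k + 1 := by
          exact_mod_cast (by push_cast; linarith : (k'':ℝ) < ((k+1:ℕ):ℝ))
        omega
      rcases hcase with rfl | rfl
      · exact g3.le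
      · exact g4.le
    exact mem_interior.mpr ⟨O, hOK, hOopen, hPO⟩
  · -- interior of the piece
    obtain ⟨O, hOdef⟩ : ∃ O : Set (ℝ × ℝ), O = {q : ℝ × ℝ |
        1/((k:ℝ)+1) < q.1 ∧ q.1 < 1/(k:ℝ) ∧ ell k q.1 < q.2 ∧
        q.2 < Real.sqrt q.1 ^ 3} := ⟨_, rfl⟩
    have hOopen : IsOpen O := by
      rw [hOdef]
      apply IsOpen.inter (isOpen_lt continuous_const continuous_fst)
      apply IsOpen.inter (isOpen_lt continuous_fst continuous_const)
      apply IsOpen.inter (isOpen_lt ((ell_continuous k).comp continuous_fst) continuous_snd)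
      exact isOpen_lt continuous_snd ((Real.continuous_sqrt.comp continuous_fst).pow 3)
    have hPO : ((a,b) : ℝ × ℝ) ∈ O := by
      rw [hOdef]
      exact ⟨hlow, hstrict, hlo, hup⟩
    have hOK : O ⊆ closure Tset := by
      intro q hq
      rw [hOdef] at hq
      obtain ⟨g1, g2, g3, g4⟩ := hq
      rw [closure_eq_Kset, Kset_def]
      have hq1pos : 0 < q.1 := lt_trans (by positivity) g1
      have hq11 : q.1 ≤ 1 := by
        have : 1/(k:ℝ) ≤ 1 := by rw [div_le_one hKpos]; linarith
        linarith
      have hq2nn : 0 ≤ q.2 := by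
        have := ell_nonneg hk (a := q.1) ⟨g1.le, g2.le⟩
        linarith
      refine ⟨hq1pos.le, hq11, hq2nn, g4.le, ?_⟩
      intro k'' hk'' hIcc''
      have hK'' : (1:ℝ) ≤ (k'':ℝ) := by exact_mod_cast hk''
      have c1 : (k:ℝ) < (k'':ℝ) + 1 := by
        have := lt_of_le_of_lt hIcc''.1 g2
        rw [div_lt_div_iff₀ (by linarith) hKpos] at this
        linarith
      have c2 : (k'':ℝ) < (k:ℝ) + 1 := by
        have := lt_of_lt_of_le g1 hIcc''.2
        rw [div_lt_div_iff₀ (by linarith) (by linarith)] at this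
        linarith
      have hke := nat_eq_of_between c1 c2
      subst hke
      exact g3.le
    exact mem_interior.mpr ⟨O, hOK, hOopen, hPO⟩


lemma rpow32 {t : ℝ} (ht : 0 ≤ t) : t ^ ((3:ℝ)/2) = Real.sqrt t ^ 3 := by
  have h1 : ((3:ℝ)/2) = (1/2) * ((3:ℕ):ℝ) := by norm_num
  rw [h1, Real.rpow_mul ht, Real.rpow_natCast, Real.sqrt_eq_rpow]

/-- **Corollary 2.18.** The boundary of the limit Vandermonde cell
`Π₃ = closure (⋃_{n ≥ 3} Π_{n,3})` is `{(t, t^{3/2}) : 0 ≤ t ≤ 1} ∪ ⋃_{k ≥ 1} L_k`. -/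
theorem boundary_of_Pi_3 :
    frontier (closure (⋃ n : ℕ, ⋃ (_ : 3 ≤ n),
        (fun x : Fin n → ℝ => (∑ j, x j ^ 2, ∑ j, x j ^ 3)) '' stdSimplex ℝ (Fin n))) =
      (fun t : ℝ => (t, t ^ ((3 : ℝ) / 2))) '' Set.Icc (0 : ℝ) 1 ∪
        ⋃ k : ℕ, ⋃ (_ : 1 ≤ k), lowerArcMap k '' Set.Icc (1 / ((k : ℝ) + 1)) (1 / k) := by
  have hTid : (⋃ n : ℕ, ⋃ (_ : 3 ≤ n),
      (fun x : Fin n → ℝ => (∑ j, x j ^ 2, ∑ j, x j ^ 3)) '' stdSimplex ℝ (Fin n)) = Tset := rfl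
  rw [hTid]
  have hΓ : (fun t : ℝ => ((t, t ^ ((3 : ℝ) / 2)) : ℝ × ℝ)) '' Set.Icc (0 : ℝ) 1
      = (fun t : ℝ => ((t, Real.sqrt t ^ 3) : ℝ × ℝ)) '' Set.Icc (0 : ℝ) 1 := by
    apply Set.image_congr
    intro t ht
    rw [rpow32 ht.1]
  rw [hΓ, isClosed_closure.frontier_eq]
  ext P
  constructor
  · rintro ⟨hcl, hnint⟩
    by_contra hnot
    rw [Set.mem_union] at hnot
    push_neg at hnot
    obtain ⟨hnΓ, hnA⟩ := hnot
    obtain ⟨a, b⟩ := P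
    apply hnint
    apply interior_step hcl
    · intro c hc hne
      exact hnΓ (hne ▸ Set.mem_image_of_mem _ hc)
    · intro k hk t ht hne
      apply hnA
      rw [Set.mem_iUnion]
      exact ⟨k, Set.mem_iUnion.mpr ⟨hk, hne ▸ Set.mem_image_of_mem _ ht⟩⟩
  · rintro (hΓm | hAm)
    · obtain ⟨c, hc, rfl⟩ := hΓm
      exact ⟨curve_mem hc, not_interior_upper hc⟩
    · rw [Set.mem_iUnion] at hAm
      obtain ⟨k, hAm⟩ := hAm
      rw [Set.mem_iUnion] at hAm
      obtain ⟨hk, t, ht, rfl⟩ := hAm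
      exact ⟨arc_mem hk ht, not_interior_arc hk ht⟩
end
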